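/- arXiv:2509.14513 — 11 statements merged into one kernel-verified Lean document; each statement's English description precedes it below -/
import Mathlib

section
/- Let n ≥ 1 and let (a,b) ⊆ ℝ be a nonempty open interval (with a = -∞ and/or b = +∞ allowed). Let a_0, …, a_n : (a,b) → ℝ be continuous functions such that for all 0 ≤ j < k ≤ n the product a_j·a_k is (k−j)-times continuously differentiable on (a,b). For 0 ≤ m ≤ n−1 define c_{n,m}(x) = −a_m(x)² − Σ_{j=0}^{m} Σ_{k=max{j+1, 2m−j}}^{n} (−1)^{k−j} t_{k−j, m−j} · (a_j a_k)^{(k+j−2m)}(x). Then for every complex-valued f ∈ C_0^∞((a,b)) one has ∫_a^b |a_n(x) f^{(n)}(x)|² dx ≥ Σ_{m=0}^{n−1} ∫_a^b c_{n,m}(x) |f^{(m)}(x)|² dx. -/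
open MeasureTheory Set

def tcoef (n k : ℕ) : ℤ :=
  if k = 0 then (if n = 0 then 2 else 1)
  else if k ≤ n / 2 then
    (-1 : ℤ) ^ k * ((Nat.choose (n - k) k : ℤ) + (Nat.choose (n - k - 1) (k - 1) : ℤ))
  else 0

lemma tcoef_eq_zero {p i : ℕ} (h : p < 2 * i) : tcoef p i = 0 := by
  unfold tcoef
  have hi : i ≠ 0 := by omega
  have : ¬ i ≤ p / 2 := by omega
  simp [hi, this]

lemma tcoef_zero_right (p : ℕ) (hp : p ≠ 0) : tcoef p 0 = 1 := by simp [tcoef, hp]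

lemma tcoef_diag (i : ℕ) (hi : 1 ≤ i) : tcoef (2 * i) i = (-1) ^ i * 2 := by
  unfold tcoef
  have h1 : ¬ i = 0 := by omega
  have h2 : i ≤ 2 * i / 2 := by omega
  have e1 : 2 * i - i = i := by omega
  have e2 : 2 * i - i - 1 = i - 1 := by omega
  simp only [if_neg h1, if_pos h2, e1, e2, Nat.choose_self]
  push_cast; ring

lemma tcoef_formula (q i : ℕ) :
    tcoef (2 * i + 2 + q) (i + 1)
      = (-1) ^ (i + 1) * ((Nat.choose (i + q + 1) (i + 1) : ℤ) + (Nat.choose (i + q) i : ℤ)) := by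
  unfold tcoef
  have h1 : ¬ i + 1 = 0 := by omega
  have h2 : i + 1 ≤ (2 * i + 2 + q) / 2 := by omega
  have e1 : 2 * i + 2 + q - (i + 1) = i + q + 1 := by omega
  have e2 : 2 * i + 2 + q - (i + 1) - 1 = i + q := by omega
  have e3 : i + 1 - 1 = i := rfl
  have e4 : i + q + 1 - 1 = i + q := by omega
  simp only [if_neg h1, if_pos h2, e1, e2, e3, e4]

lemma tcoef_rec (p i : ℕ) (hp : 1 ≤ p) :
    tcoef (p + 1) (i + 1) = tcoef p (i + 1) - tcoef (p - 1) i := by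
  rcases lt_or_ge p (2 * i + 1) with h | h
  · rw [tcoef_eq_zero (by omega), tcoef_eq_zero (by omega)]
    rcases Nat.eq_zero_or_pos i with rfl | hi
    · have hp1 : p = 0 := by omega
      omega
    · rw [tcoef_eq_zero (by omega)]; ring
  rcases eq_or_lt_of_le h with h' | h'
  · -- p = 2i+1
    rcases Nat.eq_zero_or_pos i with rfl | hi
    · have : p = 1 := by omega
      subst this; decide
    · rw [show p + 1 = 2 * (i + 1) by omega, tcoef_diag (i + 1) (by omega),
        tcoef_eq_zero (by omega), show p - 1 = 2 * i by omega, tcoef_diag i hi]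
      rw [pow_succ]; ring
  · -- 2i + 2 ≤ p
    obtain ⟨q, rfl⟩ : ∃ q, p = 2 * i + 2 + q := ⟨p - (2 * i + 2), by omega⟩
    rcases Nat.eq_zero_or_pos i with rfl | hi
    · rw [show 2 * 0 + 2 + q + 1 = 2 * 0 + 2 + (q + 1) by ring, tcoef_formula,
        tcoef_formula, tcoef_zero_right _ (by omega)]
      push_cast [Nat.choose_one_right, Nat.choose_zero_right]; ring
    · obtain ⟨i', rfl⟩ : ∃ i', i = i' + 1 := ⟨i - 1, by omega⟩
      rw [show 2 * (i' + 1) + 2 + q + 1 = 2 * (i' + 1) + 2 + (q + 1) by ring, tcoef_formula,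
        tcoef_formula,
        show 2 * (i' + 1) + 2 + q - 1 = 2 * i' + 2 + (q + 1) by omega, tcoef_formula]
      rw [show i' + 1 + (q + 1) + 1 = (i' + 1 + q + 1) + 1 by ring,
        Nat.choose_succ_succ' (i' + 1 + q + 1) (i' + 1),
        show i' + 1 + (q + 1) = (i' + q + 1) + 1 by ring,
        Nat.choose_succ_succ' (i' + q + 1) i']
      rw [show i' + (q + 1) + 1 = i' + q + 1 + 1 by ring, show i' + (q + 1) = i' + q + 1 by ring]
      push_cast
      rw [pow_succ]
      ring

open Complex

variable {u : ℝ → ℂ}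

lemma contDiff_iteratedDeriv (hu : ContDiff ℝ (⊤ : ℕ∞) u) (p : ℕ) :
    ContDiff ℝ (⊤ : ℕ∞) (iteratedDeriv p u) := by
  rw [iteratedDeriv_eq_iterate]; exact hu.iterate_deriv p

lemma tsupport_iteratedDeriv_subset (u : ℝ → ℂ) (p : ℕ) :
    tsupport (iteratedDeriv p u) ⊆ tsupport u := by
  induction p with
  | zero => simp [iteratedDeriv_zero]
  | succ p ih =>
    rw [iteratedDeriv_succ]
    exact closure_minimal (support_deriv_subset.trans ih) (isClosed_tsupport u)

lemma hasCompactSupport_iteratedDeriv (hsupp : HasCompactSupport u) (p : ℕ) :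
    HasCompactSupport (iteratedDeriv p u) :=
  hsupp.mono' ((subset_tsupport _).trans (tsupport_iteratedDeriv_subset u p))

lemma hasDerivAt_re_mul_conj {w : ℝ → ℂ} {u' w' : ℂ} {x : ℝ}
    (hu : HasDerivAt u u' x) (hw : HasDerivAt w w' x) :
    HasDerivAt (fun x => (u x * (starRingEnd ℂ) (w x)).re)
      ((u' * (starRingEnd ℂ) (w x)).re + (u x * (starRingEnd ℂ) w').re) x := by
  have hconj : HasDerivAt (fun x => (starRingEnd ℂ) (w x)) ((starRingEnd ℂ) w') x := by
    have := (Complex.conjCLE : ℂ ≃L[ℝ] ℂ).toContinuousLinearMap.hasFDerivAt.comp_hasDerivAt x hw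
    exact this
  have hmul : HasDerivAt (fun x => u x * (starRingEnd ℂ) (w x))
      (u' * (starRingEnd ℂ) (w x) + u x * (starRingEnd ℂ) w') x := hu.mul hconj
  have := (Complex.reCLM : ℂ →L[ℝ] ℝ).hasFDerivAt.comp_hasDerivAt x hmul
  simpa [Function.comp_def] using this

lemma exists_Ioo_between {K : Set ℝ} (hK : IsCompact K) {a b : ℝ} (hab : a < b)
    (hsub : K ⊆ Set.Ioo a b) :
    ∃ c d, a < c ∧ c < d ∧ d < b ∧ K ⊆ Set.Ioo c d := by
  rcases K.eq_empty_or_nonempty with rfl | hne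
  · obtain ⟨c, hc1, hc2⟩ := exists_between hab
    obtain ⟨d, hd1, hd2⟩ := exists_between hc2
    exact ⟨c, d, hc1, hd1, hd2, by simp⟩
  · have h1 : sInf K ∈ K := hK.sInf_mem hne
    have h2 : sSup K ∈ K := hK.sSup_mem hne
    obtain ⟨c, hc1, hc2⟩ := exists_between (hsub h1).1
    obtain ⟨d, hd1, hd2⟩ := exists_between (hsub h2).2
    refine ⟨c, d, hc1, ?_, hd2, fun x hx => ?_⟩
    · calc c < sInf K := hc2
        _ ≤ sSup K := csInf_le hK.bddBelow h2
        _ < d := hd1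
    · exact ⟨lt_of_lt_of_le hc2 (csInf_le hK.bddBelow hx),
        lt_of_le_of_lt (le_csSup hK.bddAbove hx) hd1⟩

lemma integrableOn_vanish {a b : ℝ} (hab : a < b) {F : ℝ → ℝ} {K : Set ℝ} (hK : IsCompact K)
    (hKsub : K ⊆ Set.Ioo a b) (hcont : ContinuousOn F (Set.Ioo a b))
    (hF : ∀ x ∉ K, F x = 0) : IntegrableOn F (Set.Ioo a b) := by
  obtain ⟨c, d, hac, hcd, hdb, hKcd⟩ := exists_Ioo_between hK hab hKsub
  have hIcc : Set.Icc c d ⊆ Set.Ioo a b := Set.Icc_subset_Ioo hac hdb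
  have h1 : IntegrableOn F (Set.Icc c d) := (hcont.mono hIcc).integrableOn_compact isCompact_Icc
  have h2 : (Set.Ioo a b).indicator F = (Set.Icc c d).indicator F := by
    funext x
    by_cases hx : x ∈ K
    · have hx1 : x ∈ Set.Ioo c d := hKcd hx
      rw [Set.indicator_of_mem (hKsub hx), Set.indicator_of_mem (Set.Ioo_subset_Icc_self hx1)]
    · have hx0 : F x = 0 := hF x hx
      simp [Set.indicator_apply, hx0]
  exact (integrable_indicator_iff measurableSet_Ioo).1
    (h2 ▸ (integrable_indicator_iff measurableSet_Icc).2 h1)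

lemma setIntegral_loc {a b c d : ℝ} (hcd : c ≤ d) (hsub : Set.Ioo c d ⊆ Set.Ioo a b)
    (F : ℝ → ℝ) (hF : ∀ x ∉ Set.Ioo c d, F x = 0) :
    ∫ x in Set.Ioo a b, F x = ∫ x in c..d, F x := by
  rw [setIntegral_eq_of_subset_of_forall_diff_eq_zero measurableSet_Ioo hsub
    (fun x hx => hF x hx.2), intervalIntegral.integral_of_le hcd,
    ← integral_Ioc_eq_integral_Ioo]

lemma ibp {a b : ℝ} (hab : a < b) (g h : ℝ → ℝ)
    (hg : ContDiffOn ℝ 1 g (Set.Ioo a b))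
    (hh : ContDiff ℝ (⊤ : ℕ∞) h) (hhs : HasCompactSupport h)
    (hsub : tsupport h ⊆ Set.Ioo a b) :
    ∫ x in Set.Ioo a b, g x * deriv h x
      = - ∫ x in Set.Ioo a b, derivWithin g (Set.Ioo a b) x * h x := by
  obtain ⟨c, d, hac, hcd, hdb, hK⟩ := exists_Ioo_between hhs hab hsub
  have hIcc : Set.Icc c d ⊆ Set.Ioo a b := Set.Icc_subset_Ioo hac hdb
  have huIcc : Set.uIcc c d = Set.Icc c d := Set.uIcc_of_le hcd.le
  have hgd : ∀ x ∈ Set.Icc c d, HasDerivAt g (derivWithin g (Set.Ioo a b) x) x := by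
    intro x hx
    have hxI := hIcc hx
    have hdiff : DifferentiableAt ℝ g x :=
      (hg.differentiableOn one_ne_zero x hxI).differentiableAt (isOpen_Ioo.mem_nhds hxI)
    rw [derivWithin_of_isOpen isOpen_Ioo hxI]
    exact hdiff.hasDerivAt
  have hhd : ∀ x ∈ Set.Icc c d, HasDerivAt h (deriv h x) x := fun x _ =>
    ((hh.differentiable (by simp)) x).hasDerivAt
  have hg'c : ContinuousOn (derivWithin g (Set.Ioo a b)) (Set.Ioo a b) :=
    hg.continuousOn_derivWithin isOpen_Ioo.uniqueDiffOn le_rfl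
  have hgc : ContinuousOn g (Set.Ioo a b) := hg.continuousOn
  have hint1 : IntervalIntegrable (fun x => derivWithin g (Set.Ioo a b) x * h x) volume c d := by
    apply ContinuousOn.intervalIntegrable
    exact ((hg'c.mono (huIcc ▸ hIcc)).mul (hh.continuous.continuousOn))
  have hint2 : IntervalIntegrable (fun x => g x * deriv h x) volume c d := by
    apply ContinuousOn.intervalIntegrable
    exact ((hgc.mono (huIcc ▸ hIcc)).mul ((hh.continuous_deriv (mod_cast le_top)).continuousOn))
  have hc0 : h c = 0 := image_eq_zero_of_notMem_tsupport (fun hc => by simpa using hK hc)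
  have hd0 : h d = 0 := image_eq_zero_of_notMem_tsupport (fun hd => by simpa using hK hd)
  have key : ∫ x in c..d, (derivWithin g (Set.Ioo a b) x * h x + g x * deriv h x) = 0 := by
    rw [intervalIntegral.integral_deriv_mul_eq_sub (u := g) (v := h)
      (fun x hx => hgd x (huIcc ▸ hx)) (fun x hx => hhd x (huIcc ▸ hx))
      ((hg'c.mono (huIcc ▸ hIcc)).intervalIntegrable)
      (((hh.continuous_deriv (mod_cast le_top)).continuousOn).intervalIntegrable), hc0, hd0]
    ring
  have hsplit : (∫ x in c..d, derivWithin g (Set.Ioo a b) x * h x)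
      + ∫ x in c..d, g x * deriv h x = 0 := by
    rw [← intervalIntegral.integral_add hint1 hint2]; exact key
  have e1 : ∫ x in Set.Ioo a b, g x * deriv h x = ∫ x in c..d, g x * deriv h x := by
    apply setIntegral_loc hcd.le (Set.Ioo_subset_Ioo hac.le hdb.le)
    intro x hx
    have hx' : x ∉ tsupport h := fun hc => hx (hK hc)
    have : deriv h x = 0 := by
      by_contra hne
      exact hx' (support_deriv_subset (by simpa [Function.mem_support] using hne))
    simp [this]
  have e2 : ∫ x in Set.Ioo a b, derivWithin g (Set.Ioo a b) x * h x
      = ∫ x in c..d, derivWithin g (Set.Ioo a b) x * h x := by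
    apply setIntegral_loc hcd.le (Set.Ioo_subset_Ioo hac.le hdb.le)
    intro x hx
    have hx' : h x = 0 := image_eq_zero_of_notMem_tsupport (fun hc => hx (hK hc))
    simp [hx']
  rw [e1, e2]
  linarith

lemma re_mul_conj_comm (z w : ℂ) : (z * (starRingEnd ℂ) w).re = (w * (starRingEnd ℂ) z).re := by
  simp [Complex.mul_re]; ring

lemma re_mul_conj_self (z : ℂ) : (z * (starRingEnd ℂ) z).re = ‖z‖ ^ 2 := by
  rw [Complex.mul_conj, Complex.ofReal_re, Complex.normSq_eq_norm_sq]

lemma tsupport_aux {E : Type*} [Zero E] {F : ℝ → E} {u : ℝ → ℂ}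
    (h : ∀ x, x ∉ tsupport u → F x = 0) : tsupport F ⊆ tsupport u :=
  closure_minimal (fun x hx => by_contra fun hc => hx (h x hc)) (isClosed_tsupport u)

lemma support_aux {E : Type*} [Zero E] {F : ℝ → E} {u : ℝ → ℂ}
    (h : ∀ x, x ∉ tsupport u → F x = 0) : Function.support F ⊆ tsupport u :=
  fun x hx => by_contra fun hc => hx (h x hc)

lemma contDiff_re_mul_conj {u w : ℝ → ℂ} (hu : ContDiff ℝ (⊤ : ℕ∞) u)
    (hw : ContDiff ℝ (⊤ : ℕ∞) w) :
    ContDiff ℝ (⊤ : ℕ∞) (fun x => (u x * (starRingEnd ℂ) (w x)).re) := by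
  have h1 : ContDiff ℝ (⊤ : ℕ∞) (fun x => u x * (starRingEnd ℂ) (w x)) := by
    apply hu.mul
    exact (Complex.conjCLE : ℂ ≃L[ℝ] ℂ).toContinuousLinearMap.contDiff.comp hw
  exact (Complex.reCLM : ℂ →L[ℝ] ℝ).contDiff.comp h1

lemma contDiff_norm_sq' {u : ℝ → ℂ} (hu : ContDiff ℝ (⊤ : ℕ∞) u) :
    ContDiff ℝ (⊤ : ℕ∞) (fun x => ‖u x‖ ^ 2) := by
  have := contDiff_re_mul_conj hu hu
  simp_rw [re_mul_conj_self] at this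
  exact this

lemma deriv_Fp {u : ℝ → ℂ} (hu : ContDiff ℝ (⊤ : ℕ∞) u) (p : ℕ) (x : ℝ) :
    deriv (fun y => 2 * (u y * (starRingEnd ℂ) (iteratedDeriv p u y)).re) x
      = 2 * (deriv u x * (starRingEnd ℂ) (iteratedDeriv p u x)).re
        + 2 * (u x * (starRingEnd ℂ) (iteratedDeriv (p + 1) u x)).re := by
  have h1 : HasDerivAt u (deriv u x) x := ((hu.differentiable (by simp)) x).hasDerivAt
  have h2 : HasDerivAt (iteratedDeriv p u) (iteratedDeriv (p + 1) u x) x := by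
    rw [iteratedDeriv_succ]
    exact (((contDiff_iteratedDeriv hu p).differentiable (by simp)) x).hasDerivAt
  have := (hasDerivAt_re_mul_conj h1 h2).const_mul 2
  rw [this.deriv]
  ring

lemma Lmain {a b : ℝ} (hab : a < b) (p : ℕ) :
    ∀ (g : ℝ → ℝ) (u : ℝ → ℂ), ContDiffOn ℝ p g (Set.Ioo a b) →
    ContDiff ℝ (⊤ : ℕ∞) u → HasCompactSupport u → tsupport u ⊆ Set.Ioo a b →
    ∫ x in Set.Ioo a b, g x * (2 * (u x * (starRingEnd ℂ) (iteratedDeriv p u x)).re)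
      = (-1 : ℝ) ^ p * ∑ i ∈ Finset.range (p + 1), (tcoef p i : ℝ) *
          ∫ x in Set.Ioo a b,
            iteratedDerivWithin (p - 2 * i) g (Set.Ioo a b) x * ‖iteratedDeriv i u x‖ ^ 2 := by
  induction p using Nat.strong_induction_on with
  | _ p IH =>
  match p with
  | 0 =>
    intro g u hg hu hus hut
    have h00 : ((tcoef 0 0 : ℤ) : ℝ) = 2 := by norm_num [tcoef]
    simp only [zero_add, Finset.sum_range_one, pow_zero, one_mul, mul_zero, Nat.sub_zero,
      iteratedDerivWithin_zero, iteratedDeriv_zero, h00]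
    simp_rw [re_mul_conj_self, show ∀ x : ℝ, g x * (2 * ‖u x‖ ^ 2) = 2 * (g x * ‖u x‖ ^ 2) by
      intro x; ring]
    rw [MeasureTheory.integral_const_mul]
  | 1 =>
    intro g u hg hu hus hut
    have hderiv : ∀ x, deriv (fun y => (u y * (starRingEnd ℂ) (u y)).re) x
        = 2 * (u x * (starRingEnd ℂ) (iteratedDeriv 1 u x)).re := by
      intro x
      have h1 : HasDerivAt u (deriv u x) x := ((hu.differentiable (by simp)) x).hasDerivAt
      rw [(hasDerivAt_re_mul_conj h1 h1).deriv, iteratedDeriv_one,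
        re_mul_conj_comm (deriv u x) (u x)]
      ring
    have hLHS : ∫ x in Set.Ioo a b, g x * (2 * (u x * (starRingEnd ℂ) (iteratedDeriv 1 u x)).re)
        = ∫ x in Set.Ioo a b, g x * deriv (fun y => (u y * (starRingEnd ℂ) (u y)).re) x := by
      congr 1; funext x; rw [hderiv x]
    rw [hLHS, ibp hab g _ (hg.of_le (by norm_num))
      (contDiff_re_mul_conj hu hu) (hus.mono' (support_aux (fun x hx => by
        simp [image_eq_zero_of_notMem_tsupport hx])))
      ((tsupport_aux (fun x hx => by simp [image_eq_zero_of_notMem_tsupport hx])).trans hut)]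
    have h11 : (tcoef 1 1 : ℝ) = 0 := by norm_num [tcoef]
    have h10 : (tcoef 1 0 : ℝ) = 1 := by norm_num [tcoef]
    rw [Finset.sum_range_succ, Finset.sum_range_one, h11, h10]
    simp only [zero_mul, add_zero, mul_zero, Nat.sub_zero, pow_one, one_mul, mul_one,
      iteratedDeriv_zero]
    have hcong : (∫ x in Set.Ioo a b,
          iteratedDerivWithin (1 - 2 * 0) g (Set.Ioo a b) x * ‖u x‖ ^ 2)
        = ∫ x in Set.Ioo a b,
            derivWithin g (Set.Ioo a b) x * (u x * (starRingEnd ℂ) (u x)).re := by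
      apply MeasureTheory.setIntegral_congr_fun measurableSet_Ioo
      intro x hx
      show iteratedDerivWithin (1 - 2 * 0) g (Set.Ioo a b) x * ‖u x‖ ^ 2
          = derivWithin g (Set.Ioo a b) x * (u x * (starRingEnd ℂ) (u x)).re
      rw [re_mul_conj_self, show (1 - 2 * 0 : ℕ) = 1 from rfl,
        iteratedDerivWithin_one]
    rw [hcong]
    ring
  | (p + 2) =>
    intro g u hg hu hus hut
    set I := Set.Ioo a b with hI
    have huniq : UniqueDiffOn ℝ I := isOpen_Ioo.uniqueDiffOn
    set w : ℝ → ℂ := deriv u with hw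
    have hwsm : ContDiff ℝ (⊤ : ℕ∞) w := by
      have := contDiff_iteratedDeriv hu 1
      rwa [iteratedDeriv_one] at this
    have hwsupp : tsupport w ⊆ tsupport u :=
      closure_minimal support_deriv_subset (isClosed_tsupport u)
    have hws : HasCompactSupport w := hus.mono' (support_deriv_subset)
    set H : ℝ → ℝ := fun y => 2 * (u y * (starRingEnd ℂ) (iteratedDeriv (p + 1) u y)).re with hH
    have hHsm : ContDiff ℝ (⊤ : ℕ∞) H :=
      contDiff_const.mul (contDiff_re_mul_conj hu (contDiff_iteratedDeriv hu (p + 1)))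
    have hHzero : ∀ x, x ∉ tsupport u → H x = 0 := fun x hx => by
      simp [hH, image_eq_zero_of_notMem_tsupport hx]
    have hHs : HasCompactSupport H := hus.mono' (support_aux hHzero)
    have hHt : tsupport H ⊆ I := (tsupport_aux hHzero).trans hut
    -- pointwise decomposition
    have hpt : ∀ x, 2 * (u x * (starRingEnd ℂ) (iteratedDeriv (p + 2) u x)).re
        = deriv H x - 2 * (w x * (starRingEnd ℂ) (iteratedDeriv p w x)).re := by
      intro x
      rw [hH, deriv_Fp hu (p + 1) x]
      have : iteratedDeriv p w = iteratedDeriv (p + 1) u := by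
        rw [hw, ← iteratedDeriv_succ']
      rw [this]
      ring
    -- integrability of the two pieces
    have hint1 : IntegrableOn (fun x => g x * deriv H x) I := by
      apply integrableOn_vanish hab hus.isCompact hut
      · exact hg.continuousOn.mul (hHsm.continuous_deriv (mod_cast le_top)).continuousOn
      · intro x hx
        have : deriv H x = 0 := by
          by_contra hne
          exact hx ((tsupport_aux hHzero) (support_deriv_subset
            (by simpa [Function.mem_support] using hne)))
        simp [this]
    have hint2 : IntegrableOn
        (fun x => g x * (2 * (w x * (starRingEnd ℂ) (iteratedDeriv p w x)).re)) I := by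
      apply integrableOn_vanish hab hus.isCompact hut
      · exact hg.continuousOn.mul
          ((contDiff_const.mul
            (contDiff_re_mul_conj hwsm (contDiff_iteratedDeriv hwsm p))).continuous.continuousOn)
      · intro x hx
        have hwx : w x = 0 := image_eq_zero_of_notMem_tsupport (fun hc => hx (hwsupp hc))
        simp [hwx]
    have hsplit : ∫ x in I, g x * (2 * (u x * (starRingEnd ℂ) (iteratedDeriv (p + 2) u x)).re)
        = (∫ x in I, g x * deriv H x)
          - ∫ x in I, g x * (2 * (w x * (starRingEnd ℂ) (iteratedDeriv p w x)).re) := by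
      rw [← MeasureTheory.integral_sub hint1 hint2]
      congr 1; funext x; rw [hpt x]; ring
    have hg1 : ContDiffOn ℝ 1 g I := hg.of_le (by exact_mod_cast Nat.one_le_iff_ne_zero.2 (by omega))
    have hibp : ∫ x in I, g x * deriv H x = - ∫ x in I, derivWithin g I x * H x :=
      ibp hab g H hg1 hHsm hHs hHt
    have hg' : ContDiffOn ℝ (p + 1 : ℕ) (derivWithin g I) I := by
      apply hg.derivWithin huniq
      exact_mod_cast Nat.le_refl (p + 2)
    have hIH1 := IH (p + 1) (by omega) (derivWithin g I) u hg' hu hus hut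
    have hIH2 := IH p (by omega) g w (hg.of_le (by exact_mod_cast by omega)) hwsm hws
      (hwsupp.trans hut)
    rw [hsplit, hibp, hIH1, hIH2]
    -- Now pure algebra on sums
    have hBcongr : ∀ i ∈ Finset.range (p + 2), (tcoef (p + 1) i : ℝ) *
        (∫ x in I, iteratedDerivWithin (p + 1 - 2 * i) (derivWithin g I) I x
          * ‖iteratedDeriv i u x‖ ^ 2)
        = (tcoef (p + 1) i : ℝ) *
          ∫ x in I, iteratedDerivWithin (p + 2 - 2 * i) g I x * ‖iteratedDeriv i u x‖ ^ 2 := by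
      intro i _
      rcases le_or_gt (2 * i) (p + 1) with hle | hlt
      · congr 1
        apply MeasureTheory.setIntegral_congr_fun measurableSet_Ioo
        intro x hx
        show iteratedDerivWithin (p + 1 - 2 * i) (derivWithin g I) I x * ‖iteratedDeriv i u x‖ ^ 2
            = iteratedDerivWithin (p + 2 - 2 * i) g I x * ‖iteratedDeriv i u x‖ ^ 2
        have he : p + 2 - 2 * i = p + 1 - 2 * i + 1 := by omega
        rw [he, iteratedDerivWithin_succ']
      · have hz : ((tcoef (p + 1) i : ℤ) : ℝ) = 0 := by
          rw [tcoef_eq_zero (by omega : p + 1 < 2 * i)]; norm_num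
        rw [hz, zero_mul, zero_mul]
    have hDcongr : ∀ i, (∫ x in I, iteratedDerivWithin (p - 2 * i) g I x
          * ‖iteratedDeriv i w x‖ ^ 2)
        = ∫ x in I, iteratedDerivWithin (p + 2 - 2 * (i + 1)) g I x
            * ‖iteratedDeriv (i + 1) u x‖ ^ 2 := by
      intro i
      have h1 : p + 2 - 2 * (i + 1) = p - 2 * i := by omega
      have h2 : iteratedDeriv (i + 1) u = iteratedDeriv i w := by
        rw [hw, ← iteratedDeriv_succ']
      rw [h1, h2]
    rw [Finset.sum_congr rfl hBcongr]
    -- final sum identity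
    have hfin : ∑ i ∈ Finset.range (p + 3), (tcoef (p + 2) i : ℝ) *
          (∫ x in I, iteratedDerivWithin (p + 2 - 2 * i) g I x * ‖iteratedDeriv i u x‖ ^ 2)
        = (∑ i ∈ Finset.range (p + 2), (tcoef (p + 1) i : ℝ) *
            ∫ x in I, iteratedDerivWithin (p + 2 - 2 * i) g I x * ‖iteratedDeriv i u x‖ ^ 2)
          - ∑ i ∈ Finset.range (p + 1), (tcoef p i : ℝ) *
            ∫ x in I, iteratedDerivWithin (p + 2 - 2 * (i + 1)) g I x
              * ‖iteratedDeriv (i + 1) u x‖ ^ 2 := by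
      set B : ℕ → ℝ := fun i =>
        ∫ x in I, iteratedDerivWithin (p + 2 - 2 * i) g I x * ‖iteratedDeriv i u x‖ ^ 2 with hB
      have e1 : ∑ i ∈ Finset.range (p + 3), (tcoef (p + 2) i : ℝ) * B i
          = (∑ i ∈ Finset.range (p + 2), (tcoef (p + 2) (i + 1) : ℝ) * B (i + 1))
            + (tcoef (p + 2) 0 : ℝ) * B 0 := Finset.sum_range_succ' _ _
      have e2 : ∀ i, (tcoef (p + 2) (i + 1) : ℝ) = (tcoef (p + 1) (i + 1) : ℝ) - (tcoef p i : ℝ) := by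
        intro i; exact_mod_cast congrArg (Int.cast : ℤ → ℝ) (tcoef_rec (p + 1) i (by omega))
      calc ∑ i ∈ Finset.range (p + 3), (tcoef (p + 2) i : ℝ) * B i
          = (∑ i ∈ Finset.range (p + 2), ((tcoef (p + 1) (i + 1) : ℝ) * B (i + 1)
              - (tcoef p i : ℝ) * B (i + 1))) + (tcoef (p + 2) 0 : ℝ) * B 0 := by
            rw [e1]; congr 1; apply Finset.sum_congr rfl; intro i _; rw [e2 i]; ring
        _ = ((∑ i ∈ Finset.range (p + 2), (tcoef (p + 1) (i + 1) : ℝ) * B (i + 1))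
              + (tcoef (p + 1) 0 : ℝ) * B 0)
            - ∑ i ∈ Finset.range (p + 2), (tcoef p i : ℝ) * B (i + 1) := by
            rw [Finset.sum_sub_distrib]
            have : ((tcoef (p + 2) 0 : ℤ) : ℝ) = ((tcoef (p + 1) 0 : ℤ) : ℝ) := by
              rw [tcoef_zero_right _ (by omega), tcoef_zero_right _ (by omega)]
            rw [this]; ring
        _ = (∑ i ∈ Finset.range (p + 3), (tcoef (p + 1) i : ℝ) * B i)
            - ∑ i ∈ Finset.range (p + 2), (tcoef p i : ℝ) * B (i + 1) := by
            rw [Finset.sum_range_succ' (fun i => (tcoef (p + 1) i : ℝ) * B i) (p + 2)]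
        _ = (∑ i ∈ Finset.range (p + 2), (tcoef (p + 1) i : ℝ) * B i)
            - ∑ i ∈ Finset.range (p + 1), (tcoef p i : ℝ) * B (i + 1) := by
            rw [Finset.sum_range_succ (fun i => (tcoef (p + 1) i : ℝ) * B i) (p + 2),
              Finset.sum_range_succ (fun i => (tcoef p i : ℝ) * B (i + 1)) (p + 1),
              show (tcoef (p + 1) (p + 2) : ℝ) = 0 by
                exact_mod_cast congrArg (Int.cast : ℤ → ℝ) (tcoef_eq_zero (by omega)),
              show (tcoef p (p + 1) : ℝ) = 0 by
                exact_mod_cast congrArg (Int.cast : ℤ → ℝ) (tcoef_eq_zero (by omega))]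
            ring
    have hDall : ∑ i ∈ Finset.range (p + 1), (tcoef p i : ℝ) *
          (∫ x in I, iteratedDerivWithin (p - 2 * i) g I x * ‖iteratedDeriv i w x‖ ^ 2)
        = ∑ i ∈ Finset.range (p + 1), (tcoef p i : ℝ) *
            ∫ x in I, iteratedDerivWithin (p + 2 - 2 * (i + 1)) g I x
              * ‖iteratedDeriv (i + 1) u x‖ ^ 2 := by
      apply Finset.sum_congr rfl; intro i _; rw [hDcongr i]
    rw [hDall] at *
    rw [hfin]
    have hsign1 : (-1 : ℝ) ^ (p + 2) = (-1 : ℝ) ^ p := by ring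
    have hsign2 : (-1 : ℝ) ^ (p + 1) = -(-1 : ℝ) ^ p := by ring
    rw [hsign1, hsign2]
    ring

lemma itd_comp (f : ℝ → ℂ) (i j : ℕ) :
    iteratedDeriv i (iteratedDeriv j f) = iteratedDeriv (i + j) f := by
  rw [iteratedDeriv_eq_iterate, iteratedDeriv_eq_iterate, iteratedDeriv_eq_iterate,
    Function.iterate_add_apply]

lemma sq_split (N : ℕ) (T : ℕ → ℕ → ℝ) (hsym : ∀ j k, T j k = T k j) :
    ∑ j ∈ Finset.range N, ∑ k ∈ Finset.range N, T j k
      = (∑ m ∈ Finset.range N, T m m)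
        + ∑ j ∈ Finset.range N, ∑ k ∈ Finset.Ico (j + 1) N, (2 * T j k) := by
  induction N with
  | zero => simp
  | succ N ih =>
    rw [Finset.sum_range_succ]
    have e1 : ∀ j, ∑ k ∈ Finset.range (N + 1), T j k
        = (∑ k ∈ Finset.range N, T j k) + T j N := fun j => Finset.sum_range_succ _ _
    rw [Finset.sum_congr rfl (fun j _ => e1 j), Finset.sum_add_distrib, ih]
    rw [Finset.sum_range_succ (fun m => T m m)]
    have e2 : ∀ j, j ∈ Finset.range N → ∑ k ∈ Finset.Ico (j + 1) (N + 1), (2 * T j k)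
        = (∑ k ∈ Finset.Ico (j + 1) N, (2 * T j k)) + 2 * T j N := by
      intro j hj
      simp only [Finset.mem_range] at hj
      rw [Finset.sum_Ico_succ_top (by omega : j + 1 ≤ N)]
    rw [Finset.sum_range_succ (fun j => ∑ k ∈ Finset.Ico (j + 1) (N + 1), (2 * T j k)),
      Finset.sum_congr rfl e2, Finset.sum_add_distrib]
    have e3 : ∑ k ∈ Finset.Ico (N + 1) (N + 1), (2 * T N k) = 0 := by simp
    have e4 : ∑ k ∈ Finset.range N, T N k = ∑ j ∈ Finset.range N, T j N := by
      apply Finset.sum_congr rfl; intro k _; exact hsym N k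
    have e5 : ∑ x ∈ Finset.range N, 2 * T x N
        = (∑ x ∈ Finset.range N, T x N) + ∑ x ∈ Finset.range N, T x N := by
      rw [← Finset.sum_add_distrib]
      exact Finset.sum_congr rfl fun x _ => two_mul _
    rw [e1 N, e3, e4, e5]
    ring

lemma sum_shift (j k : ℕ) (hjk : j ≤ k) (φ : ℕ → ℝ) :
    ∑ i ∈ Finset.range (k - j + 1), φ i = ∑ m ∈ Finset.Icc j k, φ (m - j) := by
  apply Finset.sum_bij' (fun i _ => i + j) (fun m _ => m - j)
  · intro i hi
    simp only [Finset.mem_range] at hi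
    simp only [Finset.mem_Icc]; omega
  · intro m hm
    simp only [Finset.mem_Icc] at hm
    simp only [Finset.mem_range]; omega
  · intro i _; omega
  · intro m hm; simp only [Finset.mem_Icc] at hm; omega
  · intro i _; congr 1; omega

lemma tcoefR_eq_zero {p i : ℕ} (h : p < 2 * i) : ((tcoef p i : ℤ) : ℝ) = 0 := by
  rw [tcoef_eq_zero h]; norm_num

theorem stmt_0 (n : ℕ) (hn : 1 ≤ n) (a b : ℝ) (hab : a < b) (A : ℕ → ℝ → ℝ)
    (hA : ∀ m ≤ n, ContinuousOn (A m) (Ioo a b))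
    (hprod : ∀ j k : ℕ, j < k → k ≤ n →
      ContDiffOn ℝ (k - j : ℕ) (fun x => A j x * A k x) (Ioo a b))
    (f : ℝ → ℂ) (hf : ContDiff ℝ (⊤ : ℕ∞) f) (hsupp : HasCompactSupport f)
    (hsub : tsupport f ⊆ Ioo a b) :
    ∫ x in Ioo a b, (A n x) ^ 2 * ‖iteratedDeriv n f x‖ ^ 2
      ≥ ∑ m ∈ Finset.range n, ∫ x in Ioo a b,
          (-(A m x) ^ 2 - ∑ j ∈ Finset.range (m + 1),
            ∑ k ∈ Finset.Icc (max (j + 1) (2 * m - j)) n,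
              (-1 : ℝ) ^ (k - j) * (tcoef (k - j) (m - j) : ℝ) *
                iteratedDerivWithin (k + j - 2 * m) (fun y => A j y * A k y) (Ioo a b) x)
            * ‖iteratedDeriv m f x‖ ^ 2 := by
  have hf' : ContDiff ℝ (⊤ : ℕ∞) f := hf.of_le (by simp)
  have huniq : UniqueDiffOn ℝ (Ioo a b) := isOpen_Ioo.uniqueDiffOn
  have husm : ∀ m : ℕ, ContDiff ℝ (⊤ : ℕ∞) (iteratedDeriv m f) := contDiff_iteratedDeriv hf'
  have hucs : ∀ m : ℕ, HasCompactSupport (iteratedDeriv m f) :=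
    hasCompactSupport_iteratedDeriv hsupp
  have hut : ∀ m : ℕ, tsupport (iteratedDeriv m f) ⊆ Ioo a b := fun m =>
    (tsupport_iteratedDeriv_subset f m).trans hsub
  have huz : ∀ (m : ℕ) (x : ℝ), x ∉ tsupport f → iteratedDeriv m f x = 0 := fun m x hx =>
    image_eq_zero_of_notMem_tsupport (fun hc => hx (tsupport_iteratedDeriv_subset f m hc))
  set T : ℕ → ℕ → ℝ := fun j k => ∫ x in Ioo a b,
    A j x * A k x * (iteratedDeriv j f x * (starRingEnd ℂ) (iteratedDeriv k f x)).re with hT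
  have hTint : ∀ j k, j ≤ n → k ≤ n → IntegrableOn (fun x =>
      A j x * A k x * (iteratedDeriv j f x * (starRingEnd ℂ) (iteratedDeriv k f x)).re)
      (Ioo a b) := by
    intro j k hj hk
    apply integrableOn_vanish hab hsupp hsub
    · exact ((hA j hj).mul (hA k hk)).mul
        (contDiff_re_mul_conj (husm j) (husm k)).continuous.continuousOn
    · intro x hx; simp [huz j x hx]
  have hTsym : ∀ j k, T j k = T k j := by
    intro j k
    simp only [hT]
    congr 1; funext x
    rw [re_mul_conj_comm]; ring
  set S : ℝ → ℂ := fun x =>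
    ∑ k ∈ Finset.range (n + 1), (A k x : ℂ) * iteratedDeriv k f x with hS
  have hSsq : ∀ x, ‖S x‖ ^ 2 = ∑ j ∈ Finset.range (n + 1), ∑ k ∈ Finset.range (n + 1),
      A j x * A k x * (iteratedDeriv j f x * (starRingEnd ℂ) (iteratedDeriv k f x)).re := by
    intro x
    rw [← re_mul_conj_self (S x)]
    simp only [hS]
    rw [map_sum (starRingEnd ℂ), Finset.sum_mul_sum, Complex.re_sum]
    refine Finset.sum_congr rfl fun j _ => ?_
    rw [Complex.re_sum]
    refine Finset.sum_congr rfl fun k _ => ?_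
    rw [map_mul, Complex.conj_ofReal]
    rw [show (A j x : ℂ) * iteratedDeriv j f x
          * ((A k x : ℂ) * (starRingEnd ℂ) (iteratedDeriv k f x))
        = ((A j x * A k x : ℝ) : ℂ)
          * (iteratedDeriv j f x * (starRingEnd ℂ) (iteratedDeriv k f x)) by
      push_cast; ring]
    rw [Complex.re_ofReal_mul]
  have hSzero : ∀ x, x ∉ tsupport f → S x = 0 := by
    intro x hx
    simp only [hS]
    apply Finset.sum_eq_zero
    intro k _
    rw [huz k x hx, mul_zero]
  have hSpos : 0 ≤ ∫ x in Ioo a b, ‖S x‖ ^ 2 :=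
    MeasureTheory.setIntegral_nonneg measurableSet_Ioo (fun x _ => by positivity)
  have hSexp : ∫ x in Ioo a b, ‖S x‖ ^ 2
      = ∑ j ∈ Finset.range (n + 1), ∑ k ∈ Finset.range (n + 1), T j k := by
    rw [MeasureTheory.setIntegral_congr_fun measurableSet_Ioo (fun x _ => hSsq x)]
    rw [MeasureTheory.integral_finset_sum _ (fun j hj => MeasureTheory.integrable_finset_sum _
      (fun k hk => hTint j k (by simpa using Nat.lt_succ_iff.mp (Finset.mem_range.mp hj))
        (Nat.lt_succ_iff.mp (Finset.mem_range.mp hk))))]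
    refine Finset.sum_congr rfl fun j hj => ?_
    exact MeasureTheory.integral_finset_sum _ (fun k hk => hTint j k
      (Nat.lt_succ_iff.mp (Finset.mem_range.mp hj)) (Nat.lt_succ_iff.mp (Finset.mem_range.mp hk)))
  set E : ℕ → ℕ → ℕ → ℝ := fun j k m => ∫ x in Ioo a b,
    iteratedDerivWithin (k + j - 2 * m) (fun y => A j y * A k y) (Ioo a b) x
      * ‖iteratedDeriv m f x‖ ^ 2 with hE
  have hcross : ∀ j k, j < k → k ≤ n → 2 * T j k = ∑ m ∈ Finset.Icc j k,
      ((-1 : ℝ) ^ (k - j) * (tcoef (k - j) (m - j) : ℝ)) * E j k m := by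
    intro j k hjk hkn
    have h2T : 2 * T j k = ∫ x in Ioo a b, (A j x * A k x)
        * (2 * (iteratedDeriv j f x
            * (starRingEnd ℂ) (iteratedDeriv (k - j) (iteratedDeriv j f) x)).re) := by
      rw [hT, ← MeasureTheory.integral_const_mul]
      congr 1; funext x
      rw [itd_comp, show k - j + j = k by omega]
      ring
    rw [h2T, Lmain hab (k - j) (fun y => A j y * A k y) (iteratedDeriv j f)
      (hprod j k hjk hkn) (husm j) (hucs j) (hut j)]
    rw [Finset.mul_sum]
    rw [sum_shift j k hjk.le (fun i => (-1 : ℝ) ^ (k - j) * ((tcoef (k - j) i : ℝ) *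
      ∫ x in Ioo a b, iteratedDerivWithin (k - j - 2 * i) (fun y => A j y * A k y) (Ioo a b) x
        * ‖iteratedDeriv i (iteratedDeriv j f) x‖ ^ 2))]
    refine Finset.sum_congr rfl fun m hm => ?_
    simp only [Finset.mem_Icc] at hm
    rw [itd_comp, show m - j + j = m by omega, show k - j - 2 * (m - j) = k + j - 2 * m by omega,
      hE]
    ring
  -- RHS decomposition
  have hitdWcont : ∀ j k m', j < k → k ≤ n → j ≤ m' → ContinuousOn
      (iteratedDerivWithin (k + j - 2 * m') (fun y => A j y * A k y) (Ioo a b)) (Ioo a b) := by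
    intro j k m' hjk hkn hjm
    exact (hprod j k hjk hkn).continuousOn_iteratedDerivWithin
      (by exact_mod_cast Nat.cast_le.mpr (by omega : k + j - 2 * m' ≤ k - j)) huniq
  have hEint : ∀ j k m', j < k → k ≤ n → j ≤ m' → IntegrableOn (fun x =>
      iteratedDerivWithin (k + j - 2 * m') (fun y => A j y * A k y) (Ioo a b) x
        * ‖iteratedDeriv m' f x‖ ^ 2) (Ioo a b) := by
    intro j k m' hjk hkn hjm
    apply integrableOn_vanish hab hsupp hsub
    · exact (hitdWcont j k m' hjk hkn hjm).mul
        ((contDiff_norm_sq' (husm m')).continuous.continuousOn)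
    · intro x hx; simp [huz m' x hx]
  have hRm : ∀ m, m < n → (∫ x in Ioo a b,
        (-(A m x) ^ 2 - ∑ j ∈ Finset.range (m + 1),
          ∑ k ∈ Finset.Icc (max (j + 1) (2 * m - j)) n,
            (-1 : ℝ) ^ (k - j) * (tcoef (k - j) (m - j) : ℝ) *
              iteratedDerivWithin (k + j - 2 * m) (fun y => A j y * A k y) (Ioo a b) x)
          * ‖iteratedDeriv m f x‖ ^ 2)
      = -(T m m) - ∑ j ∈ Finset.range (m + 1),
          ∑ k ∈ Finset.Icc (max (j + 1) (2 * m - j)) n,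
            ((-1 : ℝ) ^ (k - j) * (tcoef (k - j) (m - j) : ℝ)) * E j k m := by
    intro m hmn
    have hsplit : ∀ x, (-(A m x) ^ 2 - ∑ j ∈ Finset.range (m + 1),
          ∑ k ∈ Finset.Icc (max (j + 1) (2 * m - j)) n,
            (-1 : ℝ) ^ (k - j) * (tcoef (k - j) (m - j) : ℝ) *
              iteratedDerivWithin (k + j - 2 * m) (fun y => A j y * A k y) (Ioo a b) x)
          * ‖iteratedDeriv m f x‖ ^ 2
        = -(A m x * A m x
              * (iteratedDeriv m f x * (starRingEnd ℂ) (iteratedDeriv m f x)).re)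
          - ∑ j ∈ Finset.range (m + 1),
              ∑ k ∈ Finset.Icc (max (j + 1) (2 * m - j)) n,
                ((-1 : ℝ) ^ (k - j) * (tcoef (k - j) (m - j) : ℝ)) *
                  (iteratedDerivWithin (k + j - 2 * m) (fun y => A j y * A k y) (Ioo a b) x
                    * ‖iteratedDeriv m f x‖ ^ 2) := by
      intro x
      rw [sub_mul, Finset.sum_mul]
      rw [re_mul_conj_self]
      have : ∀ j, (∑ k ∈ Finset.Icc (max (j + 1) (2 * m - j)) n,
          (-1 : ℝ) ^ (k - j) * (tcoef (k - j) (m - j) : ℝ) *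
            iteratedDerivWithin (k + j - 2 * m) (fun y => A j y * A k y) (Ioo a b) x)
            * ‖iteratedDeriv m f x‖ ^ 2
          = ∑ k ∈ Finset.Icc (max (j + 1) (2 * m - j)) n,
              ((-1 : ℝ) ^ (k - j) * (tcoef (k - j) (m - j) : ℝ)) *
                (iteratedDerivWithin (k + j - 2 * m) (fun y => A j y * A k y) (Ioo a b) x
                  * ‖iteratedDeriv m f x‖ ^ 2) := by
        intro j
        rw [Finset.sum_mul]
        refine Finset.sum_congr rfl fun k _ => ?_
        ring
      rw [Finset.sum_congr rfl fun j _ => this j]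
      ring
    rw [MeasureTheory.setIntegral_congr_fun measurableSet_Ioo (fun x _ => hsplit x)]
    have hint2 : ∀ j ∈ Finset.range (m + 1), IntegrableOn (fun x =>
        ∑ k ∈ Finset.Icc (max (j + 1) (2 * m - j)) n,
          ((-1 : ℝ) ^ (k - j) * (tcoef (k - j) (m - j) : ℝ)) *
            (iteratedDerivWithin (k + j - 2 * m) (fun y => A j y * A k y) (Ioo a b) x
              * ‖iteratedDeriv m f x‖ ^ 2)) (Ioo a b) := by
      intro j hj
      simp only [Finset.mem_range] at hj
      apply MeasureTheory.integrable_finset_sum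
      intro k hk
      simp only [Finset.mem_Icc] at hk
      exact ((hEint j k m (by omega) (by omega) (by omega)).const_mul _)
    have h1 : IntegrableOn (fun x =>
        -(A m x * A m x * (iteratedDeriv m f x * (starRingEnd ℂ) (iteratedDeriv m f x)).re))
        (Ioo a b) := (hTint m m (by omega) (by omega)).neg
    rw [MeasureTheory.integral_sub h1 (MeasureTheory.integrable_finset_sum _ hint2)]
    rw [MeasureTheory.integral_neg,
      MeasureTheory.integral_finset_sum _ hint2]
    congr 1
    refine Finset.sum_congr rfl fun j hj => ?_
    simp only [Finset.mem_range] at hj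
    rw [MeasureTheory.integral_finset_sum _ (fun k hk => by
      simp only [Finset.mem_Icc] at hk
      exact (hEint j k m (by omega) (by omega) (by omega)).const_mul _)]
    refine Finset.sum_congr rfl fun k hk => ?_
    rw [MeasureTheory.integral_const_mul, hE]
  -- the triple sum identity
  set P : ℕ → ℕ → ℕ → ℝ := fun j k m => if j < k ∧ j ≤ m then
    ((-1 : ℝ) ^ (k - j) * (tcoef (k - j) (m - j) : ℝ)) * E j k m else 0 with hP
  have hinner : ∀ j k m', j < k → k ≤ n → j ≤ m' → m' ≤ k →
      P j k m' = ((-1 : ℝ) ^ (k - j) * (tcoef (k - j) (m' - j) : ℝ)) * E j k m' := by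
    intro j k m' h1 h2 h3 h4
    simp only [hP]
    rw [if_pos ⟨h1, h3⟩]
  have hPz : ∀ j k m', k ≤ n → (¬ (j < k ∧ j ≤ m') ∨ k + j < 2 * m') → P j k m' = 0 := by
    intro j k m' hk hcase
    simp only [hP]
    rcases hcase with h | h
    · rw [if_neg h]
    · by_cases hg : j < k ∧ j ≤ m'
      · rw [if_pos hg, tcoefR_eq_zero (by omega), mul_zero, zero_mul]
      · rw [if_neg hg]
  have hCcube : ∑ j ∈ Finset.range (n + 1), ∑ k ∈ Finset.Icc (j + 1) n,
        ∑ m ∈ Finset.Icc j k, ((-1 : ℝ) ^ (k - j) * (tcoef (k - j) (m - j) : ℝ)) * E j k m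
      = ∑ j ∈ Finset.range (n + 1), ∑ k ∈ Finset.range (n + 1),
          ∑ m ∈ Finset.range (n + 1), P j k m := by
    refine Finset.sum_congr rfl fun j hj => ?_
    simp only [Finset.mem_range] at hj
    have step1 : ∀ k, j < k → k ≤ n → ∑ m ∈ Finset.Icc j k,
        ((-1 : ℝ) ^ (k - j) * (tcoef (k - j) (m - j) : ℝ)) * E j k m
        = ∑ m ∈ Finset.range (n + 1), P j k m := by
      intro k h1 h2
      rw [Finset.sum_congr rfl (fun m hm => by
        simp only [Finset.mem_Icc] at hm
        exact (hinner j k m h1 h2 hm.1 hm.2).symm)]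
      apply Finset.sum_subset
      · intro m hm; simp only [Finset.mem_Icc] at hm; simp only [Finset.mem_range]; omega
      · intro m hm hnot
        simp only [Finset.mem_range] at hm
        simp only [Finset.mem_Icc, not_and_or, not_le] at hnot
        by_cases hg : j ≤ m
        · exact hPz j k m h2 (Or.inr (by omega))
        · exact hPz j k m h2 (Or.inl (by omega))
    rw [Finset.sum_congr rfl (fun k hk => by
      simp only [Finset.mem_Icc] at hk
      exact step1 k (by omega) hk.2)]
    apply Finset.sum_subset
    · intro k hk; simp only [Finset.mem_Icc] at hk; simp only [Finset.mem_range]; omega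
    · intro k hk hnot
      simp only [Finset.mem_range] at hk
      simp only [Finset.mem_Icc] at hnot
      apply Finset.sum_eq_zero
      intro m _
      exact hPz j k m (by omega) (Or.inl (by omega))
  have hDcube : ∑ m ∈ Finset.range n, ∑ j ∈ Finset.range (m + 1),
        ∑ k ∈ Finset.Icc (max (j + 1) (2 * m - j)) n,
          ((-1 : ℝ) ^ (k - j) * (tcoef (k - j) (m - j) : ℝ)) * E j k m
      = ∑ m ∈ Finset.range (n + 1), ∑ j ∈ Finset.range (n + 1),
          ∑ k ∈ Finset.range (n + 1), P j k m := by
    have step1 : ∀ m j, m ≤ n → j ≤ m → ∑ k ∈ Finset.Icc (max (j + 1) (2 * m - j)) n,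
        ((-1 : ℝ) ^ (k - j) * (tcoef (k - j) (m - j) : ℝ)) * E j k m
        = ∑ k ∈ Finset.range (n + 1), P j k m := by
      intro m j hm hjm
      rw [Finset.sum_congr rfl (fun k hk => by
        simp only [Finset.mem_Icc, max_le_iff] at hk
        exact (hinner j k m (by omega) (by omega) hjm (by omega)).symm)]
      apply Finset.sum_subset
      · intro k hk; simp only [Finset.mem_Icc] at hk; simp only [Finset.mem_range]; omega
      · intro k hk hnot
        simp only [Finset.mem_range] at hk
        simp only [Finset.mem_Icc, max_le_iff, not_and_or, not_le] at hnot
        by_cases hg : j < k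
        · exact hPz j k m (by omega) (Or.inr (by omega))
        · exact hPz j k m (by omega) (Or.inl (by omega))
    have step2 : ∀ m, m < n → ∑ j ∈ Finset.range (m + 1),
        ∑ k ∈ Finset.Icc (max (j + 1) (2 * m - j)) n,
          ((-1 : ℝ) ^ (k - j) * (tcoef (k - j) (m - j) : ℝ)) * E j k m
        = ∑ j ∈ Finset.range (n + 1), ∑ k ∈ Finset.range (n + 1), P j k m := by
      intro m hm
      rw [Finset.sum_congr rfl (fun j hj => by
        simp only [Finset.mem_range] at hj
        exact step1 m j (by omega) (by omega))]
      apply Finset.sum_subset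
      · intro j hj; simp only [Finset.mem_range] at hj ⊢; omega
      · intro j hj hnot
        simp only [Finset.mem_range] at hj hnot
        apply Finset.sum_eq_zero
        intro k hk
        simp only [Finset.mem_range] at hk
        exact hPz j k m (by omega) (Or.inl (by omega))
    rw [Finset.sum_congr rfl (fun m hm => step2 m (Finset.mem_range.mp hm))]
    rw [Finset.sum_range_succ]
    have hlast : ∑ j ∈ Finset.range (n + 1), ∑ k ∈ Finset.range (n + 1), P j k n = 0 := by
      apply Finset.sum_eq_zero
      intro j hj
      apply Finset.sum_eq_zero
      intro k hk
      simp only [Finset.mem_range] at hj hk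
      by_cases hg : j < k ∧ j ≤ n
      · exact hPz j k n (by omega) (Or.inr (by omega))
      · exact hPz j k n (by omega) (Or.inl hg)
    rw [hlast, add_zero]
  have hswap : ∑ m ∈ Finset.range (n + 1), ∑ j ∈ Finset.range (n + 1),
        ∑ k ∈ Finset.range (n + 1), P j k m
      = ∑ j ∈ Finset.range (n + 1), ∑ k ∈ Finset.range (n + 1),
          ∑ m ∈ Finset.range (n + 1), P j k m := by
    rw [Finset.sum_comm]
    exact Finset.sum_congr rfl fun j _ => Finset.sum_comm
  -- assemble
  have hSexp2 : ∫ x in Ioo a b, ‖S x‖ ^ 2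
      = (∑ m ∈ Finset.range (n + 1), T m m)
        + ∑ j ∈ Finset.range (n + 1), ∑ k ∈ Finset.Icc (j + 1) n,
            ∑ m ∈ Finset.Icc j k, ((-1 : ℝ) ^ (k - j) * (tcoef (k - j) (m - j) : ℝ)) * E j k m := by
    rw [hSexp, sq_split (n + 1) T hTsym]
    congr 1
    refine Finset.sum_congr rfl fun j hj => ?_
    simp only [Finset.mem_range] at hj
    rw [show Finset.Ico (j + 1) (n + 1) = Finset.Icc (j + 1) n from rfl]
    refine Finset.sum_congr rfl fun k hk => ?_
    simp only [Finset.mem_Icc] at hk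
    exact hcross j k (by omega) hk.2
  have hsum : ∑ m ∈ Finset.range n, (∫ x in Ioo a b,
        (-(A m x) ^ 2 - ∑ j ∈ Finset.range (m + 1),
          ∑ k ∈ Finset.Icc (max (j + 1) (2 * m - j)) n,
            (-1 : ℝ) ^ (k - j) * (tcoef (k - j) (m - j) : ℝ) *
              iteratedDerivWithin (k + j - 2 * m) (fun y => A j y * A k y) (Ioo a b) x)
          * ‖iteratedDeriv m f x‖ ^ 2)
      = T n n - ∫ x in Ioo a b, ‖S x‖ ^ 2 := by
    rw [Finset.sum_congr rfl (fun m hm => hRm m (Finset.mem_range.mp hm))]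
    rw [Finset.sum_sub_distrib, Finset.sum_neg_distrib, hDcube, hswap, ← hCcube]
    rw [hSexp2, Finset.sum_range_succ (fun m => T m m) n]
    ring
  have hLHS : ∫ x in Ioo a b, (A n x) ^ 2 * ‖iteratedDeriv n f x‖ ^ 2 = T n n := by
    rw [hT]
    apply MeasureTheory.setIntegral_congr_fun measurableSet_Ioo
    intro x _
    show (A n x) ^ 2 * ‖iteratedDeriv n f x‖ ^ 2
      = A n x * A n x * (iteratedDeriv n f x * (starRingEnd ℂ) (iteratedDeriv n f x)).re
    rw [re_mul_conj_self]
    ring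
  rw [ge_iff_le, hsum, hLHS]
  linarith [hSpos]
end

section
/- Let (a,b) ⊆ ℝ be a nonempty open interval (possibly unbounded). Let a_0, a_1 : (a,b) → ℝ be continuous functions such that the product a_0·a_1 is continuously differentiable on (a,b). Then for every complex-valued f ∈ C_0^∞((a,b)) one has ∫_a^b a_1(x)² |f'(x)|² dx ≥ ∫_a^b ( −a_0(x)² + (a_0 a_1)'(x) ) |f(x)|² dx. -/
open MeasureTheory Set

theorem stmt_1 (a b : ℝ) (hab : a < b) (a0 a1 : ℝ → ℝ)
    (h0 : ContinuousOn a0 (Ioo a b)) (h1 : ContinuousOn a1 (Ioo a b))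
    (hprod : ContDiffOn ℝ 1 (fun x => a0 x * a1 x) (Ioo a b))
    (f : ℝ → ℂ) (hf : ContDiff ℝ (⊤ : ℕ∞) f) (hsupp : HasCompactSupport f)
    (hsub : tsupport f ⊆ Ioo a b) :
    ∫ x in Ioo a b, (a1 x) ^ 2 * ‖deriv f x‖ ^ 2
      ≥ ∫ x in Ioo a b,
          (-(a0 x) ^ 2 + derivWithin (fun y => a0 y * a1 y) (Ioo a b) x) * ‖f x‖ ^ 2 := by
  set K := tsupport f with hK
  have hKc : IsCompact K := hsupp
  have hIoo : MeasurableSet (Ioo a b) := measurableSet_Ioo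
  have hfd : Differentiable ℝ f := hf.differentiable (by simp)
  set p : ℝ → ℝ := fun x => a0 x * a1 x with hpdef
  set dW : ℝ → ℝ := derivWithin p (Ioo a b) with hdW
  set u : ℝ → ℝ := fun x => (f x).re with hu
  set v : ℝ → ℝ := fun x => (f x).im with hv
  set u' : ℝ → ℝ := fun x => (deriv f x).re with hu'
  set v' : ℝ → ℝ := fun x => (deriv f x).im with hv'
  have hud : ∀ x, HasDerivAt u (u' x) x := fun x =>
    Complex.reCLM.hasFDerivAt.comp_hasDerivAt x (hfd x).hasDerivAt
  have hvd : ∀ x, HasDerivAt v (v' x) x := fun x =>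
    Complex.imCLM.hasFDerivAt.comp_hasDerivAt x (hfd x).hasDerivAt
  have hnorm : ∀ x, ‖f x‖ ^ 2 = u x ^ 2 + v x ^ 2 := fun x => by
    simp [hu, hv, Complex.sq_norm, Complex.normSq_apply]; ring
  have hnorm' : ∀ x, ‖deriv f x‖ ^ 2 = u' x ^ 2 + v' x ^ 2 := fun x => by
    simp [hu', hv', Complex.sq_norm, Complex.normSq_apply]; ring
  set g : ℝ → ℝ := fun x => u x ^ 2 + v x ^ 2 with hg
  have hgsmooth : ContDiff ℝ 1 g :=
    (((Complex.reCLM.contDiff.comp hf).pow 2).add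
      ((Complex.imCLM.contDiff.comp hf).pow 2)).of_le (by simp)
  have hgd : ∀ x, HasDerivAt g (2 * u x * u' x + 2 * v x * v' x) x := fun x => by
    have := ((hud x).pow 2).add ((hvd x).pow 2)
    exact this.congr_deriv (by norm_num)
  -- zero off K facts
  have hfz : ∀ x ∉ K, f x = 0 := fun x hx => image_eq_zero_of_notMem_tsupport hx
  have hdfz : ∀ x ∉ K, deriv f x = 0 := fun x hx => by
    by_contra h
    exact hx (support_deriv_subset (Function.mem_support.mpr h))
  have hgz : ∀ x ∉ K, g x = 0 := fun x hx => by simp [hg, hu, hv, hfz x hx]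
  -- F and its properties
  set F : ℝ → ℝ := fun x => p x * g x with hF
  have hFz : ∀ x ∉ K, F x = 0 := fun x hx => by simp [hF, hgz x hx]
  have hFsupp : HasCompactSupport F := HasCompactSupport.intro hKc hFz
  have hFC1 : ContDiff ℝ 1 F := by
    rw [contDiff_iff_contDiffAt]
    intro x
    by_cases hx : x ∈ Ioo a b
    · exact (hprod.contDiffAt (Ioo_mem_nhds hx.1 hx.2)).mul hgsmooth.contDiffAt
    · have hx' : x ∉ K := fun h => hx (hsub h)
      have hev : F =ᶠ[nhds x] (fun _ => 0) :=
        Filter.eventuallyEq_of_mem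
          ((isClosed_tsupport f).isOpen_compl.mem_nhds hx') (fun y hy => hFz y hy)
      exact (contDiffAt_const (c := (0:ℝ))).congr_of_eventuallyEq hev
  have hFderiv : ∀ x ∈ Ioo a b,
      HasDerivAt F (dW x * g x + p x * (2 * u x * u' x + 2 * v x * v' x)) x := by
    intro x hx
    have hp : HasDerivAt p (dW x) x :=
      ((hprod.differentiableOn one_ne_zero x hx).hasDerivWithinAt).hasDerivAt
        (Ioo_mem_nhds hx.1 hx.2)
    exact hp.mul (hgd x)
  -- integral of deriv F is zero
  have hintF : ∫ x, deriv F x = 0 := by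
    rw [← intervalIntegral.integral_Iic_add_Ioi (b := (0:ℝ))
      ((hFC1.continuous_deriv le_rfl).integrable_of_hasCompactSupport hFsupp.deriv).integrableOn
      ((hFC1.continuous_deriv le_rfl).integrable_of_hasCompactSupport hFsupp.deriv).integrableOn]
    rw [hFsupp.integral_Iic_deriv_eq hFC1, hFsupp.integral_Ioi_deriv_eq hFC1]
    ring
  have hderivFz : ∀ x ∉ Ioo a b, deriv F x = 0 := by
    intro x hx
    have hx' : x ∉ K := fun h => hx (hsub h)
    have hev : F =ᶠ[nhds x] (fun _ => (0:ℝ)) :=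
      Filter.eventuallyEq_of_mem
        ((isClosed_tsupport f).isOpen_compl.mem_nhds hx') (fun y hy => hFz y hy)
    rw [hev.deriv_eq]; simp
  have hzero : ∫ x in Ioo a b, deriv F x = 0 := by
    rw [setIntegral_eq_integral_of_forall_compl_eq_zero hderivFz]; exact hintF
  -- integrability helper
  have key : ∀ (h : ℝ → ℝ), ContinuousOn h (Ioo a b) → (∀ x ∉ K, h x = 0) →
      IntegrableOn h (Ioo a b) := by
    intro h hc hz
    have hKint : IntegrableOn h K := (hc.mono hsub).integrableOn_compact hKc
    have heq : h = K.indicator h := by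
      funext x
      by_cases hx : x ∈ K
      · simp [Set.indicator_of_mem hx]
      · simp [Set.indicator_of_notMem hx, hz x hx]
    rw [heq]
    exact (hKint.integrable_indicator hKc.measurableSet).integrableOn
  -- continuity of dW on Ioo
  have hdWc : ContinuousOn dW (Ioo a b) :=
    hprod.continuousOn_derivWithin isOpen_Ioo.uniqueDiffOn le_rfl
  have hdfc : Continuous (deriv f) := hf.continuous_deriv (by simp)
  have huc : Continuous u := Complex.continuous_re.comp hf.continuous
  have hvc : Continuous v := Complex.continuous_im.comp hf.continuous
  have hu'c : Continuous u' := Complex.continuous_re.comp hdfc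
  have hv'c : Continuous v' := Complex.continuous_im.comp hdfc
  -- integrands
  set q1 : ℝ → ℝ := fun x => a1 x ^ 2 * ‖deriv f x‖ ^ 2 with hq1
  set q2 : ℝ → ℝ := fun x => (-(a0 x) ^ 2 + dW x) * ‖f x‖ ^ 2 with hq2
  set D : ℝ → ℝ := fun x => dW x * g x + p x * (2 * u x * u' x + 2 * v x * v' x) with hD
  have hq1int : IntegrableOn q1 (Ioo a b) := by
    apply key
    · exact ((h1.pow 2).mul ((hdfc.norm.pow 2).continuousOn))
    · intro x hx; simp [hq1, hdfz x hx]
  have hq2int : IntegrableOn q2 (Ioo a b) := by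
    apply key
    · exact ((((h0.pow 2).neg).add hdWc).mul ((hf.continuous.norm.pow 2).continuousOn))
    · intro x hx; simp [hq2, hfz x hx]
  have hDint : IntegrableOn D (Ioo a b) := by
    apply key
    · apply ((hdWc.mul hgsmooth.continuous.continuousOn).add
        ((h0.mul h1).mul (((continuous_const.mul huc).mul hu'c).add
          ((continuous_const.mul hvc).mul hv'c)).continuousOn))
    · intro x hx
      have h1 := hfz x hx; have h2 := hdfz x hx
      simp [hD, hu, hv, hu', hv', h1, h2, hgz x hx]
  have hDzero : ∫ x in Ioo a b, D x = 0 := by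
    rw [setIntegral_congr_fun hIoo (fun x hx => ((hFderiv x hx).deriv).symm)] at *
    exact hzero
  -- main inequality
  rw [ge_iff_le, ← sub_nonneg, ← integral_sub hq1int hq2int]
  have hsum : ∫ x in Ioo a b, (q1 x - q2 x + D x)
      = (∫ x in Ioo a b, (q1 x - q2 x)) + ∫ x in Ioo a b, D x :=
    integral_add (hq1int.sub hq2int : IntegrableOn (fun x => q1 x - q2 x) _ _) hDint
  have hpos : (0:ℝ) ≤ ∫ x in Ioo a b, (q1 x - q2 x + D x) := by
    apply setIntegral_nonneg hIoo
    intro x hx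
    have h1 := hnorm x
    have h2 := hnorm' x
    have e1 := sq_nonneg (a1 x * u' x + a0 x * u x)
    have e2 := sq_nonneg (a1 x * v' x + a0 x * v x)
    simp only [hq1, hq2, hD, hg, hpdef, h1, h2]
    nlinarith [h1, h2, e1, e2]
  rw [hsum, hDzero, add_zero] at hpos
  exact hpos
end

section
/- Let n ≥ 1, let (a,b) ⊆ ℝ be a nonempty open interval, and let f : (a,b) → ℝ be n-times continuously differentiable. Then for all x ∈ (a,b), 2 f(x) f^{(n)}(x) = Σ_{k=0}^{⌊n/2⌋} t_{n,k} · ( (f^{(k)})² )^{(n−2k)}(x). -/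
/-!
The coefficients satisfy `t (n+2) (k+1) = t (n+1) (k+1) - t n k`, by Pascal's rule.
Differentiating the identity of order `n + 1` for `f` gives `2 f' f^{(n+1)} + 2 f f^{(n+2)}` on
the left, and `2 f' f^{(n+1)}` is the left side of the identity of order `n` for `f'`, whose right
side is the order-`n` sum with every `k` shifted to `k + 1`. Subtracting the two identities and
using the recurrence gives the identity of order `n + 2`; the cases `n = 0, 1` are `2 f f = 2 f²`
and `2 f f' = (f²)'`.
-/

open Set

lemma tcoef_zero_right_s3 {n : ℕ} (hn : n ≠ 0) : tcoef n 0 = 1 := by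
  simp [tcoef, hn]

lemma tcoef_eq_zero_of_lt {n k : ℕ} (hk : n / 2 < k) : tcoef n k = 0 := by
  simp only [tcoef, if_neg (show k ≠ 0 by omega), if_neg (show ¬k ≤ n / 2 by omega)]

lemma tcoef_two_mul_add (j m : ℕ) :
    tcoef (2 * (j + 1) + m) (j + 1)
      = (-1) ^ (j + 1) * (((j + 1 + m).choose (j + 1) : ℤ) + ((j + m).choose j : ℤ)) := by
  rw [tcoef, if_neg j.succ_ne_zero, if_pos (by omega), Nat.add_sub_cancel,
    show 2 * (j + 1) + m - (j + 1) = j + 1 + m by omega, show j + 1 + m - 1 = j + m by omega]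

lemma tcoef_add_two_succ {n k : ℕ} (hk : k ≤ n / 2) :
    tcoef (n + 2) (k + 1) = tcoef (n + 1) (k + 1) - tcoef n k := by
  rcases k with _ | j
  · rcases n with _ | m
    · decide
    · rw [show m + 1 + 2 = 2 * (0 + 1) + (m + 1) by ring,
        show m + 1 + 1 = 2 * (0 + 1) + m by ring, tcoef_two_mul_add, tcoef_two_mul_add,
        tcoef_zero_right_s3 m.succ_ne_zero]
      simp only [zero_add, Nat.choose_one_right, Nat.choose_zero_right]
      push_cast
      ring
  · obtain ⟨m, rfl⟩ := Nat.exists_eq_add_of_le (show 2 * (j + 1) ≤ n by omega)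
    rcases m with _ | m
    · rw [tcoef_eq_zero_of_lt (by omega : (2 * (j + 1) + 0 + 1) / 2 < j + 1 + 1),
        show 2 * (j + 1) + 0 + 2 = 2 * (j + 1 + 1) + 0 by ring, tcoef_two_mul_add,
        tcoef_two_mul_add]
      simp only [add_zero, Nat.choose_self]
      ring
    · rw [show 2 * (j + 1) + (m + 1) + 2 = 2 * (j + 1 + 1) + (m + 1) by ring,
        show 2 * (j + 1) + (m + 1) + 1 = 2 * (j + 1 + 1) + m by ring, tcoef_two_mul_add,
        tcoef_two_mul_add, tcoef_two_mul_add]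
      have pascal₁ := Nat.choose_succ_succ' (j + m + 2) (j + 1)
      have pascal₂ := Nat.choose_succ_succ' (j + m + 1) j
      ring_nf at pascal₁ pascal₂ ⊢
      push_cast [pascal₁, pascal₂]
      ring

lemma sum_tcoef_add_two {R : Type*} [Ring R] (n : ℕ) (G : ℕ → R) :
    ∑ k ∈ Finset.range ((n + 2) / 2 + 1), (tcoef (n + 2) k : R) * G k
      = ∑ k ∈ Finset.range ((n + 1) / 2 + 1), (tcoef (n + 1) k : R) * G k
        - ∑ k ∈ Finset.range (n / 2 + 1), (tcoef n k : R) * G (k + 1) := by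
  have hpad : ∑ k ∈ Finset.range ((n + 1) / 2 + 1), (tcoef (n + 1) k : R) * G k
      = ∑ k ∈ Finset.range (n / 2 + 1 + 1), (tcoef (n + 1) k : R) * G k := by
    refine Finset.sum_subset (Finset.range_subset_range.mpr (by omega)) fun k hk hk' => ?_
    simp only [Finset.mem_range] at hk hk'
    rw [tcoef_eq_zero_of_lt (by omega), Int.cast_zero, zero_mul]
  rw [hpad, show (n + 2) / 2 + 1 = n / 2 + 1 + 1 by omega,
    Finset.sum_range_succ' (fun k => (tcoef (n + 2) k : R) * G k),
    Finset.sum_range_succ' (fun k => (tcoef (n + 1) k : R) * G k),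
    tcoef_zero_right_s3 (by omega), tcoef_zero_right_s3 (by omega),
    add_sub_right_comm, ← Finset.sum_sub_distrib]
  congr 1
  refine Finset.sum_congr rfl fun k hk => ?_
  rw [tcoef_add_two_succ (Nat.lt_succ_iff.mp (Finset.mem_range.mp hk)), Int.cast_sub, sub_mul]

section IteratedDerivWithin

variable {𝕜 : Type*} [NontriviallyNormedField 𝕜] {s : Set 𝕜} {f : 𝕜 → 𝕜} {x : 𝕜}

lemma ContDiffOn.iteratedDerivWithin {m k : ℕ} (hf : ContDiffOn 𝕜 (m + k : ℕ) f s)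
    (hs : UniqueDiffOn 𝕜 s) : ContDiffOn 𝕜 m (iteratedDerivWithin k f s) s := by
  induction k generalizing f with
  | zero => simpa using hf
  | succ k ih =>
    rw [iteratedDerivWithin_succ']
    exact ih (hf.derivWithin hs (by norm_cast))

lemma derivWithin_two_mul_mul_iteratedDerivWithin {m : ℕ}
    (hf : DifferentiableWithinAt 𝕜 f s x)
    (hfm : DifferentiableWithinAt 𝕜 (iteratedDerivWithin m f s) s x) :
    derivWithin (fun y => 2 * f y * iteratedDerivWithin m f s y) s x
      = 2 * derivWithin f s x * iteratedDerivWithin m f s x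
        + 2 * f x * iteratedDerivWithin (m + 1) f s x := by
  rw [derivWithin_fun_mul (hf.const_mul 2) hfm, derivWithin_const_mul 2 hf,
    iteratedDerivWithin_succ]

lemma derivWithin_sum_mul_iteratedDerivWithin_sq {m : ℕ} (c : ℕ → 𝕜)
    (hf : ContDiffOn 𝕜 (m + 1 : ℕ) f s) (hs : UniqueDiffOn 𝕜 s) (hx : x ∈ s) :
    derivWithin (fun y => ∑ k ∈ Finset.range (m / 2 + 1),
        c k * iteratedDerivWithin (m - 2 * k) (fun z => iteratedDerivWithin k f s z ^ 2) s y) s x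
      = ∑ k ∈ Finset.range (m / 2 + 1),
          c k * iteratedDerivWithin (m + 1 - 2 * k)
            (fun z => iteratedDerivWithin k f s z ^ 2) s x := by
  have hdiff : ∀ k ∈ Finset.range (m / 2 + 1), DifferentiableWithinAt 𝕜
      (iteratedDerivWithin (m - 2 * k) (fun z => iteratedDerivWithin k f s z ^ 2) s) s x := by
    intro k hk
    have hkm : 2 * k ≤ m := by have := Finset.mem_range.mp hk; omega
    have hsq : ContDiffOn 𝕜 (m + 1 - k : ℕ) (fun z => iteratedDerivWithin k f s z ^ 2) s :=
      ((hf.of_le (by norm_cast; omega)).iteratedDerivWithin (m := m + 1 - k) hs).pow 2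
    exact hsq.differentiableOn_iteratedDerivWithin (by norm_cast; omega) hs x hx
  rw [derivWithin_fun_sum fun k hk => (hdiff k hk).const_mul _]
  refine Finset.sum_congr rfl fun k hk => ?_
  rw [derivWithin_const_mul _ (hdiff k hk), ← iteratedDerivWithin_succ,
    show m - 2 * k + 1 = m + 1 - 2 * k by have := Finset.mem_range.mp hk; omega]

theorem two_mul_mul_iteratedDerivWithin_eq_sum (hs : UniqueDiffOn 𝕜 s) {n : ℕ}
    (hf : ContDiffOn 𝕜 n f s) (hx : x ∈ s) :
    2 * f x * iteratedDerivWithin n f s x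
      = ∑ k ∈ Finset.range (n / 2 + 1), (tcoef n k : 𝕜) *
          iteratedDerivWithin (n - 2 * k) (fun y => iteratedDerivWithin k f s y ^ 2) s x := by
  induction n using Nat.twoStepInduction generalizing f x with
  | zero =>
    rw [Finset.sum_range_one]
    simp only [mul_zero, Nat.sub_zero, iteratedDerivWithin_zero, show tcoef 0 0 = 2 from rfl]
    push_cast
    ring
  | one =>
    have hfx : DifferentiableWithinAt 𝕜 f s x := hf.differentiableOn (by simp) x hx
    simp [tcoef, derivWithin_fun_pow hfx]
  | more n ih₀ ih₁ =>
    have hf₁ : ContDiffOn 𝕜 (n + 1 : ℕ) f s := hf.of_le (by norm_cast; omega)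
    have h₁ : derivWithin (fun y => 2 * f y * iteratedDerivWithin (n + 1) f s y) s x
        = derivWithin (fun y => ∑ k ∈ Finset.range ((n + 1) / 2 + 1), (tcoef (n + 1) k : 𝕜) *
          iteratedDerivWithin (n + 1 - 2 * k) (fun z => iteratedDerivWithin k f s z ^ 2) s y) s x :=
      derivWithin_congr (fun y hy => ih₁ hf₁ hy) (ih₁ hf₁ hx)
    rw [derivWithin_two_mul_mul_iteratedDerivWithin (hf.differentiableOn (by simp) x hx)
        (hf.differentiableOn_iteratedDerivWithin (by norm_cast; omega) hs x hx),
      derivWithin_sum_mul_iteratedDerivWithin_sq _ hf hs hx] at h₁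
    have h₀ := ih₀ (hf.derivWithin hs (by norm_cast; omega)) hx
    simp only [← iteratedDerivWithin_succ'] at h₀
    rw [sum_tcoef_add_two n fun k =>
      iteratedDerivWithin (n + 2 - 2 * k) (fun y => iteratedDerivWithin k f s y ^ 2) s x]
    simp only [show ∀ k, n + 2 - 2 * (k + 1) = n - 2 * k from fun k => by omega]
    linear_combination h₁ - h₀

end IteratedDerivWithin

theorem stmt_3_general (n : ℕ) (a b : ℝ) (f : ℝ → ℝ)
    (hf : ContDiffOn ℝ n f (Ioo a b)) :
    ∀ x ∈ Ioo a b,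
      2 * f x * iteratedDerivWithin n f (Ioo a b) x
        = ∑ k ∈ Finset.range (n / 2 + 1), (tcoef n k : ℝ) *
            iteratedDerivWithin (n - 2 * k)
              (fun y => (iteratedDerivWithin k f (Ioo a b) y) ^ 2) (Ioo a b) x :=
  fun _ hx => two_mul_mul_iteratedDerivWithin_eq_sum (uniqueDiffOn_Ioo a b) hf hx

theorem stmt_3 (n : ℕ) (hn : 1 ≤ n) (a b : ℝ) (hab : a < b) (f : ℝ → ℝ)
    (hf : ContDiffOn ℝ n f (Ioo a b)) :
    ∀ x ∈ Ioo a b,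
      2 * f x * iteratedDerivWithin n f (Ioo a b) x
        = ∑ k ∈ Finset.range (n / 2 + 1), (tcoef n k : ℝ) *
            iteratedDerivWithin (n - 2 * k)
              (fun y => (iteratedDerivWithin k f (Ioo a b) y) ^ 2) (Ioo a b) x :=
  stmt_3_general n a b f hf
end

section
/- Let n ≥ 1, let (a,b) ⊆ ℝ be a nonempty open interval, and let f : (a,b) → ℝ be n-times continuously differentiable. Then for all x ∈ (a,b), Σ_{k=0}^{⌊n/2⌋} (−1)^k C(n−k, k) · ( (f^{(k)})² )^{(n−2k)}(x) = Σ_{ℓ=0}^{n} f^{(n−ℓ)}(x) f^{(ℓ)}(x). -/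
/-!
By Leibniz's rule the `(n - 2k)`-th derivative of `(f^{(k)})²` is
`∑ᵢ C(n-2k, i) f^{(k+i)} f^{(n-k-i)}`. Collecting the coefficient of `f^{(l)} f^{(n-l)}` on the
left-hand side gives `∑ₖ (-1)^k C(l, k) C(n-k, l)`, which is the `l`-th forward difference of
`m ↦ C(m, l)` at `n - l`, hence equal to `1`.
-/

open Finset

theorem alternating_sum_range_choose_mul_choose {n l : ℕ} (hl : l ≤ n) :
    ∑ k ∈ range (l + 1), (-1 : ℤ) ^ k * l.choose k * (n - k).choose l = 1 := by
  have h := congrFun (fwdDiff_iter_choose 0 l) (n - l)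
  rw [fwdDiff_iter_eq_sum_shift] at h
  simp only [smul_eq_mul, mul_one, add_zero, Nat.choose_zero_right, Nat.cast_one] at h
  rw [← sum_range_reflect]
  refine Eq.trans (sum_congr rfl fun j hj => ?_) h
  have hj : j ≤ l := Nat.lt_succ_iff.mp (mem_range.mp hj)
  rw [Nat.add_sub_cancel, Nat.choose_symm hj, show n - (l - j) = n - l + j by omega]

theorem Nat.choose_mul_choose_sub_eq_zero {n l k : ℕ} (h : l < k ∨ n - k < l) :
    l.choose k * (n - k).choose l = 0 := by
  rcases h with h | h <;> simp [Nat.choose_eq_zero_of_lt h]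

theorem alternating_sum_range_half_choose_mul_choose {n l : ℕ} (hl : l ≤ n) :
    ∑ k ∈ range (n / 2 + 1), (-1 : ℤ) ^ k * l.choose k * (n - k).choose l = 1 := by
  have hvanish : ∀ k, l < k ∨ n / 2 < k → (-1 : ℤ) ^ k * l.choose k * (n - k).choose l = 0 := by
    intro k hk
    rw [mul_assoc, ← Nat.cast_mul, Nat.choose_mul_choose_sub_eq_zero (by omega), Nat.cast_zero,
      mul_zero]
  calc ∑ k ∈ range (n / 2 + 1), (-1 : ℤ) ^ k * l.choose k * (n - k).choose l
      = ∑ k ∈ range (n + 1), (-1 : ℤ) ^ k * l.choose k * (n - k).choose l :=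
        sum_subset (range_subset_range.mpr (by omega))
          fun k _ hk => hvanish k (Or.inr (by simpa using hk))
    _ = ∑ k ∈ range (l + 1), (-1 : ℤ) ^ k * l.choose k * (n - k).choose l :=
        (sum_subset (range_subset_range.mpr (by omega))
          fun k _ hk => hvanish k (Or.inl (by simpa using hk))).symm
    _ = 1 := alternating_sum_range_choose_mul_choose hl

section Ring

variable {R : Type*} [Ring R]

theorem choose_sub_mul_sum_choose_mul_shift {n k : ℕ} (hk : 2 * k ≤ n) (w : ℕ → ℕ → R) :
    ((n - k).choose k : R) *
        ∑ i ∈ range (n - 2 * k + 1), ((n - 2 * k).choose i : R) * w (i + k) (n - 2 * k - i + k)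
      = ∑ l ∈ range (n + 1), ((l.choose k * (n - k).choose l : ℕ) : R) * w l (n - l) := by
  have hsub : Ico k (n - k + 1) ⊆ range (n + 1) := by
    intro l; simp only [mem_Ico, mem_range]; omega
  rw [← sum_subset hsub fun l _ hl => by
    rw [Nat.choose_mul_choose_sub_eq_zero (by simp only [mem_Ico] at hl; omega), Nat.cast_zero,
      zero_mul],
    sum_Ico_eq_sum_range, show n - k + 1 - k = n - 2 * k + 1 by omega, mul_sum]
  refine sum_congr rfl fun i hi => ?_
  have hi : i ≤ n - 2 * k := Nat.lt_succ_iff.mp (mem_range.mp hi)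
  have hchoose : (k + i).choose k * (n - k).choose (k + i)
      = (n - k).choose k * (n - 2 * k).choose i := by
    rw [mul_comm, Nat.choose_mul (Nat.le_add_right k i), Nat.add_sub_cancel_left,
      show n - k - k = n - 2 * k by omega]
  rw [hchoose, Nat.cast_mul, mul_assoc, add_comm i k, show n - 2 * k - i + k = n - (k + i) by omega]

theorem sum_alternating_choose_mul_sum_choose_mul (n : ℕ) (w : ℕ → ℕ → R) :
    ∑ k ∈ range (n / 2 + 1), (-1 : R) ^ k * (n - k).choose k *
        ∑ i ∈ range (n - 2 * k + 1), ((n - 2 * k).choose i : R) * w (i + k) (n - 2 * k - i + k)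
      = ∑ l ∈ range (n + 1), w l (n - l) := by
  calc _ = ∑ k ∈ range (n / 2 + 1), ∑ l ∈ range (n + 1),
          (-1 : R) ^ k * ((l.choose k * (n - k).choose l : ℕ) : R) * w l (n - l) := by
        refine sum_congr rfl fun k hk => ?_
        have hk : 2 * k ≤ n := by have := mem_range.mp hk; omega
        rw [mul_assoc, choose_sub_mul_sum_choose_mul_shift hk, mul_sum]
        simp only [mul_assoc]
    _ = ∑ l ∈ range (n + 1), ((∑ k ∈ range (n / 2 + 1),
          (-1 : ℤ) ^ k * l.choose k * (n - k).choose l : ℤ) : R) * w l (n - l) := by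
        rw [sum_comm]
        push_cast [sum_mul, mul_assoc]
        rfl
    _ = _ := sum_congr rfl fun l hl => by
        rw [alternating_sum_range_half_choose_mul_choose (Nat.lt_succ_iff.mp (mem_range.mp hl)),
          Int.cast_one, one_mul]

end Ring

section Calculus

variable {𝕜 : Type*} [NontriviallyNormedField 𝕜] {F : Type*} [NormedAddCommGroup F]
  [NormedSpace 𝕜 F]

theorem iteratedDerivWithin_iteratedDerivWithin (i k : ℕ) (f : 𝕜 → F) (s : Set 𝕜) :
    iteratedDerivWithin i (iteratedDerivWithin k f s) s = iteratedDerivWithin (i + k) f s := by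
  have h (j : ℕ) (g : 𝕜 → F) : iteratedDerivWithin j g s = (derivWithin · s)^[j] g :=
    funext fun _ => iteratedDerivWithin_eq_iterate
  rw [h, h, h, Function.iterate_add_apply]

theorem ContDiffWithinAt.iteratedDerivWithin_right {n m : WithTop ℕ∞} {i : ℕ} {f : 𝕜 → F}
    {s : Set 𝕜} {x : 𝕜} (hf : ContDiffWithinAt 𝕜 n f s x) (hs : UniqueDiffOn 𝕜 s)
    (hmn : m + i ≤ n) (hx : x ∈ s) : ContDiffWithinAt 𝕜 m (iteratedDerivWithin i f s) s x := by
  rw [iteratedDerivWithin_eq_equiv_comp]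
  exact (LinearIsometryEquiv.contDiff _).comp_contDiffWithinAt
    (hf.iteratedFDerivWithin_right hs hmn hx)

theorem iteratedDerivWithin_sq_iteratedDerivWithin {𝔸 : Type*} [NormedRing 𝔸] [NormedAlgebra 𝕜 𝔸]
    {m k : ℕ} {f : 𝕜 → 𝔸} {s : Set 𝕜} {x : 𝕜} (hs : UniqueDiffOn 𝕜 s) (hx : x ∈ s)
    (hf : ContDiffWithinAt 𝕜 (m + k) f s x) :
    iteratedDerivWithin m (fun y => iteratedDerivWithin k f s y ^ 2) s x
      = ∑ i ∈ range (m + 1), (m.choose i : 𝔸) * iteratedDerivWithin (i + k) f s x *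
          iteratedDerivWithin (m - i + k) f s x := by
  have hg : ContDiffWithinAt 𝕜 m (iteratedDerivWithin k f s) s x :=
    hf.iteratedDerivWithin_right hs (by norm_cast) hx
  simp only [sq]
  rw [← Pi.mul_def, iteratedDerivWithin_mul hx hs hg hg]
  simp only [iteratedDerivWithin_iteratedDerivWithin]

end Calculus

open Set

theorem stmt_4_general (n : ℕ) (a b : ℝ) (f : ℝ → ℝ)
    (hf : ContDiffOn ℝ n f (Ioo a b)) :
    ∀ x ∈ Ioo a b,
      ∑ k ∈ Finset.range (n / 2 + 1), (-1 : ℝ) ^ k * (Nat.choose (n - k) k : ℝ) *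
          iteratedDerivWithin (n - 2 * k)
            (fun y => (iteratedDerivWithin k f (Ioo a b) y) ^ 2) (Ioo a b) x
        = ∑ l ∈ Finset.range (n + 1),
            iteratedDerivWithin (n - l) f (Ioo a b) x * iteratedDerivWithin l f (Ioo a b) x := by
  intro x hx
  rw [← sum_alternating_choose_mul_sum_choose_mul n
    fun p q => iteratedDerivWithin q f (Ioo a b) x * iteratedDerivWithin p f (Ioo a b) x]
  refine sum_congr rfl fun k hk => ?_
  have hk : n - 2 * k + k ≤ n := by simp only [Finset.mem_range] at hk; omega
  rw [iteratedDerivWithin_sq_iteratedDerivWithin isOpen_Ioo.uniqueDiffOn hx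
    ((hf x hx).of_le (by exact_mod_cast hk))]
  exact congrArg _ (sum_congr rfl fun i _ => by ring)

theorem stmt_4 (n : ℕ) (hn : 1 ≤ n) (a b : ℝ) (hab : a < b) (f : ℝ → ℝ)
    (hf : ContDiffOn ℝ n f (Ioo a b)) :
    ∀ x ∈ Ioo a b,
      ∑ k ∈ Finset.range (n / 2 + 1), (-1 : ℝ) ^ k * (Nat.choose (n - k) k : ℝ) *
          iteratedDerivWithin (n - 2 * k)
            (fun y => (iteratedDerivWithin k f (Ioo a b) y) ^ 2) (Ioo a b) x
        = ∑ l ∈ Finset.range (n + 1),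
            iteratedDerivWithin (n - l) f (Ioo a b) x * iteratedDerivWithin l f (Ioo a b) x :=
  stmt_4_general n a b f hf
end

section
/- For every n ∈ ℕ₀ and every ℓ with 0 ≤ ℓ ≤ n, Σ_{k=0}^{⌊n/2⌋} (−1)^k C(n−k, k) C(n−2k, ℓ−k) = 1. -/
/-!
Trinomial revision `C(n-k, k) C(n-2k, l-k) = C(n-k, l) C(l, k)` turns the sum into
`∑ (-1)^k C(l, k) C(n-k, l)`, the `l`-th backward difference at `n` of `x ↦ C(x, l)`.
Since `Δ C(x, j+1) = C(x, j)`, that difference is `C(x, 0) = 1`.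
-/

open Finset

theorem sum_range_neg_one_pow_mul_choose_mul_choose_sub_eq_one {l n : ℕ} (hl : l ≤ n) :
    ∑ k ∈ range (l + 1), (-1 : ℤ) ^ k * l.choose k * (n - k).choose l = 1 := by
  have h := congr_fun (fwdDiff_iter_choose 0 l) (n - l)
  rw [fwdDiff_iter_eq_sum_shift, ← sum_range_reflect] at h
  simp only [add_zero, Nat.choose_zero_right, Nat.cast_one] at h
  refine Eq.trans (sum_congr rfl fun k hk ↦ ?_) h
  rw [mem_range] at hk
  rw [smul_eq_mul, show l + 1 - 1 - k = l - k by omega, Nat.sub_sub_self (by omega),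
    Nat.choose_symm (by omega), smul_eq_mul, mul_one, show n - l + (l - k) = n - k by omega]

theorem choose_sub_mul_choose_sub_two_mul {l n k : ℕ} (hk : k ≤ l) :
    (n - k).choose k * (n - 2 * k).choose (l - k) = (n - k).choose l * l.choose k := by
  rw [Nat.choose_mul hk, two_mul, Nat.sub_add_eq]

theorem stmt_5 (n l : ℕ) (hl : l ≤ n) :
    ∑ k ∈ Finset.range (n / 2 + 1),
        (if k ≤ l then
          (-1 : ℤ) ^ k * (Nat.choose (n - k) k : ℤ) * (Nat.choose (n - 2 * k) (l - k) : ℤ)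
        else 0) = 1 := by
  set f : ℕ → ℤ := fun k ↦ (-1 : ℤ) ^ k * l.choose k * (n - k).choose l
  have summand_eq (k : ℕ) : (if k ≤ l then
      (-1 : ℤ) ^ k * (Nat.choose (n - k) k : ℤ) * (Nat.choose (n - 2 * k) (l - k) : ℤ)
      else 0) = f k := by
    split_ifs with hk
    · rw [mul_assoc, ← Nat.cast_mul, choose_sub_mul_choose_sub_two_mul hk]
      push_cast; ring
    · simp [f, Nat.choose_eq_zero_of_lt (not_le.mp hk)]
  have f_eq_zero {k : ℕ} (hk : l < k ∨ n < 2 * k) : f k = 0 := by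
    by_cases hkl : l < k
    · simp [f, Nat.choose_eq_zero_of_lt hkl]
    · simp [f, Nat.choose_eq_zero_of_lt (show n - k < l by omega)]
  calc _ = ∑ k ∈ range (n / 2 + 1), f k := sum_congr rfl fun k _ ↦ summand_eq k
    _ = ∑ k ∈ range (n + 1), f k :=
      sum_subset (range_subset_range.mpr (by omega)) fun k _ hk ↦
        f_eq_zero (by rw [mem_range] at hk; omega)
    _ = ∑ k ∈ range (l + 1), f k :=
      (sum_subset (range_subset_range.mpr (by omega)) fun k _ hk ↦
        f_eq_zero (by rw [mem_range] at hk; omega)).symm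
    _ = 1 := sum_range_neg_one_pow_mul_choose_mul_choose_sub_eq_one hl
end

section
/- Let (a,b) ⊆ ℝ be a nonempty open interval (possibly unbounded), let a_1 : (a,b) → ℝ be continuously differentiable, let g : (a,b) → ℝ be continuous, and suppose u : (a,b) → ℝ is twice continuously differentiable with u(x) > 0 for all x ∈ (a,b) and satisfies the Sturm–Liouville equation −( a_1(x)² u'(x) )' − g(x) u(x) = 0 on (a,b). Then for every complex-valued f ∈ C_0^∞((a,b)) one has ∫_a^b a_1(x)² |f'(x)|² dx ≥ ∫_a^b g(x) |f(x)|² dx. -/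
open MeasureTheory Set

lemma aux_cont {s K : Set ℝ} (hs : IsOpen s) (hK : IsCompact K)
    (hKs : K ⊆ s) {G : ℝ → ℝ} (hG : ContinuousOn G s)
    (hG0 : ∀ x ∉ K, G x = 0) :
    Continuous G ∧ HasCompactSupport G := by
  constructor
  · rw [continuous_iff_continuousAt]
    intro x
    by_cases hx : x ∈ s
    · exact hG.continuousAt (hs.mem_nhds hx)
    · have hxK : x ∉ K := fun h => hx (hKs h)
      have hev : G =ᶠ[nhds x] (fun _ => 0) := by
        filter_upwards [hK.isClosed.isOpen_compl.mem_nhds hxK] with y hy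
        exact hG0 y hy
      exact ContinuousAt.congr (continuousAt_const) hev.symm
  · exact HasCompactSupport.intro hK hG0

lemma aux_int {s K : Set ℝ} (hs : IsOpen s) (hK : IsCompact K)
    (hKs : K ⊆ s) {G : ℝ → ℝ} (hG : ContinuousOn G s)
    (hG0 : ∀ x ∉ K, G x = 0) :
    IntegrableOn G s ∧ ∫ x in s, G x = ∫ x, G x := by
  obtain ⟨hc, hcs⟩ := aux_cont hs hK hKs hG hG0
  refine ⟨(hc.integrable_of_hasCompactSupport hcs).integrableOn, ?_⟩
  exact setIntegral_eq_integral_of_forall_compl_eq_zero fun x hx => hG0 x fun h => hx (hKs h)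

lemma aux_ftc {s K : Set ℝ} (hso : IsOpen s) (hK : IsCompact K) (hKs : K ⊆ s)
    (F : ℝ → ℝ) (hF1 : ContDiffOn ℝ 1 F s)
    (hF0 : ∀ x ∉ K, F x = 0) :
    ∫ x in s, deriv F x = 0 := by
  have hdFcont : ContinuousOn (deriv F) s :=
    hF1.continuousOn_deriv_of_isOpen hso le_rfl
  have hKc : IsOpen Kᶜ := hK.isClosed.isOpen_compl
  have hev0 : ∀ x ∉ K, F =ᶠ[nhds x] (fun _ => 0) := by
    intro x hx
    filter_upwards [hKc.mem_nhds hx] with y hy using hF0 y hy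
  have hdF0 : ∀ x ∉ K, deriv F x = 0 := by
    intro x hx
    rw [(hev0 x hx).deriv_eq]
    exact deriv_const x 0
  have hder : ∀ x, HasDerivAt F (deriv F x) x := by
    intro x
    by_cases hx : x ∈ s
    · exact ((hF1.contDiffAt (hso.mem_nhds hx)).differentiableAt one_ne_zero).hasDerivAt
    · have hxK : x ∉ K := fun h => hx (hKs h)
      rw [hdF0 x hxK]
      exact (hasDerivAt_const x (0:ℝ)).congr_of_eventuallyEq (hev0 x hxK)
  obtain ⟨hc, hcs⟩ := aux_cont hso hK hKs hdFcont hdF0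
  have hint : Integrable (deriv F) := hc.integrable_of_hasCompactSupport hcs
  obtain ⟨r, hr⟩ := hK.isBounded.subset_ball 0
  set c : ℝ := -(|r| + 1)
  set d : ℝ := |r| + 1
  have hcd : c ≤ d := by
    simp only [c, d]; linarith [abs_nonneg r]
  have hKcd : K ⊆ Ioo c d := by
    intro x hx
    have := hr hx
    rw [Real.ball_eq_Ioo] at this
    simp only [mem_Ioo] at this ⊢
    have h1 : r ≤ |r| := le_abs_self r
    constructor
    · show -(|r| + 1) < x; linarith [this.1]
    · show x < |r| + 1; linarith [this.2]
  have h1 : ∫ x in s, deriv F x = ∫ x, deriv F x :=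
    setIntegral_eq_integral_of_forall_compl_eq_zero fun x hx => hdF0 x fun h => hx (hKs h)
  have h2 : ∫ x, deriv F x = ∫ x in Ioc c d, deriv F x :=
    (setIntegral_eq_integral_of_forall_compl_eq_zero fun x hx =>
      hdF0 x fun h => hx (Ioo_subset_Ioc_self (hKcd h))).symm
  have h3 : ∫ x in Ioc c d, deriv F x = ∫ x in c..d, deriv F x :=
    (intervalIntegral.integral_of_le hcd).symm
  have h4 : ∫ x in c..d, deriv F x = F d - F c := by
    apply intervalIntegral.integral_deriv_eq_sub
    · exact fun x _ => (hder x).differentiableAt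
    · exact hint.intervalIntegrable
  have hFc : F c = 0 := hF0 c (fun h => lt_irrefl c (hKcd h).1)
  have hFd : F d = 0 := hF0 d (fun h => lt_irrefl d (hKcd h).2)
  rw [h1, h2, h3, h4, hFc, hFd, sub_zero]

lemma aux_real (a b : ℝ) (a1 g u : ℝ → ℝ)
    (ha1 : ContDiffOn ℝ 1 a1 (Ioo a b)) (hg : ContinuousOn g (Ioo a b))
    (hu : ContDiffOn ℝ 2 u (Ioo a b)) (hupos : ∀ x ∈ Ioo a b, 0 < u x)
    (hSL : ∀ x ∈ Ioo a b, deriv (fun y => a1 y ^ 2 * deriv u y) x = -(g x * u x))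
    (f : ℝ → ℝ) (hf : ContDiff ℝ (⊤ : ℕ∞) f) (hsupp : HasCompactSupport f)
    (hsub : tsupport f ⊆ Ioo a b) :
    ∫ x in Ioo a b, g x * f x ^ 2 ≤ ∫ x in Ioo a b, a1 x ^ 2 * deriv f x ^ 2 := by
  set s := Ioo a b with hs
  have hso : IsOpen s := isOpen_Ioo
  set K := tsupport f with hKdef
  have hK : IsCompact K := hsupp
  have hKs : K ⊆ s := hsub
  have hu' : ContDiffOn ℝ 1 (deriv u) s := hu.deriv_of_isOpen hso (by norm_num)
  have hune : ∀ x ∈ s, u x ≠ 0 := fun x hx => (hupos x hx).ne'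
  set h : ℝ → ℝ := fun y => f y / u y with hhdef
  have hh1 : ContDiffOn ℝ 1 h s :=
    ((hf.contDiffOn).of_le (by simp)).div (hu.of_le (by norm_num)) hune
  set F : ℝ → ℝ := fun y => a1 y ^ 2 * deriv u y * (u y * h y ^ 2) with hFdef
  have hF1 : ContDiffOn ℝ 1 F s :=
    ((ha1.pow 2).mul hu').mul ((hu.of_le (by norm_num)).mul (hh1.pow 2))
  have hf0 : ∀ x ∉ K, f x = 0 := fun x hx => image_eq_zero_of_notMem_tsupport hx
  have hh0 : ∀ x ∉ K, h x = 0 := fun x hx => by simp [hhdef, hf0 x hx]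
  have hF0 : ∀ x ∉ K, F x = 0 := fun x hx => by simp [hFdef, hh0 x hx]
  have hKc : IsOpen Kᶜ := hK.isClosed.isOpen_compl
  have key : ∀ x ∈ s,
      HasDerivAt h ((deriv f x * u x - f x * deriv u x) / u x ^ 2) x ∧
      HasDerivAt F
        (-(g x * u x) * (u x * h x ^ 2)
          + (a1 x ^ 2 * deriv u x) * (deriv u x * h x ^ 2
            + u x * (2 * h x ^ 1 * ((deriv f x * u x - f x * deriv u x) / u x ^ 2)))) x := by
    intro x hx
    have hxn : s ∈ nhds x := hso.mem_nhds hx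
    have hdu : HasDerivAt u (deriv u x) x :=
      (((hu.contDiffAt hxn).differentiableAt (by norm_num))).hasDerivAt
    have hdf : HasDerivAt f (deriv f x) x := (hf.differentiable (by simp) x).hasDerivAt
    have hdh : HasDerivAt h ((deriv f x * u x - f x * deriv u x) / u x ^ 2) x :=
      hdf.div hdu (hune x hx)
    refine ⟨hdh, ?_⟩
    have hdV : DifferentiableAt ℝ (fun y => a1 y ^ 2 * deriv u y) x := by
      have h1 : DifferentiableAt ℝ a1 x := (ha1.contDiffAt hxn).differentiableAt one_ne_zero
      have h2 : DifferentiableAt ℝ (deriv u) x := (hu'.contDiffAt hxn).differentiableAt one_ne_zero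
      exact (h1.pow 2).mul h2
    have hV : HasDerivAt (fun y => a1 y ^ 2 * deriv u y) (-(g x * u x)) x := by
      have := hdV.hasDerivAt
      rwa [hSL x hx] at this
    exact hV.mul (hdu.mul (hdh.pow 2))
  have hpt : ∀ x ∈ s,
      a1 x ^ 2 * deriv f x ^ 2 - g x * f x ^ 2
        = a1 x ^ 2 * u x ^ 2 * deriv h x ^ 2 + deriv F x := by
    intro x hx
    obtain ⟨hdh, hdF⟩ := key x hx
    rw [hdh.deriv, hdF.deriv]
    have hU : u x ≠ 0 := hune x hx
    simp only [hhdef]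
    field_simp
    ring
  -- integrability
  have hdf_cont : Continuous (deriv f) := hf.continuous_deriv (by simp)
  have hdf0 : ∀ x ∉ K, deriv f x = 0 := by
    intro x hx
    by_contra hne
    exact hx (support_deriv_subset (Function.mem_support.mpr hne))
  have hdh0 : ∀ x ∉ K, deriv h x = 0 := by
    intro x hx
    have hev : h =ᶠ[nhds x] (fun _ => 0) := by
      filter_upwards [hKc.mem_nhds hx] with y hy using hh0 y hy
    rw [hev.deriv_eq]; exact deriv_const x 0
  have hdF0 : ∀ x ∉ K, deriv F x = 0 := by
    intro x hx
    have hev : F =ᶠ[nhds x] (fun _ => 0) := by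
      filter_upwards [hKc.mem_nhds hx] with y hy using hF0 y hy
    rw [hev.deriv_eq]; exact deriv_const x 0
  obtain ⟨hPi, -⟩ := aux_int hso hK hKs
    (G := fun x => a1 x ^ 2 * deriv f x ^ 2)
    (((ha1.continuousOn).pow 2).mul ((hdf_cont.continuousOn).pow 2))
    (fun x hx => by simp [hdf0 x hx])
  obtain ⟨hQi, -⟩ := aux_int hso hK hKs
    (G := fun x => g x * f x ^ 2)
    (hg.mul (((hf.continuous).continuousOn).pow 2))
    (fun x hx => by simp [hf0 x hx])
  have hdh_cont : ContinuousOn (deriv h) s := hh1.continuousOn_deriv_of_isOpen hso le_rfl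
  obtain ⟨hWi, -⟩ := aux_int hso hK hKs
    (G := fun x => a1 x ^ 2 * u x ^ 2 * deriv h x ^ 2)
    ((((ha1.continuousOn).pow 2).mul ((hu.continuousOn).pow 2)).mul (hdh_cont.pow 2))
    (fun x hx => by simp [hdh0 x hx])
  obtain ⟨hDi, -⟩ := aux_int hso hK hKs (G := deriv F)
    (hF1.continuousOn_deriv_of_isOpen hso le_rfl) hdF0
  have hzero : ∫ x in s, deriv F x = 0 := aux_ftc hso hK hKs F hF1 hF0
  have hsplit : (∫ x in s, a1 x ^ 2 * deriv f x ^ 2) - ∫ x in s, g x * f x ^ 2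
      = ∫ x in s, (a1 x ^ 2 * u x ^ 2 * deriv h x ^ 2 + deriv F x) := by
    rw [← integral_sub hPi hQi]
    exact setIntegral_congr_fun hso.measurableSet (fun x hx => hpt x hx)
  have hadd : ∫ x in s, (a1 x ^ 2 * u x ^ 2 * deriv h x ^ 2 + deriv F x)
      = (∫ x in s, a1 x ^ 2 * u x ^ 2 * deriv h x ^ 2) + ∫ x in s, deriv F x :=
    integral_add hWi hDi
  have hWnn : 0 ≤ ∫ x in s, a1 x ^ 2 * u x ^ 2 * deriv h x ^ 2 :=
    setIntegral_nonneg hso.measurableSet (fun x _ => by positivity)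
  have := hsplit.trans (hadd.trans (by rw [hzero, add_zero]))
  linarith

theorem stmt_8 (a b : ℝ) (hab : a < b) (a1 g u : ℝ → ℝ)
    (ha1 : ContDiffOn ℝ 1 a1 (Ioo a b)) (hg : ContinuousOn g (Ioo a b))
    (hu : ContDiffOn ℝ 2 u (Ioo a b)) (hupos : ∀ x ∈ Ioo a b, 0 < u x)
    (hSL : ∀ x ∈ Ioo a b,
      -derivWithin (fun y => (a1 y) ^ 2 * derivWithin u (Ioo a b) y) (Ioo a b) x
        - g x * u x = 0)
    (f : ℝ → ℂ) (hf : ContDiff ℝ (⊤ : ℕ∞) f) (hsupp : HasCompactSupport f)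
    (hsub : tsupport f ⊆ Ioo a b) :
    ∫ x in Ioo a b, (a1 x) ^ 2 * ‖deriv f x‖ ^ 2
      ≥ ∫ x in Ioo a b, g x * ‖f x‖ ^ 2 := by
  set s := Ioo a b with hs
  have hso : IsOpen s := isOpen_Ioo
  -- convert the Sturm-Liouville hypothesis
  have hSL' : ∀ x ∈ s, deriv (fun y => a1 y ^ 2 * deriv u y) x = -(g x * u x) := by
    intro x hx
    have h0 := hSL x hx
    have h1 : derivWithin (fun y => a1 y ^ 2 * derivWithin u s y) s x
        = derivWithin (fun y => a1 y ^ 2 * deriv u y) s x := by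
      apply derivWithin_congr
      · intro y hy
        show a1 y ^ 2 * derivWithin u s y = a1 y ^ 2 * deriv u y
        rw [derivWithin_of_isOpen hso hy]
      · rw [derivWithin_of_isOpen hso hx]
    rw [h1, derivWithin_of_isOpen hso hx] at h0
    linarith
  set fr : ℝ → ℝ := fun x => (f x).re with hfrdef
  set fi : ℝ → ℝ := fun x => (f x).im with hfidef
  have hfr : ContDiff ℝ (⊤ : ℕ∞) fr := Complex.reCLM.contDiff.comp hf
  have hfi : ContDiff ℝ (⊤ : ℕ∞) fi := Complex.imCLM.contDiff.comp hf
  have hsupp_r : HasCompactSupport fr := hsupp.comp_left (g := Complex.re) rfl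
  have hsupp_i : HasCompactSupport fi := hsupp.comp_left (g := Complex.im) rfl
  have hss_r : tsupport fr ⊆ tsupport f :=
    closure_mono (fun x hx => by
      simp only [Function.mem_support] at hx ⊢
      exact fun h0 => hx (by show (f x).re = 0; rw [h0]; simp))
  have hss_i : tsupport fi ⊆ tsupport f :=
    closure_mono (fun x hx => by
      simp only [Function.mem_support] at hx ⊢
      exact fun h0 => hx (by show (f x).im = 0; rw [h0]; simp))
  have hdr : ∀ x, deriv fr x = (deriv f x).re := by
    intro x
    exact (Complex.reCLM.hasFDerivAt.comp_hasDerivAt x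
      (hf.differentiable (by simp) x).hasDerivAt).deriv
  have hdi : ∀ x, deriv fi x = (deriv f x).im := by
    intro x
    exact (Complex.imCLM.hasFDerivAt.comp_hasDerivAt x
      (hf.differentiable (by simp) x).hasDerivAt).deriv
  have hn : ∀ z : ℂ, ‖z‖ ^ 2 = z.re ^ 2 + z.im ^ 2 := by
    intro z
    rw [Complex.sq_norm, Complex.normSq_apply]
    ring
  set K := tsupport f with hKdef
  have hK : IsCompact K := hsupp
  have hKs : K ⊆ s := hsub
  have hf0 : ∀ x ∉ K, f x = 0 := fun x hx => image_eq_zero_of_notMem_tsupport hx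
  have hdf0 : ∀ x ∉ K, deriv f x = 0 := by
    intro x hx
    by_contra hne
    exact hx (support_deriv_subset (Function.mem_support.mpr hne))
  -- integrabilities
  obtain ⟨hPri, -⟩ := aux_int hso hK hKs
    (G := fun x => a1 x ^ 2 * deriv fr x ^ 2)
    (((ha1.continuousOn).pow 2).mul (((hfr.continuous_deriv (by simp)).continuousOn).pow 2))
    (fun x hx => by simp [hdr x, hdf0 x hx])
  obtain ⟨hPii, -⟩ := aux_int hso hK hKs
    (G := fun x => a1 x ^ 2 * deriv fi x ^ 2)
    (((ha1.continuousOn).pow 2).mul (((hfi.continuous_deriv (by simp)).continuousOn).pow 2))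
    (fun x hx => by simp [hdi x, hdf0 x hx])
  obtain ⟨hQri, -⟩ := aux_int hso hK hKs
    (G := fun x => g x * fr x ^ 2)
    (hg.mul (((hfr.continuous).continuousOn).pow 2))
    (fun x hx => by simp [hfrdef, hf0 x hx])
  obtain ⟨hQii, -⟩ := aux_int hso hK hKs
    (G := fun x => g x * fi x ^ 2)
    (hg.mul (((hfi.continuous).continuousOn).pow 2))
    (fun x hx => by simp [hfidef, hf0 x hx])
  have hIr := aux_real a b a1 g u ha1 hg hu hupos hSL' fr hfr hsupp_r (hss_r.trans hsub)
  have hIi := aux_real a b a1 g u ha1 hg hu hupos hSL' fi hfi hsupp_i (hss_i.trans hsub)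
  have eP : ∫ x in s, a1 x ^ 2 * ‖deriv f x‖ ^ 2
      = (∫ x in s, a1 x ^ 2 * deriv fr x ^ 2) + ∫ x in s, a1 x ^ 2 * deriv fi x ^ 2 := by
    rw [← integral_add hPri hPii]
    apply setIntegral_congr_fun hso.measurableSet
    intro x _
    simp only [hn (deriv f x), hdr x, hdi x]
    ring
  have eQ : ∫ x in s, g x * ‖f x‖ ^ 2
      = (∫ x in s, g x * fr x ^ 2) + ∫ x in s, g x * fi x ^ 2 := by
    rw [← integral_add hQri hQii]
    apply setIntegral_congr_fun hso.measurableSet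
    intro x _
    simp only [hn (f x), hfrdef, hfidef]
    ring
  rw [ge_iff_le, eP, eQ]
  linarith
end

section
/- Let (a,b) ⊆ ℝ be a nonempty open interval, let a_0 : (a,b) → ℝ be continuously differentiable with a_0(x) ≠ 0 for all x ∈ (a,b), let g : (a,b) → ℝ be continuous, and fix c ∈ (a,b). Define A(x) = ∫_c^x ( a_0(t)² + g(t) ) dt. Then for every complex-valued f ∈ C_0^∞((a,b)) one has ∫_a^b ( A(x)/a_0(x) )² |f'(x)|² dx ≥ ∫_a^b g(x) |f(x)|² dx. -/
open MeasureTheory Set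

set_option maxHeartbeats 1000000 in
theorem stmt_9 (a b : ℝ) (hab : a < b) (a0 g : ℝ → ℝ)
    (ha0 : ContDiffOn ℝ 1 a0 (Ioo a b)) (ha0ne : ∀ x ∈ Ioo a b, a0 x ≠ 0)
    (hg : ContinuousOn g (Ioo a b)) (c : ℝ) (hc : c ∈ Ioo a b)
    (A : ℝ → ℝ) (hA : ∀ x, A x = ∫ t in c..x, ((a0 t) ^ 2 + g t))
    (f : ℝ → ℂ) (hf : ContDiff ℝ (⊤ : ℕ∞) f) (hsupp : HasCompactSupport f)
    (hsub : tsupport f ⊆ Ioo a b) :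
    ∫ x in Ioo a b, (A x / a0 x) ^ 2 * ‖deriv f x‖ ^ 2
      ≥ ∫ x in Ioo a b, g x * ‖f x‖ ^ 2 := by
  classical
  set h : ℝ → ℝ := fun t => a0 t ^ 2 + g t with hh
  have hhcont : ContinuousOn h (Ioo a b) := ((ha0.continuousOn.pow 2).add hg)
  -- compact set containing c and the support
  set K' : Set ℝ := insert c (tsupport f) with hK'def
  have hK' : IsCompact K' := hsupp.insert c
  have hK'sub : K' ⊆ Ioo a b := insert_subset hc hsub
  have hK'ne : K'.Nonempty := ⟨c, mem_insert _ _⟩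
  set m := sInf K' with hm
  set M := sSup K' with hM
  have hmK : m ∈ K' := hK'.sInf_mem hK'ne
  have hMK : M ∈ K' := hK'.sSup_mem hK'ne
  have ham : a < m := (hK'sub hmK).1
  have hMb : M < b := (hK'sub hMK).2
  have hmM : m ≤ M := csInf_le_csSup hK'ne hK'.bddBelow hK'.bddAbove
  set α : ℝ := (a + m) / 2 with hα
  set β : ℝ := (M + b) / 2 with hβ
  have haα : a < α := by simp [hα]; linarith
  have hαm : α < m := by simp [hα]; linarith
  have hMβ : M < β := by simp [hβ]; linarith
  have hβb : β < b := by simp [hβ]; linarith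
  have hαβ : α ≤ β := by linarith
  have hIccsub : Icc α β ⊆ Ioo a b := fun x hx => ⟨lt_of_lt_of_le haα hx.1, lt_of_le_of_lt hx.2 hβb⟩
  have hK'Icc : K' ⊆ Icc α β := fun x hx =>
    ⟨le_trans hαm.le (csInf_le hK'.bddBelow hx), le_trans (le_csSup hK'.bddAbove hx) hMβ.le⟩
  have hcαβ : c ∈ Icc α β := hK'Icc (mem_insert _ _)
  -- derivative of A
  have hAderiv : ∀ x ∈ Ioo a b, HasDerivAt A (h x) x := by
    intro x hx
    have hAeq : A = fun u => ∫ t in c..u, h t := funext hA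
    rw [hAeq]
    have huIcc : uIcc c x ⊆ Ioo a b := by
      intro t ht
      rw [Set.mem_uIcc] at ht
      rcases ht with ⟨h1, h2⟩ | ⟨h1, h2⟩
      · exact ⟨lt_of_lt_of_le hc.1 h1, lt_of_le_of_lt h2 hx.2⟩
      · exact ⟨lt_of_lt_of_le hx.1 h1, lt_of_le_of_lt h2 hc.2⟩
    have hci : IntervalIntegrable h volume c x :=
      (hhcont.mono huIcc).intervalIntegrable
    exact intervalIntegral.integral_hasDerivAt_right hci
      (hhcont.stronglyMeasurableAtFilter isOpen_Ioo x hx)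
      (hhcont.continuousAt (Ioo_mem_nhds hx.1 hx.2))
  -- φ and ψ
  set φ : ℝ → ℝ := fun x => ‖f x‖ ^ 2 with hφdef
  set ψ : ℝ → ℝ := fun x => 2 * ((starRingEnd ℂ) (f x) * deriv f x).re with hψdef
  have hfd : ∀ x, HasDerivAt f (deriv f x) x := fun x =>
    (hf.differentiable (by simp) x).hasDerivAt
  have hφd : ∀ x : ℝ, HasDerivAt φ (ψ x) x := by
    intro x
    have hre : HasDerivAt (fun y => (f y).re) ((deriv f x).re) x :=
      Complex.reCLM.hasFDerivAt.comp_hasDerivAt x (hfd x)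
    have him : HasDerivAt (fun y => (f y).im) ((deriv f x).im) x :=
      Complex.imCLM.hasFDerivAt.comp_hasDerivAt x (hfd x)
    have h1 : HasDerivAt (fun y => (f y).re * (f y).re + (f y).im * (f y).im)
        ((deriv f x).re * (f x).re + (f x).re * (deriv f x).re +
          ((deriv f x).im * (f x).im + (f x).im * (deriv f x).im)) x :=
      (hre.mul hre).add (him.mul him)
    have hfun : φ = fun y => (f y).re * (f y).re + (f y).im * (f y).im := by
      funext y
      simp [hφdef, ← Complex.normSq_eq_norm_sq, Complex.normSq_apply]
    have hval : ψ x = (deriv f x).re * (f x).re + (f x).re * (deriv f x).re +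
        ((deriv f x).im * (f x).im + (f x).im * (deriv f x).im) := by
      simp [hψdef, Complex.mul_re]
      ring
    rw [hfun, hval]
    exact h1
  have hψ_bound : ∀ x : ℝ, |ψ x| ≤ 2 * (‖f x‖ * ‖deriv f x‖) := by
    intro x
    have h1 : |((starRingEnd ℂ) (f x) * deriv f x).re| ≤
        ‖(starRingEnd ℂ) (f x) * deriv f x‖ := Complex.abs_re_le_norm _
    have h2 : ‖(starRingEnd ℂ) (f x) * deriv f x‖ = ‖f x‖ * ‖deriv f x‖ := by
      rw [norm_mul]
      simp
    rw [abs_mul]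
    rw [h2] at h1
    simp only [abs_two]
    nlinarith [h1, abs_nonneg (((starRingEnd ℂ) (f x) * deriv f x).re)]
  -- continuity facts
  have hfc : Continuous f := hf.continuous
  have hdfc : Continuous (deriv f) := hf.continuous_deriv (by simp)
  have hφc : Continuous φ := (hfc.norm.pow 2)
  have hψc : Continuous ψ := by
    apply continuous_const.mul
    exact Complex.continuous_re.comp ((Complex.continuous_conj.comp hfc).mul hdfc)
  have hAc : ContinuousOn A (Icc α β) := fun x hx =>
    (hAderiv x (hIccsub hx)).continuousAt.continuousWithinAt
  have ha0c : ContinuousOn a0 (Icc α β) := ha0.continuousOn.mono hIccsub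
  have hgc : ContinuousOn g (Icc α β) := hg.mono hIccsub
  have hhc : ContinuousOn h (Icc α β) := hhcont.mono hIccsub
  have ha0necc : ∀ x ∈ Icc α β, a0 x ≠ 0 := fun x hx => ha0ne x (hIccsub hx)
  -- the three interval integrability facts
  have hintF : IntervalIntegrable (fun x => (A x / a0 x) ^ 2 * ‖deriv f x‖ ^ 2) volume α β := by
    apply ContinuousOn.intervalIntegrable
    rw [uIcc_of_le hαβ]
    exact ((hAc.div ha0c ha0necc).pow 2).mul ((hdfc.norm.pow 2).continuousOn)
  have hintAψ : IntervalIntegrable (fun x => A x * ψ x) volume α β := by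
    apply ContinuousOn.intervalIntegrable
    rw [uIcc_of_le hαβ]
    exact hAc.mul hψc.continuousOn
  have hinta0φ : IntervalIntegrable (fun x => a0 x ^ 2 * φ x) volume α β := by
    apply ContinuousOn.intervalIntegrable
    rw [uIcc_of_le hαβ]
    exact (ha0c.pow 2).mul hφc.continuousOn
  have hinthφ : IntervalIntegrable (fun x => h x * φ x) volume α β := by
    apply ContinuousOn.intervalIntegrable
    rw [uIcc_of_le hαβ]
    exact hhc.mul hφc.continuousOn
  have hintgφ : IntervalIntegrable (fun x => g x * φ x) volume α β := by
    apply ContinuousOn.intervalIntegrable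
    rw [uIcc_of_le hαβ]
    exact hgc.mul hφc.continuousOn
  -- integration by parts
  have hIBP := intervalIntegral.integral_mul_deriv_eq_deriv_mul
      (u := A) (u' := h) (v := φ) (v' := ψ) (a := α) (b := β)
      (fun x hx => hAderiv x (hIccsub (by rwa [uIcc_of_le hαβ] at hx)))
      (fun x _ => hφd x)
      ((hhc.mono (by rw [uIcc_of_le hαβ])).intervalIntegrable)
      (hψc.intervalIntegrable _ _)
  have hfα : f α = 0 := by
    apply image_eq_zero_of_notMem_tsupport
    intro hmem
    have : m ≤ α := csInf_le hK'.bddBelow (mem_insert_of_mem _ hmem)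
    linarith
  have hfβ : f β = 0 := by
    apply image_eq_zero_of_notMem_tsupport
    intro hmem
    have : β ≤ M := le_csSup hK'.bddAbove (mem_insert_of_mem _ hmem)
    linarith
  have hφα : φ α = 0 := by simp [hφdef, hfα]
  have hφβ : φ β = 0 := by simp [hφdef, hfβ]
  rw [hφα, hφβ] at hIBP
  -- so ∫ h φ = - ∫ A ψ
  have hIBP' : ∫ x in α..β, h x * φ x = - ∫ x in α..β, A x * ψ x := by
    rw [hIBP]; ring
  -- pointwise nonnegativity
  have hpt : ∀ x ∈ Icc α β,
      0 ≤ (A x / a0 x) ^ 2 * ‖deriv f x‖ ^ 2 + A x * ψ x + a0 x ^ 2 * φ x := by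
    intro x hx
    have ha0x : a0 x ≠ 0 := ha0necc x hx
    have hb := hψ_bound x
    have habs := abs_le.mp hb
    have h1 : (0:ℝ) ≤ ‖f x‖ := norm_nonneg _
    have h2 : (0:ℝ) ≤ ‖deriv f x‖ := norm_nonneg _
    have hA_eq : A x = (A x / a0 x) * a0 x := (div_mul_cancel₀ _ ha0x).symm
    set r := A x / a0 x with hr
    set s := ‖f x‖ with hs
    set t := ‖deriv f x‖ with ht
    have hφx : φ x = s ^ 2 := rfl
    rw [hφx, hA_eq]
    rcases le_or_gt 0 (r * a0 x) with hA0 | hA0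
    · nlinarith [sq_nonneg (r * t - a0 x * s), habs.1, mul_nonneg h1 h2]
    · nlinarith [sq_nonneg (r * t + a0 x * s), habs.2, mul_nonneg h1 h2]
  have hint_nonneg : 0 ≤ ∫ x in α..β,
      ((A x / a0 x) ^ 2 * ‖deriv f x‖ ^ 2 + A x * ψ x + a0 x ^ 2 * φ x) :=
    intervalIntegral.integral_nonneg hαβ hpt
  -- split the integral
  have hsplit : ∫ x in α..β,
      ((A x / a0 x) ^ 2 * ‖deriv f x‖ ^ 2 + A x * ψ x + a0 x ^ 2 * φ x)
      = (∫ x in α..β, (A x / a0 x) ^ 2 * ‖deriv f x‖ ^ 2) +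
        (∫ x in α..β, A x * ψ x) + (∫ x in α..β, a0 x ^ 2 * φ x) := by
    rw [intervalIntegral.integral_add (hintF.add hintAψ) hinta0φ,
        intervalIntegral.integral_add hintF hintAψ]
  -- g φ = h φ - a0² φ
  have hgφ : ∫ x in α..β, g x * φ x
      = (∫ x in α..β, h x * φ x) - ∫ x in α..β, a0 x ^ 2 * φ x := by
    rw [← intervalIntegral.integral_sub hinthφ hinta0φ]
    apply intervalIntegral.integral_congr
    intro x _
    simp only [hh]
    ring
  -- key interval inequality
  have hkey : ∫ x in α..β, g x * φ x ≤ ∫ x in α..β, (A x / a0 x) ^ 2 * ‖deriv f x‖ ^ 2 := by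
    rw [hgφ, hIBP']
    rw [hsplit] at hint_nonneg
    linarith
  -- convert set integrals over Ioo to interval integrals
  have hvanish : ∀ x ∈ Ioo a b \ Icc α β, x ∉ tsupport f := by
    intro x hx hmem
    exact hx.2 (hK'Icc (mem_insert_of_mem _ hmem))
  have hconvF : ∫ x in Ioo a b, (A x / a0 x) ^ 2 * ‖deriv f x‖ ^ 2
      = ∫ x in α..β, (A x / a0 x) ^ 2 * ‖deriv f x‖ ^ 2 := by
    rw [intervalIntegral.integral_of_le hαβ, ← integral_Icc_eq_integral_Ioc]
    apply setIntegral_eq_of_subset_of_forall_diff_eq_zero measurableSet_Ioo hIccsub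
    intro x hx
    have hd : deriv f x = 0 := by
      by_contra hne
      exact hvanish x hx (support_deriv_subset (Function.mem_support.mpr hne))
    simp [hd]
  have hconvG : ∫ x in Ioo a b, g x * ‖f x‖ ^ 2 = ∫ x in α..β, g x * φ x := by
    rw [intervalIntegral.integral_of_le hαβ, ← integral_Icc_eq_integral_Ioc]
    apply setIntegral_eq_of_subset_of_forall_diff_eq_zero measurableSet_Ioo hIccsub
    intro x hx
    have hfx : f x = 0 := image_eq_zero_of_notMem_tsupport (hvanish x hx)
    simp [hfx]
  rw [ge_iff_le, hconvF, hconvG]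
  exact hkey
end

section
/- Let 0 < a < b < ∞ and γ ∈ ℝ. Then for every complex-valued f ∈ C_0^∞((a,b)) one has ∫_a^b x^γ |f'(x)|² dx ≥ ( (1−γ)²/4 + π²/(ln(b/a))² ) ∫_a^b x^{γ−2} |f(x)|² dx. -/
open MeasureTheory Set

noncomputable def vv (a k x : ℝ) : ℝ :=
  Real.cos (k * (Real.log x - Real.log a)) / Real.sin (k * (Real.log x - Real.log a))
noncomputable def uu (a γ k x : ℝ) : ℝ := (1 - γ) / 2 + k * vv a k x
noncomputable def psi (a γ k x : ℝ) : ℝ := x ^ (γ - 1) * uu a γ k x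
noncomputable def dpsi (a γ k x : ℝ) : ℝ :=
  x ^ (γ - 2) * ((γ - 1) * uu a γ k x - k ^ 2 * (1 + (vv a k x) ^ 2))
noncomputable def qq (f : ℝ → ℂ) (x : ℝ) : ℝ := (f x).re ^ 2 + (f x).im ^ 2
noncomputable def dqq (f : ℝ → ℂ) (x : ℝ) : ℝ :=
  2 * ((f x).re * (deriv f x).re + (f x).im * (deriv f x).im)
noncomputable def GG (a γ k : ℝ) (f : ℝ → ℂ) (x : ℝ) : ℝ := psi a γ k x * qq f x
noncomputable def DD (a γ k : ℝ) (f : ℝ → ℂ) (x : ℝ) : ℝ :=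
  dpsi a γ k x * qq f x + psi a γ k x * dqq f x

lemma hasDerivAt_theta (a k x : ℝ) (hx : 0 < x) :
    HasDerivAt (fun y => k * (Real.log y - Real.log a)) (k / x) x := by
  simpa [div_eq_mul_inv, mul_comm] using
    ((Real.hasDerivAt_log hx.ne').sub_const (Real.log a)).const_mul k

lemma hasDerivAt_vv (a k x : ℝ) (hx : 0 < x)
    (hs : Real.sin (k * (Real.log x - Real.log a)) ≠ 0) :
    HasDerivAt (vv a k) (-(k / x) * (1 + vv a k x ^ 2)) x := by
  set θ : ℝ → ℝ := fun y => k * (Real.log y - Real.log a) with hθdef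
  have hθ : HasDerivAt θ (k / x) x := hasDerivAt_theta a k x hx
  have hcos : HasDerivAt (fun y => Real.cos (θ y)) (-Real.sin (θ x) * (k / x)) x :=
    (Real.hasDerivAt_cos (θ x)).comp x hθ
  have hsin : HasDerivAt (fun y => Real.sin (θ y)) (Real.cos (θ x) * (k / x)) x :=
    (Real.hasDerivAt_sin (θ x)).comp x hθ
  have h := hcos.div hsin hs
  have hval : (-Real.sin (θ x) * (k / x) * Real.sin (θ x) -
        Real.cos (θ x) * (Real.cos (θ x) * (k / x))) / Real.sin (θ x) ^ 2
      = -(k / x) * (1 + (Real.cos (θ x) / Real.sin (θ x)) ^ 2) := by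
    have hpy : Real.sin (θ x) ^ 2 + Real.cos (θ x) ^ 2 = 1 := Real.sin_sq_add_cos_sq _
    have hs' : Real.sin (θ x) ≠ 0 := hs
    field_simp
    linear_combination
  rw [hval] at h
  exact h

lemma hasDerivAt_qq (f : ℝ → ℂ) (x : ℝ) (hf : DifferentiableAt ℝ f x) :
    HasDerivAt (qq f) (dqq f x) x := by
  have hre : HasDerivAt (fun y => (f y).re) ((deriv f x).re) x :=
    Complex.reCLM.hasFDerivAt.comp_hasDerivAt x hf.hasDerivAt
  have him : HasDerivAt (fun y => (f y).im) ((deriv f x).im) x :=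
    Complex.imCLM.hasFDerivAt.comp_hasDerivAt x hf.hasDerivAt
  have h := ((hre.pow 2).add (him.pow 2))
  have : ((2 : ℕ) : ℝ) * (f x).re ^ (2 - 1) * (deriv f x).re +
      ((2 : ℕ) : ℝ) * (f x).im ^ (2 - 1) * (deriv f x).im = dqq f x := by
    simp [dqq]; ring
  rw [this] at h
  exact h

lemma hasDerivAt_psi (a γ k x : ℝ) (hx : 0 < x)
    (hs : Real.sin (k * (Real.log x - Real.log a)) ≠ 0) :
    HasDerivAt (psi a γ k) (dpsi a γ k x) x := by
  have hrp : HasDerivAt (fun y : ℝ => y ^ (γ - 1)) ((γ - 1) * x ^ (γ - 2)) x := by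
    have := Real.hasDerivAt_rpow_const (x := x) (p := γ - 1) (Or.inl hx.ne')
    simpa [show γ - 1 - 1 = γ - 2 by ring] using this
  have hu : HasDerivAt (uu a γ k) (k * (-(k / x) * (1 + vv a k x ^ 2))) x :=
    ((hasDerivAt_vv a k x hx hs).const_mul k).const_add _
  have h := hrp.mul hu
  have hpow : x ^ (γ - 1) = x ^ (γ - 2) * x := by
    rw [← Real.rpow_add_one hx.ne' (γ - 2)]; ring_nf
  have hval : (γ - 1) * x ^ (γ - 2) * uu a γ k x +
      x ^ (γ - 1) * (k * (-(k / x) * (1 + vv a k x ^ 2))) = dpsi a γ k x := by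
    rw [hpow, dpsi]
    field_simp
    ring
  rw [hval] at h
  exact h

lemma norm_sq_complex (z : ℂ) : ‖z‖ ^ 2 = z.re ^ 2 + z.im ^ 2 := by
  rw [Complex.sq_norm, Complex.normSq_apply]; ring

theorem stmt_11 (a b γ : ℝ) (ha : 0 < a) (hab : a < b) (f : ℝ → ℂ)
    (hf : ContDiff ℝ (⊤ : ℕ∞) f) (hsupp : HasCompactSupport f) (hsub : tsupport f ⊆ Ioo a b) :
    ∫ x in Ioo a b, x ^ γ * ‖deriv f x‖ ^ 2
      ≥ ((1 - γ) ^ 2 / 4 + Real.pi ^ 2 / (Real.log (b / a)) ^ 2)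
        * ∫ x in Ioo a b, x ^ (γ - 2) * ‖f x‖ ^ 2 := by
  have hb : 0 < b := ha.trans hab
  set L := Real.log (b / a) with hLdef
  have hL : 0 < L := Real.log_pos ((one_lt_div ha).mpr hab)
  set k := Real.pi / L with hkdef
  have hk : 0 < k := div_pos Real.pi_pos hL
  have hkL : k * L = Real.pi := by rw [hkdef]; field_simp
  set Λ := (1 - γ) ^ 2 / 4 + Real.pi ^ 2 / L ^ 2 with hΛdef
  have hΛ : Λ = ((1 - γ) / 2) ^ 2 + k ^ 2 := by
    rw [hΛdef, hkdef, div_pow]; ring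
  have hlogdiv : L = Real.log b - Real.log a := by
    rw [hLdef, Real.log_div hb.ne' ha.ne']
  clear_value L k Λ
  -- sine positivity on the interval
  have hsin : ∀ x ∈ Ioo a b, 0 < Real.sin (k * (Real.log x - Real.log a)) := by
    intro x hx
    have h1 : 0 < Real.log x - Real.log a := sub_pos.mpr (Real.log_lt_log ha hx.1)
    have h2 : Real.log x - Real.log a < L := by
      rw [hlogdiv]
      exact sub_lt_sub_right (Real.log_lt_log (ha.trans hx.1) hx.2) _
    refine Real.sin_pos_of_pos_of_lt_pi (mul_pos hk h1) ?_
    calc k * (Real.log x - Real.log a) < k * L := (mul_lt_mul_iff_right₀ hk).mpr h2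
      _ = Real.pi := hkL
  have hfd : Differentiable ℝ f := hf.differentiable (by simp)
  have hfc : Continuous f := hf.continuous
  have hdc : Continuous (deriv f) := hf.continuous_deriv (by simp)
  have hout : ∀ x, x ∉ tsupport f → f x = 0 ∧ deriv f x = 0 := by
    intro x hx
    refine ⟨image_eq_zero_of_notMem_tsupport hx, ?_⟩
    by_contra h
    exact hx (support_deriv_subset (by simpa [Function.mem_support] using h))
  -- global derivative of GG
  have hG : ∀ x, HasDerivAt (GG a γ k f) (DD a γ k f x) x := by
    intro x
    by_cases hx : x ∈ tsupport f
    · have hxab := hsub hx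
      have hx0 : 0 < x := ha.trans hxab.1
      have hs := (hsin x hxab).ne'
      exact (hasDerivAt_psi a γ k x hx0 hs).mul (hasDerivAt_qq f x (hfd x))
    · have hopen : IsOpen (tsupport f)ᶜ := (isClosed_tsupport f).isOpen_compl
      have hmem : (tsupport f)ᶜ ∈ nhds x := hopen.mem_nhds hx
      have hEq : (fun _ => (0 : ℝ)) =ᶠ[nhds x] GG a γ k f := by
        filter_upwards [hmem] with y hy
        simp [GG, qq, (hout y hy).1]
      have h0 : HasDerivAt (GG a γ k f) 0 x :=
        (hasDerivAt_const x (0 : ℝ)).congr_of_eventuallyEq hEq.symm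
      have hDx : DD a γ k f x = 0 := by
        simp [DD, qq, dqq, (hout x hx).1, (hout x hx).2]
      rw [hDx]; exact h0
  -- continuity of DD
  have hDcont : Continuous (DD a γ k f) := by
    rw [continuous_iff_continuousAt]
    intro x
    by_cases hx : x ∈ tsupport f
    · have hxab := hsub hx
      have hx0 : 0 < x := ha.trans hxab.1
      have hs := (hsin x hxab).ne'
      have hθ : ContinuousAt (fun y => k * (Real.log y - Real.log a)) x :=
        continuousAt_const.mul ((Real.continuousAt_log hx0.ne').sub continuousAt_const)
      have hv : ContinuousAt (vv a k) x :=
        (Real.continuous_cos.continuousAt.comp hθ).div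
          (Real.continuous_sin.continuousAt.comp hθ) hs
      have hu : ContinuousAt (uu a γ k) x := continuousAt_const.add (continuousAt_const.mul hv)
      have hrp1 : ContinuousAt (fun y : ℝ => y ^ (γ - 1)) x :=
        Real.continuousAt_rpow_const x _ (Or.inl hx0.ne')
      have hrp2 : ContinuousAt (fun y : ℝ => y ^ (γ - 2)) x :=
        Real.continuousAt_rpow_const x _ (Or.inl hx0.ne')
      have hq : ContinuousAt (qq f) x :=
        (((Complex.continuous_re.comp hfc).pow 2).add
          ((Complex.continuous_im.comp hfc).pow 2)).continuousAt
      have hdq : ContinuousAt (dqq f) x :=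
        (continuous_const.mul
          (((Complex.continuous_re.comp hfc).mul (Complex.continuous_re.comp hdc)).add
            ((Complex.continuous_im.comp hfc).mul (Complex.continuous_im.comp hdc)))).continuousAt
      have hpsi : ContinuousAt (psi a γ k) x := hrp1.mul hu
      have hdpsi : ContinuousAt (dpsi a γ k) x :=
        hrp2.mul ((continuousAt_const.mul hu).sub
          (continuousAt_const.mul (continuousAt_const.add (hv.pow 2))))
      exact (hdpsi.mul hq).add (hpsi.mul hdq)
    · have hopen : IsOpen (tsupport f)ᶜ := (isClosed_tsupport f).isOpen_compl
      have hmem : (tsupport f)ᶜ ∈ nhds x := hopen.mem_nhds hx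
      have hEq : DD a γ k f =ᶠ[nhds x] (fun _ => (0 : ℝ)) := by
        filter_upwards [hmem] with y hy
        simp [DD, qq, dqq, (hout y hy).1, (hout y hy).2]
      exact (continuousAt_congr hEq).mpr continuousAt_const
  -- pointwise key inequality
  have key : ∀ x ∈ Ioo a b,
      DD a γ k f x + Λ * (x ^ (γ - 2) * ‖f x‖ ^ 2) ≤ x ^ γ * ‖deriv f x‖ ^ 2 := by
    intro x hx
    have hx0 : 0 < x := ha.trans hx.1
    have hpos : (0 : ℝ) < x ^ (γ - 2) := Real.rpow_pos_of_pos hx0 _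
    have hxg : x ^ γ = x ^ (γ - 2) * (x * x) := by
      rw [show γ = γ - 2 + 1 + 1 by ring, Real.rpow_add_one hx0.ne',
        Real.rpow_add_one hx0.ne']
      ring_nf
    have hxg1 : x ^ (γ - 1) = x ^ (γ - 2) * x := by
      rw [show γ - 1 = γ - 2 + 1 by ring, Real.rpow_add_one hx0.ne']
    have hid : x ^ γ * ‖deriv f x‖ ^ 2 -
        (DD a γ k f x + Λ * (x ^ (γ - 2) * ‖f x‖ ^ 2)) =
        x ^ (γ - 2) *
          ((x * (deriv f x).re - ((1 - γ) / 2 + k * vv a k x) * (f x).re) ^ 2 +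
           (x * (deriv f x).im - ((1 - γ) / 2 + k * vv a k x) * (f x).im) ^ 2) := by
      simp only [DD, dpsi, psi, uu, qq, dqq, norm_sq_complex, hΛ]
      rw [hxg, hxg1]
      ring
    have hnn : (0:ℝ) ≤ x ^ (γ - 2) *
          ((x * (deriv f x).re - ((1 - γ) / 2 + k * vv a k x) * (f x).re) ^ 2 +
           (x * (deriv f x).im - ((1 - γ) / 2 + k * vv a k x) * (f x).im) ^ 2) :=
      mul_nonneg hpos.le (add_nonneg (sq_nonneg _) (sq_nonneg _))
    linarith [hid, hnn]
  -- integrabilities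
  have hcont_pow : ∀ p : ℝ, ContinuousOn (fun x : ℝ => x ^ p) (Icc a b) := by
    intro p x hx
    exact (Real.continuousAt_rpow_const x p (Or.inl (lt_of_lt_of_le ha hx.1).ne')).continuousWithinAt
  have hI1 : IntegrableOn (fun x => x ^ γ * ‖deriv f x‖ ^ 2) (Ioo a b) :=
    (((hcont_pow γ).mul ((hdc.norm.pow 2).continuousOn)).integrableOn_compact
      isCompact_Icc).mono_set Ioo_subset_Icc_self
  have hI2 : IntegrableOn (fun x => x ^ (γ - 2) * ‖f x‖ ^ 2) (Ioo a b) :=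
    (((hcont_pow (γ - 2)).mul ((hfc.norm.pow 2).continuousOn)).integrableOn_compact
      isCompact_Icc).mono_set Ioo_subset_Icc_self
  have hIDD : IntegrableOn (DD a γ k f) (Ioo a b) :=
    (hDcont.continuousOn.integrableOn_compact isCompact_Icc).mono_set Ioo_subset_Icc_self
  -- integral of DD is zero
  have hDD0 : ∫ x in Ioo a b, DD a γ k f x = 0 := by
    have h1 : ∫ x in a..b, DD a γ k f x = GG a γ k f b - GG a γ k f a :=
      intervalIntegral.integral_eq_sub_of_hasDerivAt (fun x _ => hG x)
        (hDcont.intervalIntegrable a b)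
    have hna : a ∉ tsupport f := fun h => absurd (hsub h).1 (lt_irrefl a)
    have hnb : b ∉ tsupport f := fun h => absurd (hsub h).2 (lt_irrefl b)
    have hga : GG a γ k f a = 0 := by simp [GG, qq, (hout a hna).1]
    have hgb : GG a γ k f b = 0 := by simp [GG, qq, (hout b hnb).1]
    rw [intervalIntegral.integral_of_le hab.le, integral_Ioc_eq_integral_Ioo] at h1
    rw [h1, hga, hgb, sub_zero]
  rw [ge_iff_le]
  have e1 : ∫ x in Ioo a b, (DD a γ k f x + Λ * (x ^ (γ - 2) * ‖f x‖ ^ 2))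
      = Λ * ∫ x in Ioo a b, x ^ (γ - 2) * ‖f x‖ ^ 2 := by
    rw [integral_add hIDD (hI2.const_mul Λ), hDD0, zero_add, integral_const_mul]
  rw [← e1]
  exact setIntegral_mono_on (hIDD.add (hI2.const_mul Λ)) hI1 measurableSet_Ioo key
end

section
/- Let γ ∈ ℝ, N ∈ ℕ, R ∈ (0,∞), and η ≥ e_N · R, where the iterated exponentials are defined by e_1 = 1 and e_{k+1} = exp(e_k), and the iterated logarithms by ln_1(y) = ln(y) and ln_{k+1}(y) = ln(ln_k(y)). Then for every complex-valued f ∈ C_0^∞((0,R)) one has ∫_0^R x^γ |f'(x)|² dx ≥ ((1−γ)²/4) ∫_0^R x^{γ−2} |f(x)|² dx + (1/4) ∫_0^R x^{γ−2} ( Σ_{k=1}^{N} Π_{p=1}^{k} (ln_p(η/x))^{−2} ) |f(x)|² dx. -/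
open MeasureTheory Set

/-- Iterated exponentials: `e_1 = 1`, `e_{k+1} = exp (e_k)`. (`iterExp 0` is unused.) -/
noncomputable def iterExp : ℕ → ℝ
  | 0 => 0
  | 1 => 1
  | (n + 2) => Real.exp (iterExp (n + 1))

/-- Iterated logarithms: `ln_1 y = log y`, `ln_{k+1} y = log (ln_k y)`.
(`iterLog 0 y = y` is unused.) -/
noncomputable def iterLog : ℕ → ℝ → ℝ
  | 0, y => y
  | (k + 1), y => Real.log (iterLog k y)

lemma iterExp_nonneg : ∀ n, 0 ≤ iterExp n
  | 0 => le_refl 0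
  | 1 => zero_le_one
  | (n + 2) => (Real.exp_pos _).le

lemma one_le_iterExp : ∀ n, 1 ≤ n → 1 ≤ iterExp n
  | 1, _ => le_refl 1
  | (n + 2), _ => by
      have h := Real.add_one_le_exp (iterExp (n+1))
      have h2 := iterExp_nonneg (n+1)
      simp only [iterExp]; linarith

lemma log_iterExp : ∀ m, 1 ≤ m → Real.log (iterExp m) = iterExp (m - 1)
  | 1, _ => by simp [iterExp]
  | (m + 2), _ => by simp [iterExp, Real.log_exp]

lemma iterLog_gt {N : ℕ} {y : ℝ} (hy : iterExp N < y) :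
    ∀ p, p ≤ N → iterExp (N - p) < iterLog p y := by
  intro p
  induction p with
  | zero => intro _; simpa [iterLog] using hy
  | succ q ih =>
      intro hq
      have hq' : q ≤ N := Nat.le_of_succ_le hq
      have h1 : iterExp (N - q) < iterLog q y := ih hq'
      have hNq : 1 ≤ N - q := Nat.le_sub_of_add_le (by omega)
      have hpos : (0:ℝ) < iterExp (N - q) := lt_of_lt_of_le one_pos (one_le_iterExp _ hNq)
      have := Real.log_lt_log hpos h1
      rw [log_iterExp _ hNq] at this
      have : iterExp (N - q - 1) < Real.log (iterLog q y) := this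
      simpa [iterLog, Nat.sub_sub] using this

lemma iterLog_pos {N p : ℕ} {y : ℝ} (hy : iterExp N < y) (hp : p ≤ N) :
    0 < iterLog p y := lt_of_le_of_lt (iterExp_nonneg _) (iterLog_gt hy p hp)

lemma hasDerivAt_iterLogComp {η : ℝ} {N : ℕ} {x : ℝ} (hx : 0 < x)
    (hlt : iterExp N < η / x) (hN : 1 ≤ N) :
    ∀ p, 1 ≤ p → p ≤ N → HasDerivAt (fun t => iterLog p (η/t))
      (-(x⁻¹ * ∏ j ∈ Finset.Icc 1 (p-1), (iterLog j (η/x))⁻¹)) x := by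
  have hη0 : 0 < η := by
    have h1 : (1:ℝ) ≤ iterExp N := one_le_iterExp N hN
    have : (0:ℝ) < η / x := lt_of_lt_of_le one_pos (h1.trans hlt.le)
    exact (div_pos_iff.mp this).resolve_right (fun h => absurd hx (not_lt.mpr h.2.le)) |>.1
  intro p hp1
  induction p, hp1 using Nat.le_induction with
  | base =>
      intro _
      have hinner : HasDerivAt (fun t : ℝ => η / t) (-(η / x ^ 2)) x := by
        simpa [div_eq_mul_inv, mul_comm] using (hasDerivAt_inv hx.ne').const_mul η
      have hne : η / x ≠ 0 := (div_pos hη0 hx).ne'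
      have h := (Real.hasDerivAt_log hne).comp x hinner
      have heq : (η / x)⁻¹ * -(η / x ^ 2) = -(x⁻¹ * ∏ j ∈ Finset.Icc 1 (1-1), (iterLog j (η/x))⁻¹) := by
        simp only [show (1:ℕ) - 1 = 0 from rfl, Finset.Icc_self, Finset.Icc_eq_empty_of_lt]
        rw [show Finset.Icc 1 0 = (∅ : Finset ℕ) by simp]
        field_simp
        ring
      have : (fun t => iterLog 1 (η / t)) = fun t => Real.log (η / t) := by
        funext t; simp [iterLog]
      rw [this, ← heq]; exact h
  | succ p hp ih =>
      intro hpN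
      have hpN' : p ≤ N := Nat.le_of_succ_le hpN
      have hprev := ih hpN'
      have hne : iterLog p (η / x) ≠ 0 := (iterLog_pos hlt hpN').ne'
      have h := (Real.hasDerivAt_log hne).comp x hprev
      have hIcc : ∏ j ∈ Finset.Icc 1 (p + 1 - 1), (iterLog j (η/x))⁻¹
          = (∏ j ∈ Finset.Icc 1 (p-1), (iterLog j (η/x))⁻¹) * (iterLog p (η/x))⁻¹ := by
        have h1 : p + 1 - 1 = (p - 1) + 1 := by omega
        have h2 : p - 1 + 1 = p := by omega
        rw [h1, Finset.prod_Icc_succ_top (by omega : 1 ≤ p - 1 + 1), h2]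
      have heq : (iterLog p (η/x))⁻¹ * -(x⁻¹ * ∏ j ∈ Finset.Icc 1 (p-1), (iterLog j (η/x))⁻¹)
          = -(x⁻¹ * ∏ j ∈ Finset.Icc 1 (p+1-1), (iterLog j (η/x))⁻¹) := by
        rw [hIcc]; ring
      have hfun : (fun t => iterLog (p+1) (η / t)) = fun t => Real.log (iterLog p (η / t)) := by
        funext t; simp [iterLog]
      rw [hfun, ← heq]; exact h

lemma hasDerivAt_P {η : ℝ} {N : ℕ} {x : ℝ} (hx : 0 < x)
    (hlt : iterExp N < η / x) (hN : 1 ≤ N) :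
    ∀ p, p ≤ N → HasDerivAt (fun t => ∏ j ∈ Finset.Icc 1 p, (iterLog j (η/t))⁻¹)
      (x⁻¹ * (∏ j ∈ Finset.Icc 1 p, (iterLog j (η/x))⁻¹)
        * ∑ j ∈ Finset.Icc 1 p, ∏ i ∈ Finset.Icc 1 j, (iterLog i (η/x))⁻¹) x := by
  intro p
  induction p with
  | zero =>
      intro _
      simp only [show Finset.Icc 1 0 = (∅ : Finset ℕ) by simp, Finset.prod_empty,
        Finset.sum_empty, mul_zero]
      exact hasDerivAt_const x 1
  | succ p ih =>
      intro hpN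
      have hpN' : p ≤ N := Nat.le_of_succ_le hpN
      have hL := hasDerivAt_iterLogComp hx hlt hN (p+1) (Nat.succ_le_succ (Nat.zero_le p)) hpN
      rw [show p + 1 - 1 = p from rfl] at hL
      have hLne : iterLog (p+1) (η/x) ≠ 0 := (iterLog_pos hlt hpN).ne'
      have hinv := hL.fun_inv hLne
      have hmul := (ih hpN').fun_mul hinv
      have hfun : (fun t => ∏ j ∈ Finset.Icc 1 (p+1), (iterLog j (η/t))⁻¹)
          = fun t => (∏ j ∈ Finset.Icc 1 p, (iterLog j (η/t))⁻¹) * (iterLog (p+1) (η/t))⁻¹ := by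
        funext t
        rw [Finset.prod_Icc_succ_top (Nat.succ_le_succ (Nat.zero_le p))]
      rw [hfun]
      refine hmul.congr_deriv ?_
      rw [Finset.sum_Icc_succ_top (Nat.succ_le_succ (Nat.zero_le p)),
        Finset.prod_Icc_succ_top (Nat.succ_le_succ (Nat.zero_le p))]
      set A := ∏ j ∈ Finset.Icc 1 p, (iterLog j (η/x))⁻¹
      set S := ∑ j ∈ Finset.Icc 1 p, ∏ i ∈ Finset.Icc 1 j, (iterLog i (η/x))⁻¹
      set L := iterLog (p+1) (η/x)
      rw [neg_neg]
      field_simp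

lemma sum_sq_identity (a : ℕ → ℝ) : ∀ n, 2 * ∑ p ∈ Finset.Icc 1 n, a p * ∑ j ∈ Finset.Icc 1 p, a j
    = ∑ p ∈ Finset.Icc 1 n, (a p)^2 + (∑ p ∈ Finset.Icc 1 n, a p)^2 := by
  intro n
  induction n with
  | zero => simp [show Finset.Icc 1 0 = (∅ : Finset ℕ) by simp]
  | succ n ih =>
      rw [Finset.sum_Icc_succ_top (Nat.succ_le_succ (Nat.zero_le n)),
        Finset.sum_Icc_succ_top (Nat.succ_le_succ (Nat.zero_le n)),
        Finset.sum_Icc_succ_top (Nat.succ_le_succ (Nat.zero_le n))]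
      simp only [show Nat.succ 0 = 1 from rfl]
      linear_combination ih

lemma hasDerivAt_G (γ : ℝ) {η : ℝ} {N : ℕ} {x : ℝ} (hx : 0 < x)
    (hlt : iterExp N < η / x) (hN : 1 ≤ N) :
    HasDerivAt (fun t => t ^ (γ-1) *
        (γ - 1 + ∑ p ∈ Finset.Icc 1 N, ∏ j ∈ Finset.Icc 1 p, (iterLog j (η/t))⁻¹) / 2)
      (x ^ (γ-2) * ((γ-1) * (γ - 1 + ∑ p ∈ Finset.Icc 1 N, ∏ j ∈ Finset.Icc 1 p, (iterLog j (η/x))⁻¹)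
        + ∑ p ∈ Finset.Icc 1 N, (∏ j ∈ Finset.Icc 1 p, (iterLog j (η/x))⁻¹)
          * ∑ j ∈ Finset.Icc 1 p, ∏ i ∈ Finset.Icc 1 j, (iterLog i (η/x))⁻¹) / 2) x := by
  have hpow : HasDerivAt (fun t : ℝ => t ^ (γ-1)) ((γ-1) * x ^ (γ-2)) x := by
    have := Real.hasDerivAt_rpow_const (x := x) (p := γ-1) (Or.inl hx.ne')
    convert this using 2
    ring_nf
  have hS : HasDerivAt (fun t => ∑ p ∈ Finset.Icc 1 N, ∏ j ∈ Finset.Icc 1 p, (iterLog j (η/t))⁻¹)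
      (∑ p ∈ Finset.Icc 1 N, x⁻¹ * (∏ j ∈ Finset.Icc 1 p, (iterLog j (η/x))⁻¹)
        * ∑ j ∈ Finset.Icc 1 p, ∏ i ∈ Finset.Icc 1 j, (iterLog i (η/x))⁻¹) x :=
    HasDerivAt.fun_sum (fun p hp => hasDerivAt_P hx hlt hN p (Finset.mem_Icc.mp hp).2)
  have hSc : HasDerivAt (fun t => γ - 1 + ∑ p ∈ Finset.Icc 1 N, ∏ j ∈ Finset.Icc 1 p, (iterLog j (η/t))⁻¹)
      (∑ p ∈ Finset.Icc 1 N, x⁻¹ * (∏ j ∈ Finset.Icc 1 p, (iterLog j (η/x))⁻¹)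
        * ∑ j ∈ Finset.Icc 1 p, ∏ i ∈ Finset.Icc 1 j, (iterLog i (η/x))⁻¹) x :=
    (hS.const_add (γ - 1))
  have hmul := (hpow.fun_mul hSc).div_const 2
  refine hmul.congr_deriv ?_
  have hx1 : x ^ (γ-1) * x⁻¹ = x ^ (γ-2) := by
    rw [show γ - 1 = (γ-2) + 1 by ring, Real.rpow_add hx, Real.rpow_one]
    field_simp
  have hsum : x ^ (γ-1) * ∑ p ∈ Finset.Icc 1 N, x⁻¹ * (∏ j ∈ Finset.Icc 1 p, (iterLog j (η/x))⁻¹)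
          * ∑ j ∈ Finset.Icc 1 p, ∏ i ∈ Finset.Icc 1 j, (iterLog i (η/x))⁻¹
      = x ^ (γ-2) * ∑ p ∈ Finset.Icc 1 N, (∏ j ∈ Finset.Icc 1 p, (iterLog j (η/x))⁻¹)
          * ∑ j ∈ Finset.Icc 1 p, ∏ i ∈ Finset.Icc 1 j, (iterLog i (η/x))⁻¹ := by
    rw [Finset.mul_sum, Finset.mul_sum]
    refine Finset.sum_congr rfl (fun p _ => ?_)
    calc x ^ (γ-1) * (x⁻¹ * (∏ j ∈ Finset.Icc 1 p, (iterLog j (η/x))⁻¹)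
            * ∑ j ∈ Finset.Icc 1 p, ∏ i ∈ Finset.Icc 1 j, (iterLog i (η/x))⁻¹)
        = (x ^ (γ-1) * x⁻¹) * ((∏ j ∈ Finset.Icc 1 p, (iterLog j (η/x))⁻¹)
            * ∑ j ∈ Finset.Icc 1 p, ∏ i ∈ Finset.Icc 1 j, (iterLog i (η/x))⁻¹) := by ring
      _ = _ := by rw [hx1]
  rw [hsum]
  ring

noncomputable def auxS (η : ℝ) (N : ℕ) (t : ℝ) : ℝ :=
  ∑ p ∈ Finset.Icc 1 N, ∏ j ∈ Finset.Icc 1 p, (iterLog j (η/t))⁻¹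

noncomputable def auxT (η : ℝ) (N : ℕ) (t : ℝ) : ℝ :=
  ∑ p ∈ Finset.Icc 1 N, (∏ j ∈ Finset.Icc 1 p, (iterLog j (η/t))⁻¹)
    * ∑ j ∈ Finset.Icc 1 p, ∏ i ∈ Finset.Icc 1 j, (iterLog i (η/t))⁻¹

noncomputable def auxG (γ η : ℝ) (N : ℕ) (t : ℝ) : ℝ :=
  t ^ (γ-1) * (γ - 1 + auxS η N t) / 2

noncomputable def auxGd (γ η : ℝ) (N : ℕ) (t : ℝ) : ℝ :=
  t ^ (γ-2) * ((γ-1) * (γ - 1 + auxS η N t) + auxT η N t) / 2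

noncomputable def auxr (f : ℝ → ℂ) (t : ℝ) : ℝ :=
  2 * ((f t).re * (deriv f t).re + (f t).im * (deriv f t).im)

noncomputable def auxF (γ η : ℝ) (N : ℕ) (f : ℝ → ℂ) (t : ℝ) : ℝ := auxG γ η N t * ‖f t‖^2

noncomputable def auxD (γ η : ℝ) (N : ℕ) (f : ℝ → ℂ) (t : ℝ) : ℝ :=
  auxGd γ η N t * ‖f t‖^2 + auxG γ η N t * auxr f t

lemma hasDerivAt_auxG (γ : ℝ) {η : ℝ} {N : ℕ} {x : ℝ} (hx : 0 < x)
    (hlt : iterExp N < η / x) (hN : 1 ≤ N) :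
    HasDerivAt (auxG γ η N) (auxGd γ η N x) x := by
  have := hasDerivAt_G γ hx hlt hN
  unfold auxG auxGd auxS auxT
  exact this

lemma hasDerivAt_auxS {η : ℝ} {N : ℕ} {x : ℝ} (hx : 0 < x)
    (hlt : iterExp N < η / x) (hN : 1 ≤ N) :
    ∃ v, HasDerivAt (auxS η N) v x := by
  refine ⟨_, HasDerivAt.fun_sum (fun p hp => hasDerivAt_P hx hlt hN p (Finset.mem_Icc.mp hp).2)⟩

lemma hasDerivAt_auxT {η : ℝ} {N : ℕ} {x : ℝ} (hx : 0 < x)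
    (hlt : iterExp N < η / x) (hN : 1 ≤ N) :
    ∃ v, HasDerivAt (auxT η N) v x := by
  have h : ∀ p ∈ Finset.Icc 1 N, HasDerivAt
      (fun t => (∏ j ∈ Finset.Icc 1 p, (iterLog j (η/t))⁻¹)
        * ∑ j ∈ Finset.Icc 1 p, ∏ i ∈ Finset.Icc 1 j, (iterLog i (η/t))⁻¹)
      ((x⁻¹ * (∏ j ∈ Finset.Icc 1 p, (iterLog j (η/x))⁻¹)
          * ∑ j ∈ Finset.Icc 1 p, ∏ i ∈ Finset.Icc 1 j, (iterLog i (η/x))⁻¹)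
        * (∑ j ∈ Finset.Icc 1 p, ∏ i ∈ Finset.Icc 1 j, (iterLog i (η/x))⁻¹)
        + (∏ j ∈ Finset.Icc 1 p, (iterLog j (η/x))⁻¹)
          * (∑ j ∈ Finset.Icc 1 p, x⁻¹ * (∏ i ∈ Finset.Icc 1 j, (iterLog i (η/x))⁻¹)
            * ∑ i ∈ Finset.Icc 1 j, ∏ l ∈ Finset.Icc 1 i, (iterLog l (η/x))⁻¹)) x := by
    intro p hp
    exact (hasDerivAt_P hx hlt hN p (Finset.mem_Icc.mp hp).2).fun_mul
      (HasDerivAt.fun_sum (fun j hj => hasDerivAt_P hx hlt hN j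
        (le_trans (Finset.mem_Icc.mp hj).2 (Finset.mem_Icc.mp hp).2)))
  exact ⟨_, HasDerivAt.fun_sum h⟩

lemma auxQ_eq (η : ℝ) (N : ℕ) (t : ℝ) :
    (∑ k ∈ Finset.Icc 1 N, ∏ p ∈ Finset.Icc 1 k, ((iterLog p (η/t))^2)⁻¹)
      = ∑ k ∈ Finset.Icc 1 N, (∏ p ∈ Finset.Icc 1 k, (iterLog p (η/t))⁻¹)^2 := by
  refine Finset.sum_congr rfl (fun k _ => ?_)
  rw [← Finset.prod_pow]
  exact Finset.prod_congr rfl (fun p _ => (inv_pow _ 2).symm)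

lemma hasDerivAt_auxQ {η : ℝ} {N : ℕ} {x : ℝ} (hx : 0 < x)
    (hlt : iterExp N < η / x) (hN : 1 ≤ N) :
    ∃ v, HasDerivAt (fun t => ∑ k ∈ Finset.Icc 1 N, ∏ p ∈ Finset.Icc 1 k,
      ((iterLog p (η/t))^2)⁻¹) v x := by
  have hfun : (fun t => ∑ k ∈ Finset.Icc 1 N, ∏ p ∈ Finset.Icc 1 k, ((iterLog p (η/t))^2)⁻¹)
      = fun t => ∑ k ∈ Finset.Icc 1 N, (∏ p ∈ Finset.Icc 1 k, (iterLog p (η/t))⁻¹)^2 := by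
    funext t; exact auxQ_eq η N t
  rw [hfun]
  exact ⟨_, HasDerivAt.fun_sum (fun k hk =>
    (hasDerivAt_P hx hlt hN k (Finset.mem_Icc.mp hk).2).fun_pow 2)⟩

lemma key_identity (γ : ℝ) {η : ℝ} {N : ℕ} {x : ℝ} (hx : 0 < x) :
    auxGd γ η N x = x ^ γ * ((γ - 1 + auxS η N x) * x⁻¹ / 2)^2
      + x ^ (γ-2) * ((1-γ)^2/4
        + (1/4) * ∑ k ∈ Finset.Icc 1 N, ∏ p ∈ Finset.Icc 1 k, ((iterLog p (η/x))^2)⁻¹) := by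
  have hX : x ^ (γ-2) = x ^ γ * (x⁻¹ * x⁻¹) := by
    rw [show γ - 2 = γ + (-1) + (-1) by ring, Real.rpow_add hx, Real.rpow_add hx,
      Real.rpow_neg_one]
    ring
  have hid := sum_sq_identity (fun p => ∏ j ∈ Finset.Icc 1 p, (iterLog j (η/x))⁻¹) N
  have hQ := auxQ_eq η N x
  unfold auxGd auxS auxT
  rw [hX, hQ]
  linear_combination (x ^ γ * (x⁻¹ * x⁻¹) / 4) * hid

lemma hasDerivAt_normSq {f : ℝ → ℂ} (hf : Differentiable ℝ f) (t : ℝ) :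
    HasDerivAt (fun s => ‖f s‖^2) (auxr f t) t := by
  have hft : HasDerivAt f (deriv f t) t := (hf t).hasDerivAt
  have hre : HasDerivAt (fun s => (f s).re) ((deriv f t).re) t := by
    exact Complex.reCLM.hasFDerivAt.comp_hasDerivAt t hft
  have him : HasDerivAt (fun s => (f s).im) ((deriv f t).im) t := by
    exact Complex.imCLM.hasFDerivAt.comp_hasDerivAt t hft
  have h := (hre.fun_mul hre).add (him.fun_mul him)
  have hfun : (fun s => ‖f s‖^2) = fun s => (f s).re * (f s).re + (f s).im * (f s).im := by
    funext s
    rw [Complex.sq_norm, Complex.normSq_apply]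
  rw [hfun]
  refine h.congr_deriv ?_
  unfold auxr
  ring

theorem stmt_12 (γ : ℝ) (N : ℕ) (hN : 1 ≤ N) (R : ℝ) (hR : 0 < R) (η : ℝ)
    (hη : iterExp N * R ≤ η) (f : ℝ → ℂ) (hf : ContDiff ℝ (⊤ : ℕ∞) f)
    (hsupp : HasCompactSupport f) (hsub : tsupport f ⊆ Ioo 0 R) :
    ∫ x in Ioo (0 : ℝ) R, x ^ γ * ‖deriv f x‖ ^ 2
      ≥ ((1 - γ) ^ 2 / 4) * (∫ x in Ioo (0 : ℝ) R, x ^ (γ - 2) * ‖f x‖ ^ 2)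
        + (1 / 4) * ∫ x in Ioo (0 : ℝ) R,
            x ^ (γ - 2) *
              (∑ k ∈ Finset.Icc 1 N, ∏ p ∈ Finset.Icc 1 k, ((iterLog p (η / x)) ^ 2)⁻¹)
              * ‖f x‖ ^ 2 := by
  have hfd : Differentiable ℝ f := hf.differentiable (by simp)
  have hfc : Continuous f := hf.continuous
  have hfc' : Continuous (deriv f) := hf.continuous_deriv (by simp)
  set K := tsupport f with hKdef
  have hKc : IsCompact K := hsupp
  have hopenKc : IsOpen Kᶜ := isOpen_compl_iff.mpr (isClosed_tsupport f)
  have hfz : ∀ t, t ∉ K → f t = 0 := fun t ht => image_eq_zero_of_notMem_tsupport ht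
  have hdz : ∀ t, t ∉ K → deriv f t = 0 := by
    intro t ht
    by_contra h
    exact ht (support_deriv_subset (by simpa [Function.mem_support] using h))
  rcases K.eq_empty_or_nonempty with hKe | hKne
  · have hfz0 : ∀ t, f t = 0 := fun t => hfz t (by simp [hKe])
    have hdz0 : ∀ t, deriv f t = 0 := fun t => hdz t (by simp [hKe])
    simp [hfz0, hdz0]
  have h1le : (1:ℝ) ≤ iterExp N := one_le_iterExp N hN
  have hη0 : 0 < η := lt_of_lt_of_le (by nlinarith) hη
  have hlt : ∀ {x : ℝ}, x ∈ Ioo (0:ℝ) R → iterExp N < η / x := by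
    intro x hx
    rw [lt_div_iff₀ hx.1]
    have h2 : iterExp N * x < iterExp N * R := by nlinarith [hx.2]
    linarith [hη]
  have hFd : ∀ t, HasDerivAt (auxF γ η N f) (auxD γ η N f t) t := by
    intro t
    by_cases ht : t ∈ Ioo (0:ℝ) R
    · have := (hasDerivAt_auxG γ ht.1 (hlt ht) hN).mul (hasDerivAt_normSq hfd t)
      unfold auxF auxD
      exact this
    · have htK : t ∉ K := fun h => ht (hsub h)
      have h0 : auxD γ η N f t = 0 := by
        unfold auxD auxr; rw [hfz t htK, hdz t htK]; simp
      rw [h0]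
      have hev : auxF γ η N f =ᶠ[nhds t] fun _ => (0:ℝ) := by
        filter_upwards [hopenKc.mem_nhds htK] with s hs
        unfold auxF; rw [hfz s hs]; simp
      exact (hasDerivAt_const t (0:ℝ)).congr_of_eventuallyEq hev
  have hDz : ∀ t, t ∉ K → auxD γ η N f t = 0 := by
    intro t ht
    unfold auxD auxr; rw [hfz t ht, hdz t ht]; simp
  have hDca : ∀ x ∈ Ioo (0:ℝ) R, ContinuousAt (auxD γ η N f) x := by
    intro x hx
    obtain ⟨v1, hS⟩ := hasDerivAt_auxS hx.1 (hlt hx) hN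
    obtain ⟨v2, hT⟩ := hasDerivAt_auxT hx.1 (hlt hx) hN
    have hrpow2 : ContinuousAt (fun t : ℝ => t ^ (γ-2)) x :=
      Real.continuousAt_rpow_const x (γ-2) (Or.inl hx.1.ne')
    have hGd : ContinuousAt (auxGd γ η N) x := by
      unfold auxGd
      exact (hrpow2.mul ((continuousAt_const.mul
        (continuousAt_const.add hS.continuousAt)).add hT.continuousAt)).div_const 2
    have hG : ContinuousAt (auxG γ η N) x := (hasDerivAt_auxG γ hx.1 (hlt hx) hN).continuousAt
    have hr : Continuous (auxr f) := by
      unfold auxr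
      exact continuous_const.mul (((Complex.continuous_re.comp hfc).mul
        (Complex.continuous_re.comp hfc')).add ((Complex.continuous_im.comp hfc).mul
        (Complex.continuous_im.comp hfc')))
    have hnf : Continuous fun t : ℝ => ‖f t‖^2 := hfc.norm.pow 2
    have := (hGd.mul hnf.continuousAt).add (hG.mul hr.continuousAt)
    unfold auxD
    exact this
  have integrHelper : ∀ h : ℝ → ℝ, (∀ x ∈ Ioo (0:ℝ) R, ContinuousAt h x) →
      (∀ t, t ∉ K → h t = 0) → MeasureTheory.IntegrableOn h (Ioo 0 R) := by
    intro h hca hz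
    have hc : Continuous h := by
      rw [continuous_iff_continuousAt]
      intro x
      by_cases hx : x ∈ Ioo (0:ℝ) R
      · exact hca x hx
      · have hxK : x ∉ K := fun hk => hx (hsub hk)
        have hev : h =ᶠ[nhds x] fun _ => (0:ℝ) := by
          filter_upwards [hopenKc.mem_nhds hxK] with t ht using hz t ht
        exact hev.continuousAt
    have hcs : HasCompactSupport h := HasCompactSupport.intro hKc hz
    exact (hc.integrable_of_hasCompactSupport hcs).integrableOn
  have hInt1 : MeasureTheory.IntegrableOn (fun x => x ^ γ * ‖deriv f x‖^2) (Ioo 0 R) :=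
    integrHelper _ (fun x hx => (Real.continuousAt_rpow_const x γ (Or.inl hx.1.ne')).mul
      ((hfc'.norm.pow 2).continuousAt)) (fun t ht => by rw [hdz t ht]; simp)
  have hInt2 : MeasureTheory.IntegrableOn (fun x => x ^ (γ-2) * ‖f x‖^2) (Ioo 0 R) :=
    integrHelper _ (fun x hx => (Real.continuousAt_rpow_const x (γ-2) (Or.inl hx.1.ne')).mul
      ((hfc.norm.pow 2).continuousAt)) (fun t ht => by rw [hfz t ht]; simp)
  have hInt3 : MeasureTheory.IntegrableOn (fun x => x ^ (γ-2) *
      (∑ k ∈ Finset.Icc 1 N, ∏ p ∈ Finset.Icc 1 k, ((iterLog p (η/x))^2)⁻¹) * ‖f x‖^2)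
      (Ioo 0 R) := by
    refine integrHelper _ (fun x hx => ?_) (fun t ht => by rw [hfz t ht]; simp)
    obtain ⟨v, hQ⟩ := hasDerivAt_auxQ hx.1 (hlt hx) hN
    exact ((Real.continuousAt_rpow_const x (γ-2) (Or.inl hx.1.ne')).mul
      hQ.continuousAt).mul ((hfc.norm.pow 2).continuousAt)
  have hIntD : MeasureTheory.IntegrableOn (auxD γ η N f) (Ioo 0 R) := integrHelper _ hDca hDz
  -- FTC: integral of auxD over Ioo 0 R is zero
  have hcK := hKc.sInf_mem hKne
  have hdK := hKc.sSup_mem hKne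
  have hcIoo : sInf K ∈ Ioo (0:ℝ) R := hsub hcK
  have hdIoo : sSup K ∈ Ioo (0:ℝ) R := hsub hdK
  set c' := sInf K / 2 with hc'def
  set d' := (sSup K + R)/2 with hd'def
  have hc'0 : 0 < c' := by rw [hc'def]; linarith [hcIoo.1]
  have hc'lt : c' < sInf K := by rw [hc'def]; linarith [hcIoo.1]
  have hd'gt : sSup K < d' := by rw [hd'def]; linarith [hdIoo.2]
  have hd'R : d' < R := by rw [hd'def]; linarith [hdIoo.2]
  have hinfsup : sInf K ≤ sSup K := csInf_le_csSup hKne hKc.bddBelow hKc.bddAbove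
  have hc'd' : c' ≤ d' := by linarith
  have hKsub2 : K ⊆ Ioo c' d' := fun y hy =>
    ⟨lt_of_lt_of_le hc'lt (csInf_le hKc.bddBelow hy),
     lt_of_le_of_lt (le_csSup hKc.bddAbove hy) hd'gt⟩
  have hsubIcc : Set.uIcc c' d' ⊆ Ioo (0:ℝ) R := by
    rw [Set.uIcc_of_le hc'd']
    intro y hy
    exact ⟨lt_of_lt_of_le hc'0 hy.1, lt_of_le_of_lt hy.2 hd'R⟩
  have hDcontOn : ContinuousOn (auxD γ η N f) (Set.uIcc c' d') :=
    fun x hx => (hDca x (hsubIcc hx)).continuousWithinAt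
  have hIntD' : IntervalIntegrable (auxD γ η N f) MeasureTheory.volume c' d' :=
    hDcontOn.intervalIntegrable
  have hftc : ∫ t in c'..d', auxD γ η N f t = auxF γ η N f d' - auxF γ η N f c' :=
    intervalIntegral.integral_eq_sub_of_hasDerivAt (fun t _ => hFd t) hIntD'
  have hc'K : c' ∉ K := fun h => lt_irrefl c' (hKsub2 h).1
  have hd'K : d' ∉ K := fun h => lt_irrefl d' (hKsub2 h).2
  have hFc' : auxF γ η N f c' = 0 := by unfold auxF; rw [hfz c' hc'K]; simp
  have hFd' : auxF γ η N f d' = 0 := by unfold auxF; rw [hfz d' hd'K]; simp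
  have hD0 : ∫ x in Ioo (0:ℝ) R, auxD γ η N f x = 0 := by
    have e1 : ∫ x in Ioo (0:ℝ) R, auxD γ η N f x = ∫ x, auxD γ η N f x :=
      MeasureTheory.setIntegral_eq_integral_of_forall_compl_eq_zero
        (fun x hx => hDz x (fun hk => hx (hsub hk)))
    have e2 : ∫ x, auxD γ η N f x = ∫ x in Ioc c' d', auxD γ η N f x :=
      (MeasureTheory.setIntegral_eq_integral_of_forall_compl_eq_zero
        (fun x hx => hDz x (fun hk => hx (Set.Ioo_subset_Ioc_self (hKsub2 hk))))).symm
    rw [e1, e2, ← intervalIntegral.integral_of_le hc'd', hftc, hFc', hFd']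
    norm_num
  -- pointwise inequality
  have hkey : ∀ x ∈ Ioo (0:ℝ) R,
      ((1-γ)^2/4) * (x ^ (γ-2) * ‖f x‖^2) + (1/4) * (x ^ (γ-2) *
        (∑ k ∈ Finset.Icc 1 N, ∏ p ∈ Finset.Icc 1 k, ((iterLog p (η/x))^2)⁻¹) * ‖f x‖^2)
      ≤ x ^ γ * ‖deriv f x‖^2 + auxD γ η N f x := by
    intro x hx
    have hx0 := hx.1
    set g := (γ - 1 + auxS η N x) * x⁻¹ / 2 with hgdef
    have hGx : auxG γ η N x = x ^ γ * g := by
      unfold auxG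
      rw [Real.rpow_sub hx0, Real.rpow_one, hgdef]
      field_simp
    have hid := key_identity γ (η := η) (N := N) hx0
    rw [← hgdef] at hid
    have hkey0 : (0:ℝ) ≤ x ^ γ * (((deriv f x).re + g*(f x).re)^2
        + ((deriv f x).im + g*(f x).im)^2) :=
      mul_nonneg (Real.rpow_nonneg hx0.le γ) (by positivity)
    have hnz : ‖f x‖^2 = (f x).re^2 + (f x).im^2 := by
      rw [Complex.sq_norm, Complex.normSq_apply]; ring
    have hnw : ‖deriv f x‖^2 = (deriv f x).re^2 + (deriv f x).im^2 := by
      rw [Complex.sq_norm, Complex.normSq_apply]; ring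
    unfold auxD auxr
    rw [hid, hGx, hnz, hnw]
    nlinarith [hkey0]
  have hmono := MeasureTheory.setIntegral_mono_on
    ((hInt2.const_mul _).add (hInt3.const_mul _)) (hInt1.add hIntD) measurableSet_Ioo hkey
  simp only [Pi.add_apply] at hmono
  rw [MeasureTheory.integral_add (hInt2.const_mul _) (hInt3.const_mul _),
    MeasureTheory.integral_add hInt1 hIntD, MeasureTheory.integral_const_mul,
    MeasureTheory.integral_const_mul, hD0] at hmono
  rw [ge_iff_le]
  linarith [hmono]
end

section
/- For every complex-valued f ∈ C_0^∞((0,π)) one has ∫_0^π |f'(x)|² dx ≥ (1/4) ∫_0^π |f(x)|² dx + (1/4) ∫_0^π |f(x)|² / sin²(x) dx. -/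
open MeasureTheory Set

lemma key_cover {u : ℝ → ℝ} (hsub : tsupport u ⊆ Ioo 0 Real.pi) (x : ℝ) :
    (x ∈ Ioo 0 Real.pi ∧ Real.sin x ≠ 0) ∨ x ∉ tsupport u := by
  by_cases hx : x ∈ tsupport u
  · left
    have h := hsub hx
    exact ⟨h, ne_of_gt (Real.sin_pos_of_pos_of_lt_pi h.1 h.2)⟩
  · right; exact hx

lemma aux1 (s c U U' : ℝ) (hs : s ≠ 0) (pyth : s ^ 2 + c ^ 2 = 1) :
    (-s * (2 * s) - c * (2 * c)) / (2 * s) ^ 2 * U ^ 2 + c / (2 * s) * (2 * U * U')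
      = -(U ^ 2) / (2 * s ^ 2) + c / s * (U * U') := by
  have h3 : -s * (2 * s) - c * (2 * c) = -2 := by nlinarith
  rw [h3]; field_simp

lemma aux2 (s c U U' : ℝ) (hs : s ≠ 0) (pyth : s ^ 2 + c ^ 2 = 1) :
    (1/4) * U ^ 2 + (1/4) * (U ^ 2 / s ^ 2) + (-(U ^ 2) / (2 * s ^ 2) + c / s * (U * U'))
      ≤ U' ^ 2 := by
  have e : (1/4) * U ^ 2 + (1/4) * (U ^ 2 / s ^ 2) + (-(U ^ 2) / (2 * s ^ 2) + c / s * (U * U'))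
      = U' ^ 2 - (U' - c / (2 * s) * U) ^ 2 := by
    field_simp
    linear_combination (4 * U ^ 2) * pyth
  rw [e]
  nlinarith [sq_nonneg (U' - c / (2 * s) * U)]

lemma real_hardy (u : ℝ → ℝ) (hu : ContDiff ℝ (⊤ : ℕ∞) u) (hsupp : HasCompactSupport u)
    (hsub : tsupport u ⊆ Ioo 0 Real.pi) :
    ∫ x in Ioo (0 : ℝ) Real.pi, (deriv u x) ^ 2
      ≥ (1 / 4) * (∫ x in Ioo (0 : ℝ) Real.pi, (u x) ^ 2)
        + (1 / 4) * ∫ x in Ioo (0 : ℝ) Real.pi, (u x) ^ 2 / (Real.sin x) ^ 2 := by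
  set W : ℝ → ℝ := fun x => Real.cos x / (2 * Real.sin x) * u x ^ 2 with hW
  set D : ℝ → ℝ := fun x => -(u x ^ 2) / (2 * Real.sin x ^ 2)
      + Real.cos x / Real.sin x * (u x * deriv u x) with hD
  have hud : Differentiable ℝ u := hu.differentiable (by simp)
  have hud' : Continuous (deriv u) := hu.continuous_deriv (by simp)
  -- zero facts outside tsupport
  have hzero : ∀ x, x ∉ tsupport u → u x = 0 ∧ deriv u x = 0 := by
    intro x hx
    refine ⟨image_eq_zero_of_notMem_tsupport hx, ?_⟩
    rw [(notMem_tsupport_iff_eventuallyEq.mp hx).deriv_eq]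
    exact deriv_const x 0
  -- D is the derivative of W everywhere
  have hWD : ∀ x, HasDerivAt W (D x) x := by
    intro x
    rcases key_cover hsub x with ⟨hx, hs⟩ | hx
    · have h1 : HasDerivAt (fun y => Real.cos y / (2 * Real.sin y))
          ((-Real.sin x * (2 * Real.sin x) - Real.cos x * (2 * Real.cos x)) / (2 * Real.sin x) ^ 2) x := by
        exact (Real.hasDerivAt_cos x).div ((Real.hasDerivAt_sin x).const_mul 2)
          (by simpa using hs)
      have h2 : HasDerivAt (fun y => u y ^ 2) (2 * u x * deriv u x) x := by
        simpa using ((hud x).hasDerivAt.fun_pow 2)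
      have := h1.mul h2
      refine this.congr_deriv (Eq.symm ?_)
      exact (aux1 (Real.sin x) (Real.cos x) (u x) (deriv u x) hs
        (Real.sin_sq_add_cos_sq x)).symm
    · have hz := hzero x hx
      have hev : W =ᶠ[nhds x] (fun _ => 0) := by
        filter_upwards [notMem_tsupport_iff_eventuallyEq.mp hx] with y hy
        simp [hW, hy]
      have : HasDerivAt W 0 x := (hasDerivAt_const x (0:ℝ)).congr_of_eventuallyEq hev
      convert this using 1
      simp [hD, hz.1, hz.2]
  have hDW : D = deriv W := funext fun x => ((hWD x).deriv).symm
  -- W is C^1 with compact support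
  have hWc1 : ContDiff ℝ 1 W := by
    rw [contDiff_iff_contDiffAt]
    intro x
    rcases key_cover hsub x with ⟨hx, hs⟩ | hx
    · exact ((Real.contDiff_cos.contDiffAt.div
        ((contDiff_const.mul Real.contDiff_sin).contDiffAt) (by simpa using hs)).mul
        ((hu.of_le (by simp)).contDiffAt.pow 2))
    · have hev : (fun _ => (0:ℝ)) =ᶠ[nhds x] W := by
        filter_upwards [notMem_tsupport_iff_eventuallyEq.mp hx] with y hy
        simp [hW, hy]
      exact contDiffAt_const.congr_of_eventuallyEq hev.symm
  have hWsupp : HasCompactSupport W :=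
    hsupp.mono' (by
      intro x hx
      by_contra h
      exact hx (by simp [hW, (hzero x h).1]))
  -- compact supports
  have hsupD : HasCompactSupport D := hsupp.mono' (by
    intro x hx; by_contra h
    exact hx (by simp [hD, (hzero x h).1, (hzero x h).2]))
  have hsupu2 : HasCompactSupport (fun x => u x ^ 2) := hsupp.mono' (by
    intro x hx; by_contra h
    exact hx (by simp [(hzero x h).1]))
  have hsupdu2 : HasCompactSupport (fun x => (deriv u x) ^ 2) := hsupp.mono' (by
    intro x hx; by_contra h
    exact hx (by simp [(hzero x h).2]))
  have hsuph : HasCompactSupport (fun x => u x ^ 2 / Real.sin x ^ 2) := hsupp.mono' (by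
    intro x hx; by_contra h
    exact hx (by simp [(hzero x h).1]))
  -- continuity
  have hDcont : Continuous D := by
    rw [continuous_iff_continuousAt]; intro x
    rcases key_cover hsub x with ⟨hx, hs⟩ | hx
    · refine ContinuousAt.add ?_ ?_
      · exact ContinuousAt.div ((hud.continuous.pow 2).neg.continuousAt)
          ((continuous_const.mul (Real.continuous_sin.pow 2)).continuousAt)
          (by simp [pow_eq_zero_iff, hs])
      · exact ContinuousAt.mul
          (ContinuousAt.div Real.continuous_cos.continuousAt Real.continuous_sin.continuousAt hs)
          ((hud.continuous.mul hud').continuousAt)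
    · have hop : (tsupport u)ᶜ ∈ nhds x := (isClosed_tsupport u).isOpen_compl.mem_nhds hx
      have hev : D =ᶠ[nhds x] fun _ => 0 := by
        filter_upwards [hop] with y hy
        simp [hD, (hzero y hy).1, (hzero y hy).2]
      exact ContinuousAt.congr continuousAt_const hev.symm
  have hhcont : Continuous (fun x => u x ^ 2 / Real.sin x ^ 2) := by
    rw [continuous_iff_continuousAt]; intro x
    rcases key_cover hsub x with ⟨hx, hs⟩ | hx
    · exact ContinuousAt.div ((hud.continuous.pow 2).continuousAt)
        ((Real.continuous_sin.pow 2).continuousAt) (by simp [pow_eq_zero_iff, hs])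
    · have hop : (tsupport u)ᶜ ∈ nhds x := (isClosed_tsupport u).isOpen_compl.mem_nhds hx
      have hev : (fun x => u x ^ 2 / Real.sin x ^ 2) =ᶠ[nhds x] fun _ => 0 := by
        filter_upwards [hop] with y hy
        simp [(hzero y hy).1]
      exact ContinuousAt.congr continuousAt_const hev.symm
  -- integrability
  have hi1 : IntegrableOn (fun x => (deriv u x) ^ 2) (Ioo 0 Real.pi) :=
    ((hud'.pow 2).integrable_of_hasCompactSupport hsupdu2).integrableOn
  have hi2 : IntegrableOn (fun x => u x ^ 2) (Ioo 0 Real.pi) :=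
    ((hud.continuous.pow 2).integrable_of_hasCompactSupport hsupu2).integrableOn
  have hi3 : IntegrableOn (fun x => u x ^ 2 / Real.sin x ^ 2) (Ioo 0 Real.pi) :=
    (hhcont.integrable_of_hasCompactSupport hsuph).integrableOn
  have hi4 : IntegrableOn D (Ioo 0 Real.pi) :=
    (hDcont.integrable_of_hasCompactSupport hsupD).integrableOn
  -- ∫ D = 0
  have hD0 : ∫ x in Ioo (0:ℝ) Real.pi, D x = 0 := by
    have h1 : ∀ x ∉ Ioo (0:ℝ) Real.pi, D x = 0 := by
      intro x hx
      have hxts : x ∉ tsupport u := fun h => hx (hsub h)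
      simp [hD, (hzero x hxts).1, (hzero x hxts).2]
    rw [setIntegral_eq_integral_of_forall_compl_eq_zero h1]
    have h2 : ∀ x ∉ Iic Real.pi, D x = 0 := by
      intro x hx
      refine h1 x ?_
      simp only [mem_Iic, not_le] at hx
      simp only [mem_Ioo, not_and, not_lt]
      intro _; linarith
    rw [← setIntegral_eq_integral_of_forall_compl_eq_zero h2, hDW,
      HasCompactSupport.integral_Iic_deriv_eq hWc1 hWsupp Real.pi]
    have hpi : Real.pi ∉ tsupport u := fun h => by simpa using (hsub h).2
    simp [hW, (hzero _ hpi).1]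
  -- pointwise bound
  have hpt : ∀ x ∈ Ioo (0:ℝ) Real.pi,
      (1/4) * u x ^ 2 + (1/4) * (u x ^ 2 / Real.sin x ^ 2) + D x ≤ (deriv u x) ^ 2 := by
    intro x hx
    have hs := ne_of_gt (Real.sin_pos_of_pos_of_lt_pi hx.1 hx.2)
    simpa [hD] using aux2 (Real.sin x) (Real.cos x) (u x) (deriv u x) hs
      (Real.sin_sq_add_cos_sq x)
  have hmono : ∫ x in Ioo (0:ℝ) Real.pi,
      ((1/4) * u x ^ 2 + (1/4) * (u x ^ 2 / Real.sin x ^ 2) + D x)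
      ≤ ∫ x in Ioo (0:ℝ) Real.pi, (deriv u x) ^ 2 :=
    setIntegral_mono_on (((hi2.const_mul _).add (hi3.const_mul _)).add hi4) hi1
      measurableSet_Ioo hpt
  have hsplit : ∫ x in Ioo (0:ℝ) Real.pi,
      ((1/4) * u x ^ 2 + (1/4) * (u x ^ 2 / Real.sin x ^ 2) + D x)
      = (1/4) * (∫ x in Ioo (0:ℝ) Real.pi, u x ^ 2)
        + (1/4) * (∫ x in Ioo (0:ℝ) Real.pi, u x ^ 2 / Real.sin x ^ 2)
        + ∫ x in Ioo (0:ℝ) Real.pi, D x := by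
    have e1 := integral_add (μ := volume.restrict (Ioo (0:ℝ) Real.pi))
      ((hi2.const_mul (1/4:ℝ)).add (hi3.const_mul (1/4:ℝ))) hi4
    have e2 := integral_add (μ := volume.restrict (Ioo (0:ℝ) Real.pi))
      (hi2.const_mul (1/4:ℝ)) (hi3.const_mul (1/4:ℝ))
    simp only [Pi.add_apply] at e1 e2
    rw [e1, e2, MeasureTheory.integral_const_mul, MeasureTheory.integral_const_mul]
  rw [ge_iff_le]
  linarith [hmono, hsplit, hD0]

lemma aux_int_s13 (u : ℝ → ℝ) (hu : ContDiff ℝ (⊤ : ℕ∞) u) (hsupp : HasCompactSupport u)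
    (hsub : tsupport u ⊆ Ioo 0 Real.pi) :
    IntegrableOn (fun x => (deriv u x) ^ 2) (Ioo 0 Real.pi)
      ∧ IntegrableOn (fun x => u x ^ 2) (Ioo 0 Real.pi)
      ∧ IntegrableOn (fun x => u x ^ 2 / Real.sin x ^ 2) (Ioo 0 Real.pi) := by
  have hud : Differentiable ℝ u := hu.differentiable (by simp)
  have hud' : Continuous (deriv u) := hu.continuous_deriv (by simp)
  have hzero : ∀ x, x ∉ tsupport u → u x = 0 ∧ deriv u x = 0 := by
    intro x hx
    refine ⟨image_eq_zero_of_notMem_tsupport hx, ?_⟩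
    rw [(notMem_tsupport_iff_eventuallyEq.mp hx).deriv_eq]
    exact deriv_const x 0
  have hsupu2 : HasCompactSupport (fun x => u x ^ 2) := hsupp.mono' (by
    intro x hx; by_contra h
    exact hx (by simp [(hzero x h).1]))
  have hsupdu2 : HasCompactSupport (fun x => (deriv u x) ^ 2) := hsupp.mono' (by
    intro x hx; by_contra h
    exact hx (by simp [(hzero x h).2]))
  have hsuph : HasCompactSupport (fun x => u x ^ 2 / Real.sin x ^ 2) := hsupp.mono' (by
    intro x hx; by_contra h
    exact hx (by simp [(hzero x h).1]))
  have hhcont : Continuous (fun x => u x ^ 2 / Real.sin x ^ 2) := by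
    rw [continuous_iff_continuousAt]; intro x
    rcases key_cover hsub x with ⟨hx, hs⟩ | hx
    · exact ContinuousAt.div ((hud.continuous.pow 2).continuousAt)
        ((Real.continuous_sin.pow 2).continuousAt) (by simp [pow_eq_zero_iff, hs])
    · have hop : (tsupport u)ᶜ ∈ nhds x := (isClosed_tsupport u).isOpen_compl.mem_nhds hx
      have hev : (fun x => u x ^ 2 / Real.sin x ^ 2) =ᶠ[nhds x] fun _ => 0 := by
        filter_upwards [hop] with y hy
        simp [(hzero y hy).1]
      exact ContinuousAt.congr continuousAt_const hev.symm
  exact ⟨((hud'.pow 2).integrable_of_hasCompactSupport hsupdu2).integrableOn,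
    ((hud.continuous.pow 2).integrable_of_hasCompactSupport hsupu2).integrableOn,
    (hhcont.integrable_of_hasCompactSupport hsuph).integrableOn⟩

theorem stmt_13 (f : ℝ → ℂ) (hf : ContDiff ℝ (⊤ : ℕ∞) f) (hsupp : HasCompactSupport f)
    (hsub : tsupport f ⊆ Ioo 0 Real.pi) :
    ∫ x in Ioo (0 : ℝ) Real.pi, ‖deriv f x‖ ^ 2
      ≥ (1 / 4) * (∫ x in Ioo (0 : ℝ) Real.pi, ‖f x‖ ^ 2)
        + (1 / 4) * ∫ x in Ioo (0 : ℝ) Real.pi, ‖f x‖ ^ 2 / (Real.sin x) ^ 2 := by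
  set p : ℝ → ℝ := fun x => (f x).re with hp'
  set q : ℝ → ℝ := fun x => (f x).im with hq'
  have hp : ContDiff ℝ (⊤ : ℕ∞) p := Complex.reCLM.contDiff.comp hf
  have hq : ContDiff ℝ (⊤ : ℕ∞) q := Complex.imCLM.contDiff.comp hf
  have hps : HasCompactSupport p := hsupp.mono (by
    intro x hx
    simp only [Function.mem_support] at hx ⊢
    intro h; exact hx (by simp [hp', h]))
  have hqs : HasCompactSupport q := hsupp.mono (by
    intro x hx
    simp only [Function.mem_support] at hx ⊢
    intro h; exact hx (by simp [hq', h]))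
  have hpsub : tsupport p ⊆ Ioo 0 Real.pi :=
    (closure_mono (by
      intro x hx
      simp only [Function.mem_support] at hx ⊢
      intro h; exact hx (by simp [hp', h]))).trans hsub
  have hqsub : tsupport q ⊆ Ioo 0 Real.pi :=
    (closure_mono (by
      intro x hx
      simp only [Function.mem_support] at hx ⊢
      intro h; exact hx (by simp [hq', h]))).trans hsub
  have hdp : ∀ x, deriv p x = (deriv f x).re := by
    intro x
    have h1 : HasDerivAt f (deriv f x) x := ((hf.differentiable (by simp)) x).hasDerivAt
    exact (Complex.reCLM.hasFDerivAt.comp_hasDerivAt x h1).deriv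
  have hdq : ∀ x, deriv q x = (deriv f x).im := by
    intro x
    have h1 : HasDerivAt f (deriv f x) x := ((hf.differentiable (by simp)) x).hasDerivAt
    exact (Complex.imCLM.hasFDerivAt.comp_hasDerivAt x h1).deriv
  have hnorm : ∀ z : ℂ, ‖z‖ ^ 2 = z.re ^ 2 + z.im ^ 2 := by
    intro z
    rw [Complex.sq_norm, Complex.normSq_apply]
    ring
  have e1 : (fun x => ‖deriv f x‖ ^ 2) = fun x => (deriv p x) ^ 2 + (deriv q x) ^ 2 :=
    funext fun x => by rw [hnorm, hdp, hdq]
  have e2 : (fun x => ‖f x‖ ^ 2) = fun x => p x ^ 2 + q x ^ 2 :=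
    funext fun x => by rw [hnorm]
  have e3 : (fun x => ‖f x‖ ^ 2 / Real.sin x ^ 2)
      = fun x => p x ^ 2 / Real.sin x ^ 2 + q x ^ 2 / Real.sin x ^ 2 :=
    funext fun x => by rw [hnorm, add_div]
  obtain ⟨hip1, hip2, hip3⟩ := aux_int_s13 p hp hps hpsub
  obtain ⟨hiq1, hiq2, hiq3⟩ := aux_int_s13 q hq hqs hqsub
  have hr1 := real_hardy p hp hps hpsub
  have hr2 := real_hardy q hq hqs hqsub
  have s1 : ∫ x in Ioo (0:ℝ) Real.pi, ‖deriv f x‖ ^ 2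
      = (∫ x in Ioo (0:ℝ) Real.pi, (deriv p x) ^ 2)
        + ∫ x in Ioo (0:ℝ) Real.pi, (deriv q x) ^ 2 := by
    rw [e1]
    have := integral_add (μ := volume.restrict (Ioo (0:ℝ) Real.pi)) hip1 hiq1
    simpa [Pi.add_apply] using this
  have s2 : ∫ x in Ioo (0:ℝ) Real.pi, ‖f x‖ ^ 2
      = (∫ x in Ioo (0:ℝ) Real.pi, p x ^ 2) + ∫ x in Ioo (0:ℝ) Real.pi, q x ^ 2 := by
    rw [e2]
    have := integral_add (μ := volume.restrict (Ioo (0:ℝ) Real.pi)) hip2 hiq2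
    simpa [Pi.add_apply] using this
  have s3 : ∫ x in Ioo (0:ℝ) Real.pi, ‖f x‖ ^ 2 / Real.sin x ^ 2
      = (∫ x in Ioo (0:ℝ) Real.pi, p x ^ 2 / Real.sin x ^ 2)
        + ∫ x in Ioo (0:ℝ) Real.pi, q x ^ 2 / Real.sin x ^ 2 := by
    rw [e3]
    have := integral_add (μ := volume.restrict (Ioo (0:ℝ) Real.pi)) hip3 hiq3
    simpa [Pi.add_apply] using this
  rw [ge_iff_le, s1, s2, s3]
  rw [ge_iff_le] at hr1 hr2
  linarith
end

section
/- For every α ∈ ℝ and every complex-valued f ∈ C_0^∞((0,π)) one has ∫_0^π |f'(x)|² / sin²(x) dx ≥ ∫_0^π F_α(x) |f(x)|² dx, where F_α(x) = −α · ( 2/sin³(x) + α/sin²(x) − 1/sin(x) − α ). -/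
open MeasureTheory Set

private lemma key_identity_s16 (α s c u v du dv : ℝ) (hs : s ≠ 0) (hpy : c^2 + s^2 = 1) :
    (du^2 + dv^2)/s^2
      - (-α * (2/s^3 + α/s^2 - 1/s - α)) * (u^2 + v^2)
      - ((du/s + α*c/s*u)^2 + (dv/s + α*c/s*v)^2)
    = -(((-(α*s)*s^2 - (α*c)*(2*s*c))/(s^2)^2) * (u^2 + v^2)
        + (α*c/s^2) * (2*u*du + 2*v*dv)) := by
  have h : c^2 = 1 - s^2 := by linarith
  field_simp
  linear_combination (-(2*α*(u^2+v^2)) - s*α^2*(u^2+v^2)) * h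

private lemma norm_sq_eq (z : ℂ) : ‖z‖^2 = z.re^2 + z.im^2 := by
  rw [Complex.sq_norm, Complex.normSq_apply]; ring

private lemma aux_main (α c d : ℝ) (f : ℝ → ℂ) (hf : ContDiff ℝ (⊤ : ℕ∞) f)
    (hc0 : 0 < c) (hcd : c < d) (hdpi : d < Real.pi) (hfc : f c = 0) (hfd : f d = 0) :
    ∫ x in c..d, (-α * (2 / Real.sin x ^ 3 + α / Real.sin x ^ 2 - 1 / Real.sin x - α)) * ‖f x‖ ^ 2
      ≤ ∫ x in c..d, ‖deriv f x‖ ^ 2 / Real.sin x ^ 2 := by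
  have hfdiff : Differentiable ℝ f := hf.differentiable (by simp)
  have hdfc : Continuous (deriv f) := hf.continuous_deriv (by simp)
  have hsin : ∀ x ∈ Icc c d, 0 < Real.sin x := fun x hx =>
    Real.sin_pos_of_pos_of_lt_pi (lt_of_lt_of_le hc0 hx.1) (lt_of_le_of_lt hx.2 hdpi)
  set P : ℝ → ℝ := fun x => (deriv f x).re / Real.sin x + α * Real.cos x / Real.sin x * (f x).re with hP
  set Q : ℝ → ℝ := fun x => (deriv f x).im / Real.sin x + α * Real.cos x / Real.sin x * (f x).im with hQ
  set B : ℝ → ℝ := fun x => -(α * Real.cos x / Real.sin x ^ 2 * ((f x).re ^ 2 + (f x).im ^ 2)) with hB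
  have huIcc : uIcc c d = Icc c d := uIcc_of_le hcd.le
  -- HasDerivAt for B with the target derivative
  have hBderiv : ∀ x ∈ uIcc c d, HasDerivAt B
      (‖deriv f x‖ ^ 2 / Real.sin x ^ 2
        - (-α * (2 / Real.sin x ^ 3 + α / Real.sin x ^ 2 - 1 / Real.sin x - α)) * ‖f x‖ ^ 2
        - (P x ^ 2 + Q x ^ 2)) x := by
    intro x hx
    rw [huIcc] at hx
    have hsne : Real.sin x ≠ 0 := (hsin x hx).ne'
    have hdx : HasDerivAt f (deriv f x) x := (hfdiff x).hasDerivAt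
    have hu : HasDerivAt (fun y => (f y).re) ((deriv f x).re) x := by
      exact (Complex.reCLM.hasFDerivAt.comp_hasDerivAt x hdx)
    have hv : HasDerivAt (fun y => (f y).im) ((deriv f x).im) x := by
      exact (Complex.imCLM.hasFDerivAt.comp_hasDerivAt x hdx)
    have hg := (hu.pow 2).add (hv.pow 2)
    have h1 : HasDerivAt (fun y => α * Real.cos y) (α * -Real.sin x) x :=
      (Real.hasDerivAt_cos x).const_mul α
    have h2 := (Real.hasDerivAt_sin x).pow 2
    have hphi := h1.div h2 (pow_ne_zero 2 hsne)
    have hB0 := (hphi.mul hg).neg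
    convert hB0 using 1
    · rfl
    · rfl
    · rfl
    rw [norm_sq_eq, norm_sq_eq]
    have key := key_identity_s16 α (Real.sin x) (Real.cos x) (f x).re (f x).im
      (deriv f x).re (deriv f x).im hsne (Real.cos_sq_add_sin_sq x)
    simp only [Pi.div_apply, Pi.pow_apply, Pi.add_apply]
    push_cast
    linear_combination key
  -- continuity / integrability
  have hsinne : ∀ x ∈ uIcc c d, Real.sin x ≠ 0 := by
    rw [huIcc]; exact fun x hx => (hsin x hx).ne'
  have hLint : IntervalIntegrable (fun x => ‖deriv f x‖ ^ 2 / Real.sin x ^ 2) volume c d := by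
    apply ContinuousOn.intervalIntegrable
    exact ((hdfc.norm.pow 2).continuousOn.div
      (Real.continuous_sin.pow 2).continuousOn (fun x hx => pow_ne_zero 2 (hsinne x hx)))
  have hRint : IntervalIntegrable
      (fun x => (-α * (2 / Real.sin x ^ 3 + α / Real.sin x ^ 2 - 1 / Real.sin x - α)) * ‖f x‖ ^ 2)
      volume c d := by
    apply ContinuousOn.intervalIntegrable
    apply ContinuousOn.mul
    · apply ContinuousOn.mul continuousOn_const
      apply ContinuousOn.sub
      apply ContinuousOn.sub
      apply ContinuousOn.add
      · exact continuousOn_const.div (Real.continuous_sin.pow 3).continuousOn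
          (fun x hx => pow_ne_zero 3 (hsinne x hx))
      · exact continuousOn_const.div (Real.continuous_sin.pow 2).continuousOn
          (fun x hx => pow_ne_zero 2 (hsinne x hx))
      · exact continuousOn_const.div Real.continuous_sin.continuousOn hsinne
      · exact continuousOn_const
    · exact ((hf.continuous.norm.pow 2).continuousOn)
  have hPQint : IntervalIntegrable (fun x => P x ^ 2 + Q x ^ 2) volume c d := by
    apply ContinuousOn.intervalIntegrable
    have hPc : ContinuousOn P (uIcc c d) := by
      apply ContinuousOn.add
      · exact (Complex.continuous_re.comp hdfc).continuousOn.div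
          Real.continuous_sin.continuousOn hsinne
      · exact (((continuous_const.mul Real.continuous_cos).continuousOn.div
          Real.continuous_sin.continuousOn hsinne).mul
          (Complex.continuous_re.comp hf.continuous).continuousOn)
    have hQc : ContinuousOn Q (uIcc c d) := by
      apply ContinuousOn.add
      · exact (Complex.continuous_im.comp hdfc).continuousOn.div
          Real.continuous_sin.continuousOn hsinne
      · exact (((continuous_const.mul Real.continuous_cos).continuousOn.div
          Real.continuous_sin.continuousOn hsinne).mul
          (Complex.continuous_im.comp hf.continuous).continuousOn)
    exact (hPc.pow 2).add (hQc.pow 2)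
  have hDint : IntervalIntegrable (fun x =>
      ‖deriv f x‖ ^ 2 / Real.sin x ^ 2
        - (-α * (2 / Real.sin x ^ 3 + α / Real.sin x ^ 2 - 1 / Real.sin x - α)) * ‖f x‖ ^ 2
        - (P x ^ 2 + Q x ^ 2)) volume c d := (hLint.sub hRint).sub hPQint
  have hsum := intervalIntegral.integral_eq_sub_of_hasDerivAt hBderiv hDint
  have hBc : B c = 0 := by simp [hB, hfc]
  have hBd : B d = 0 := by simp [hB, hfd]
  rw [hBc, hBd, sub_zero] at hsum
  rw [intervalIntegral.integral_sub (hLint.sub hRint) hPQint,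
      intervalIntegral.integral_sub hLint hRint] at hsum
  have hPQnn : 0 ≤ ∫ x in c..d, P x ^ 2 + Q x ^ 2 :=
    intervalIntegral.integral_nonneg hcd.le (fun x _ => by positivity)
  linarith

theorem stmt_16 (α : ℝ) (f : ℝ → ℂ) (hf : ContDiff ℝ (⊤ : ℕ∞) f) (hsupp : HasCompactSupport f)
    (hsub : tsupport f ⊆ Ioo 0 Real.pi) :
    ∫ x in Ioo (0 : ℝ) Real.pi, ‖deriv f x‖ ^ 2 / (Real.sin x) ^ 2
      ≥ ∫ x in Ioo (0 : ℝ) Real.pi,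
          (-α * (2 / (Real.sin x) ^ 3 + α / (Real.sin x) ^ 2 - 1 / Real.sin x - α))
            * ‖f x‖ ^ 2 := by
  obtain ⟨c, d, hc0, hcd, hdpi, hsub2⟩ :
      ∃ c d : ℝ, 0 < c ∧ c < d ∧ d < Real.pi ∧ tsupport f ⊆ Ioo c d := by
    rcases eq_empty_or_nonempty (tsupport f) with he | hne
    · exact ⟨Real.pi/4, Real.pi/2, by positivity, by linarith [Real.pi_pos],
        by linarith [Real.pi_pos], by simp [he]⟩
    · have hK : IsCompact (tsupport f) := hsupp
      have h1 := hK.sInf_mem hne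
      have h2 := hK.sSup_mem hne
      have hi1 := hsub h1
      have hi2 := hsub h2
      refine ⟨sInf (tsupport f) / 2, (sSup (tsupport f) + Real.pi) / 2,
        by linarith [hi1.1], ?_, by linarith [hi2.2], ?_⟩
      · have : sInf (tsupport f) ≤ sSup (tsupport f) :=
          csInf_le_csSup hne hK.bddBelow hK.bddAbove
        linarith [hi1.1, hi2.2]
      · intro x hx
        have hxl := csInf_le hK.bddBelow hx
        have hxu := le_csSup hK.bddAbove hx
        exact ⟨by linarith [hi1.1], by linarith [hi2.2]⟩
  have hcd' : Ioo c d ⊆ Ioo 0 Real.pi := Ioo_subset_Ioo hc0.le hdpi.le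
  have hf0 : ∀ x ∉ Ioo c d, f x = 0 := fun x hx =>
    image_eq_zero_of_notMem_tsupport (fun h => hx (hsub2 h))
  have hdf0 : ∀ x ∉ Ioo c d, deriv f x = 0 := by
    intro x hx
    by_contra h
    exact hx (hsub2 (support_deriv_subset (by simpa [Function.mem_support] using h)))
  have hconv : ∀ (ψ : ℝ → ℝ), (∀ x ∉ Ioo c d, ψ x = 0) →
      ∫ x in Ioo (0:ℝ) Real.pi, ψ x = ∫ x in c..d, ψ x := by
    intro ψ hψ
    rw [intervalIntegral.integral_of_le hcd.le, integral_Ioc_eq_integral_Ioo,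
      setIntegral_eq_integral_of_forall_compl_eq_zero
        (fun x hx => hψ x (fun h => hx (hcd' h))),
      setIntegral_eq_integral_of_forall_compl_eq_zero hψ]
  rw [ge_iff_le,
    hconv _ (fun x hx => by simp [hf0 x hx]),
    hconv _ (fun x hx => by simp [hdf0 x hx])]
  exact aux_main α c d f hf hc0 hcd hdpi (hf0 c (by simp)) (hf0 d (by simp))
end
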